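/- arXiv:quant-ph/0610021 — 6 statements merged into one kernel-verified Lean document; each statement's English description precedes it below -/
import Mathlib

section
/- A 2×2 block operator matrix A = [[A₁₁, A₁₂],[A₁₂*, A₂₂]] with A₁₁ ≥ 0 and A₂₂ ≥ 0 is positive semidefinite if and only if there exists a contraction Γ (an operator with ‖Γ‖ ≤ 1) such that A₁₂ = A₁₁^(1/2) Γ A₂₂^(1/2). -/
open Matrix
open scoped ComplexOrder InnerProductSpace
set_option linter.unusedSectionVars false
namespace Matrix.PosSemidef
/-- The old Mathlib (Dec 2024) square root of a positive semidefinite matrix, removed since. -/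
noncomputable def sqrt {n : Type*} [Fintype n] [DecidableEq n] {𝕜 : Type*} [RCLike 𝕜]
    {A : Matrix n n 𝕜} (hA : A.PosSemidef) : Matrix n n 𝕜 :=
  hA.1.eigenvectorUnitary.1 * diagonal ((↑) ∘ (√·) ∘ hA.1.eigenvalues) *
    (star hA.1.eigenvectorUnitary : Matrix n n 𝕜)
end Matrix.PosSemidef

section helpers

variable {ι : Type*} [Fintype ι] [DecidableEq ι] {A : Matrix ι ι ℂ}

/-- Apply a real function to a Hermitian matrix through its spectral decomposition. -/
noncomputable def sfun (hA : A.IsHermitian) (f : ℝ → ℝ) : Matrix ι ι ℂ :=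
  hA.eigenvectorUnitary.1 * diagonal ((↑) ∘ f ∘ hA.eigenvalues) *
  (star hA.eigenvectorUnitary : Matrix ι ι ℂ)

lemma sqrt_eq_sfun (hA : A.PosSemidef) : hA.sqrt = sfun hA.1 Real.sqrt := rfl

lemma star_mul_self_unitary (hA : A.IsHermitian) :
    (star hA.eigenvectorUnitary : Matrix ι ι ℂ) * hA.eigenvectorUnitary.1 = 1 :=
  (Matrix.mem_unitaryGroup_iff').mp hA.eigenvectorUnitary.2

lemma mul_star_self_unitary (hA : A.IsHermitian) :
    hA.eigenvectorUnitary.1 * (star hA.eigenvectorUnitary : Matrix ι ι ℂ) = 1 :=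
  (Matrix.mem_unitaryGroup_iff).mp hA.eigenvectorUnitary.2

lemma sfun_mul_sfun (hA : A.IsHermitian) (f g : ℝ → ℝ) :
    sfun hA f * sfun hA g = sfun hA (fun x => f x * g x) := by
  unfold sfun
  rw [mul_assoc, mul_assoc, ← mul_assoc (star _ : Matrix ι ι ℂ), ← mul_assoc (star _ : Matrix ι ι ℂ),
    star_mul_self_unitary, one_mul, ← mul_assoc, ← mul_assoc, mul_assoc _ _ (diagonal _),
    diagonal_mul_diagonal]
  simp [Function.comp_def, ← Complex.ofReal_mul]

lemma sfun_congr (hA : A.IsHermitian) {f g : ℝ → ℝ}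
    (h : ∀ i, f (hA.eigenvalues i) = g (hA.eigenvalues i)) : sfun hA f = sfun hA g := by
  unfold sfun
  have hd : ((↑) ∘ f ∘ hA.eigenvalues : ι → ℂ) = ((↑) ∘ g ∘ hA.eigenvalues) := by
    funext i; simp [Function.comp, h i]
  rw [hd]

lemma sfun_id (hA : A.IsHermitian) : sfun hA (fun x => x) = A := by
  rw [show (fun x : ℝ => x) = id from rfl]
  exact hA.spectral_theorem.symm

lemma sfun_herm (hA : A.IsHermitian) (f : ℝ → ℝ) : (sfun hA f).IsHermitian := by
  unfold sfun
  apply isHermitian_mul_mul_conjTranspose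
  rw [IsHermitian, diagonal_conjTranspose]
  have hd : (star ((↑) ∘ f ∘ hA.eigenvalues) : ι → ℂ) = ((↑) ∘ f ∘ hA.eigenvalues) := by
    funext i; simp [Function.comp, Pi.star_apply, Complex.conj_ofReal]
  rw [hd]

lemma Matrix.PosSemidef.sqrt_mul_self (hA : A.PosSemidef) : hA.sqrt * hA.sqrt = A := by
  rw [sqrt_eq_sfun, sfun_mul_sfun]
  conv_rhs => rw [← sfun_id hA.1]
  exact sfun_congr hA.1 (fun i => Real.mul_self_sqrt (hA.eigenvalues_nonneg i))

lemma Matrix.PosSemidef.posSemidef_sqrt (hA : A.PosSemidef) : hA.sqrt.PosSemidef := by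
  unfold Matrix.PosSemidef.sqrt
  have hd : (diagonal ((↑) ∘ (√·) ∘ hA.1.eigenvalues) : Matrix ι ι ℂ).PosSemidef :=
    posSemidef_diagonal_iff.mpr fun i => by simp [Complex.zero_le_real, Real.sqrt_nonneg]
  exact hd.mul_mul_conjTranspose_same _

noncomputable def eE (x : ι → ℂ) : EuclideanSpace ℂ ι := (WithLp.equiv 2 (ι → ℂ)).symm x

lemma ip_eq (a b : ι → ℂ) : (inner ℂ (eE a) (eE b) : ℂ) = star a ⬝ᵥ b := by
  simp [eE, PiLp.inner_apply, dotProduct, RCLike.inner_apply, mul_comm]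

lemma hmove {κ : Type*} [Fintype κ] (M : Matrix κ ι ℂ) (a : κ → ℂ) (b : ι → ℂ) :
    star a ⬝ᵥ (M *ᵥ b) = star (Mᴴ *ᵥ a) ⬝ᵥ b := by
  rw [star_mulVec, conjTranspose_conjTranspose, ← dotProduct_mulVec]

lemma norm_eq_of_inner {κ₁ κ₂ : Type*} [Fintype κ₁] [Fintype κ₂] (a : EuclideanSpace ℂ κ₁)
    (b : EuclideanSpace ℂ κ₂) (h : (inner ℂ a a : ℂ) = inner ℂ b b) : ‖a‖ = ‖b‖ := by
  have h3 : ‖a‖ ^ 2 = ‖b‖ ^ 2 := by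
    rw [← inner_self_eq_norm_sq (𝕜 := ℂ), ← inner_self_eq_norm_sq (𝕜 := ℂ), h]
  calc ‖a‖ = Real.sqrt (‖a‖ ^ 2) := (Real.sqrt_sq (norm_nonneg a)).symm
    _ = Real.sqrt (‖b‖ ^ 2) := by rw [h3]
    _ = ‖b‖ := Real.sqrt_sq (norm_nonneg b)

lemma cancel_sq {a b : ℝ} (ha : 0 ≤ a) (hb : 0 ≤ b) (h : a ^ 2 ≤ a * b) : a ≤ b := by
  nlinarith

lemma key (hA : A.PosSemidef) (a b : ι → ℂ) :
    star a ⬝ᵥ (A *ᵥ b) = (inner ℂ (eE (hA.sqrt *ᵥ a)) (eE (hA.sqrt *ᵥ b)) : ℂ) := by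
  rw [ip_eq]
  conv_lhs => rw [← hA.sqrt_mul_self]
  rw [← mulVec_mulVec, hmove, hA.posSemidef_sqrt.1]

lemma key_self (hA : A.PosSemidef) (a : ι → ℂ) :
    star a ⬝ᵥ (A *ᵥ a) = ((‖eE (hA.sqrt *ᵥ a)‖ ^ 2 : ℝ) : ℂ) := by
  rw [key hA, inner_self_eq_norm_sq_to_K]
  norm_cast

lemma proj_contract (P : Matrix ι ι ℂ) (hH : Pᴴ = P) (hI : P * P = P) (v : ι → ℂ) :
    ‖eE (P *ᵥ v)‖ ≤ ‖eE v‖ := by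
  have h1 : (inner ℂ (eE (P *ᵥ v)) (eE (P *ᵥ v)) : ℂ) = inner ℂ (eE (P *ᵥ v)) (eE v) := by
    rw [ip_eq, ip_eq, hmove, hH, mulVec_mulVec, hI]
  have h2 : ‖eE (P *ᵥ v)‖ ^ 2 = ‖(inner ℂ (eE (P *ᵥ v)) (eE v) : ℂ)‖ := by
    rw [← h1, inner_self_eq_norm_sq_to_K]
    simp
  refine cancel_sq (norm_nonneg _) (norm_nonneg _) ?_
  rw [h2]
  exact norm_inner_le_norm _ _

lemma eq_zero_of_mulVec {κ : Type*} [Fintype κ] [DecidableEq κ] (M : Matrix ι κ ℂ)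
    (h : ∀ v, M *ᵥ v = 0) : M = 0 := by
  ext i j
  simpa [mulVec_single] using congrFun (h (Pi.single j 1)) i

lemma star_sum_elim {κ : Type*} (x : ι → ℂ) (y : κ → ℂ) :
    star (Sum.elim x y) = Sum.elim (star x) (star y) := by
  funext i; cases i <;> simp

section blocks
variable {κ₁ κ₂ : Type*} [Fintype κ₁] [Fintype κ₂] [DecidableEq κ₁] [DecidableEq κ₂]
variable (M₁₁ : Matrix κ₁ κ₁ ℂ) (M₁₂ : Matrix κ₁ κ₂ ℂ) (M₂₁ : Matrix κ₂ κ₁ ℂ)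
  (M₂₂ : Matrix κ₂ κ₂ ℂ) (x : κ₁ → ℂ) (y : κ₂ → ℂ)

lemma cross_dot :
    star (Sum.elim x 0) ⬝ᵥ ((fromBlocks M₁₁ M₁₂ M₂₁ M₂₂) *ᵥ (Sum.elim (0 : κ₁ → ℂ) y)) =
      star x ⬝ᵥ (M₁₂ *ᵥ y) := by
  rw [star_sum_elim]
  simp [fromBlocks_mulVec, Sum.elim_comp_inl, Sum.elim_comp_inr, sumElim_dotProduct_sumElim]

lemma diag1_dot :
    star (Sum.elim x 0) ⬝ᵥ ((fromBlocks M₁₁ M₁₂ M₂₁ M₂₂) *ᵥ (Sum.elim x (0 : κ₂ → ℂ))) =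
      star x ⬝ᵥ (M₁₁ *ᵥ x) := by
  rw [star_sum_elim]
  simp [fromBlocks_mulVec, Sum.elim_comp_inl, Sum.elim_comp_inr, sumElim_dotProduct_sumElim]

lemma diag2_dot :
    star (Sum.elim 0 y) ⬝ᵥ ((fromBlocks M₁₁ M₁₂ M₂₁ M₂₂) *ᵥ (Sum.elim (0 : κ₁ → ℂ) y)) =
      star y ⬝ᵥ (M₂₂ *ᵥ y) := by
  rw [star_sum_elim]
  simp [fromBlocks_mulVec, Sum.elim_comp_inl, Sum.elim_comp_inr, sumElim_dotProduct_sumElim]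

end blocks

/-- `gfun` gives the pseudoinverse of the square root. -/
noncomputable def gfun : ℝ → ℝ := fun x => (Real.sqrt x)⁻¹
/-- `pfun` gives the orthogonal projection onto the range. -/
noncomputable def pfun : ℝ → ℝ := fun x => Real.sqrt x * (Real.sqrt x)⁻¹

lemma sqrt_mul_g (hA : A.PosSemidef) : hA.sqrt * sfun hA.1 gfun = sfun hA.1 pfun := by
  rw [sqrt_eq_sfun, sfun_mul_sfun]; rfl

lemma g_mul_sqrt (hA : A.PosSemidef) : sfun hA.1 gfun * hA.sqrt = sfun hA.1 pfun := by
  rw [sqrt_eq_sfun, sfun_mul_sfun]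
  exact sfun_congr hA.1 (fun i => mul_comm _ _)

lemma p_mul_g (hA : A.PosSemidef) : sfun hA.1 pfun * sfun hA.1 gfun = sfun hA.1 gfun := by
  rw [sfun_mul_sfun]
  refine sfun_congr hA.1 (fun i => ?_)
  rcases eq_or_ne (Real.sqrt (hA.1.eigenvalues i)) 0 with h | h
  · simp [pfun, gfun, h]
  · simp [pfun, gfun, mul_inv_cancel₀ h]

lemma p_idem (hA : A.PosSemidef) : sfun hA.1 pfun * sfun hA.1 pfun = sfun hA.1 pfun := by
  rw [sfun_mul_sfun]
  refine sfun_congr hA.1 (fun i => ?_)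
  rcases eq_or_ne (Real.sqrt (hA.1.eigenvalues i)) 0 with h | h
  · simp [pfun, h]
  · simp [pfun, mul_inv_cancel₀ h]

lemma p_herm (hA : A.PosSemidef) : (sfun hA.1 pfun)ᴴ = sfun hA.1 pfun := sfun_herm hA.1 pfun

lemma g_herm (hA : A.PosSemidef) : (sfun hA.1 gfun)ᴴ = sfun hA.1 gfun := sfun_herm hA.1 gfun

lemma A_mul_p (hA : A.PosSemidef) : A * sfun hA.1 pfun = A := by
  have h2 : sfun hA.1 (fun x => x) * sfun hA.1 pfun = sfun hA.1 (fun x => x) := by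
    rw [sfun_mul_sfun]
    refine sfun_congr hA.1 (fun i => ?_)
    rcases eq_or_ne (hA.1.eigenvalues i) 0 with h | h
    · simp [h]
    · have hs : Real.sqrt (hA.1.eigenvalues i) ≠ 0 :=
        Real.sqrt_ne_zero'.mpr (lt_of_le_of_ne (hA.eigenvalues_nonneg i) (Ne.symm h))
      simp [pfun, mul_inv_cancel₀ hs]
  calc A * sfun hA.1 pfun = sfun hA.1 (fun x => x) * sfun hA.1 pfun := by rw [sfun_id]
    _ = sfun hA.1 (fun x => x) := h2
    _ = A := sfun_id hA.1

end helpers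


set_option maxHeartbeats 1000000 in
/-- A 2×2 block matrix `[[A₁₁, A₁₂],[A₁₂ᴴ, A₂₂]]` with positive semidefinite diagonal
blocks is positive semidefinite iff `A₁₂ = A₁₁^(1/2) Γ A₂₂^(1/2)` for some contraction `Γ`
(a contraction being an operator `Γ` with `‖Γ‖ ≤ 1`, i.e. `1 - Γᴴ Γ ≥ 0`). -/
theorem stmt_0 {n₁ n₂ : ℕ} (A₁₁ : Matrix (Fin n₁) (Fin n₁) ℂ)
    (A₂₂ : Matrix (Fin n₂) (Fin n₂) ℂ) (A₁₂ : Matrix (Fin n₁) (Fin n₂) ℂ)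
    (h₁₁ : A₁₁.PosSemidef) (h₂₂ : A₂₂.PosSemidef) :
    (Matrix.fromBlocks A₁₁ A₁₂ A₁₂ᴴ A₂₂).PosSemidef ↔
      ∃ Γ : Matrix (Fin n₁) (Fin n₂) ℂ,
        (1 - Γᴴ * Γ).PosSemidef ∧ A₁₂ = h₁₁.sqrt * Γ * h₂₂.sqrt := by
  constructor
  · -- forward direction
    intro hM
    -- kernel inclusions
    have hker1 : ∀ x, A₁₁ *ᵥ x = 0 → A₁₂ᴴ *ᵥ x = 0 := by
      intro x hx
      have hz : ∀ y, star x ⬝ᵥ (A₁₂ *ᵥ y) = 0 := by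
        intro y
        have h1 := key hM (Sum.elim x 0) (Sum.elim 0 y)
        rw [cross_dot] at h1
        have h3 := key_self hM (Sum.elim x 0)
        rw [diag1_dot, hx, dotProduct_zero] at h3
        have h4 : (‖eE (hM.sqrt *ᵥ Sum.elim x 0)‖ ^ 2 : ℝ) = 0 := by exact_mod_cast h3.symm
        have h5 : eE (hM.sqrt *ᵥ Sum.elim x 0) = 0 :=
          norm_eq_zero.mp (pow_eq_zero_iff (n := 2) (by norm_num) |>.mp h4)
        rw [h1, h5, inner_zero_left]
      have h4 := hz (A₁₂ᴴ *ᵥ x)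
      rw [hmove] at h4
      exact dotProduct_star_self_eq_zero.mp h4
    have hker2 : ∀ y, A₂₂ *ᵥ y = 0 → A₁₂ *ᵥ y = 0 := by
      intro y hy
      have h1 := key hM (Sum.elim (A₁₂ *ᵥ y) 0) (Sum.elim 0 y)
      rw [cross_dot] at h1
      have h3 := key_self hM (Sum.elim (0 : Fin n₁ → ℂ) y)
      rw [diag2_dot, hy, dotProduct_zero] at h3
      have h4 : (‖eE (hM.sqrt *ᵥ Sum.elim (0 : Fin n₁ → ℂ) y)‖ ^ 2 : ℝ) = 0 := by
        exact_mod_cast h3.symm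
      have h5 : eE (hM.sqrt *ᵥ Sum.elim (0 : Fin n₁ → ℂ) y) = 0 :=
        norm_eq_zero.mp (pow_eq_zero_iff (n := 2) (by norm_num) |>.mp h4)
      rw [h5, inner_zero_right] at h1
      exact dotProduct_star_self_eq_zero.mp h1
    have hA11P : A₁₁ * sfun h₁₁.1 pfun = A₁₁ := A_mul_p h₁₁
    have hA22P : A₂₂ * sfun h₂₂.1 pfun = A₂₂ := A_mul_p h₂₂
    have hP1A : sfun h₁₁.1 pfun * A₁₂ = A₁₂ := by
      have h0 : A₁₂ᴴ * (1 - sfun h₁₁.1 pfun) = 0 := by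
        apply eq_zero_of_mulVec
        intro v
        rw [← mulVec_mulVec]
        apply hker1
        rw [mulVec_mulVec, mul_sub, mul_one, hA11P, sub_self, zero_mulVec]
      have h0' : A₁₂ᴴ * sfun h₁₁.1 pfun = A₁₂ᴴ := by
        rw [Matrix.mul_sub, Matrix.mul_one, sub_eq_zero] at h0
        exact h0.symm
      calc sfun h₁₁.1 pfun * A₁₂ = (A₁₂ᴴ * sfun h₁₁.1 pfun)ᴴ := by
            rw [conjTranspose_mul, conjTranspose_conjTranspose, p_herm h₁₁]
        _ = A₁₂ := by rw [h0', conjTranspose_conjTranspose]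
    have hAP2 : A₁₂ * sfun h₂₂.1 pfun = A₁₂ := by
      have h0 : A₁₂ * (1 - sfun h₂₂.1 pfun) = 0 := by
        apply eq_zero_of_mulVec
        intro v
        rw [← mulVec_mulVec]
        apply hker2
        rw [mulVec_mulVec, mul_sub, mul_one, hA22P, sub_self, zero_mulVec]
      rw [Matrix.mul_sub, Matrix.mul_one, sub_eq_zero] at h0
      exact h0.symm
    have hPG : sfun h₁₁.1 pfun * (sfun h₁₁.1 gfun * A₁₂ * sfun h₂₂.1 gfun)
        = sfun h₁₁.1 gfun * A₁₂ * sfun h₂₂.1 gfun := by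
      simp only [← Matrix.mul_assoc]
      rw [p_mul_g h₁₁]
    have hcontr : ∀ v, ‖eE ((sfun h₁₁.1 gfun * A₁₂ * sfun h₂₂.1 gfun) *ᵥ v)‖ ≤ ‖eE v‖ := by
      intro v
      set w := (sfun h₁₁.1 gfun * A₁₂ * sfun h₂₂.1 gfun) *ᵥ v with hw
      set y := sfun h₂₂.1 gfun *ᵥ v with hy
      set x := sfun h₁₁.1 gfun *ᵥ w with hx
      have hΓv : w = sfun h₁₁.1 gfun *ᵥ (A₁₂ *ᵥ y) := by
        rw [hw, hy]
        simp [mulVec_mulVec, Matrix.mul_assoc]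
      have hxw : star w ⬝ᵥ w = star x ⬝ᵥ (A₁₂ *ᵥ y) := by
        conv_lhs => rw [hΓv, hmove (sfun h₁₁.1 gfun)]
        rw [g_herm h₁₁, ← hΓv, ← hx]
      have hBx : h₁₁.sqrt *ᵥ x = w := by
        rw [hx, mulVec_mulVec, sqrt_mul_g h₁₁, hw, mulVec_mulVec, hPG]
      have hCy : h₂₂.sqrt *ᵥ y = sfun h₂₂.1 pfun *ᵥ v := by
        rw [hy, mulVec_mulVec, sqrt_mul_g h₂₂]
      have e1 : ‖eE (hM.sqrt *ᵥ Sum.elim x 0)‖ = ‖eE w‖ :=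
        norm_eq_of_inner (eE (hM.sqrt *ᵥ Sum.elim x 0)) (eE w)
          (by rw [← key hM, diag1_dot, key h₁₁, hBx])
      have e2 : ‖eE (hM.sqrt *ᵥ Sum.elim (0 : Fin n₁ → ℂ) y)‖ =
          ‖eE (sfun h₂₂.1 pfun *ᵥ v)‖ :=
        norm_eq_of_inner (eE (hM.sqrt *ᵥ Sum.elim (0 : Fin n₁ → ℂ) y))
          (eE (sfun h₂₂.1 pfun *ᵥ v)) (by rw [← key hM, diag2_dot, key h₂₂, hCy])
      have hsq : ‖eE w‖ ^ 2 ≤ ‖eE w‖ * ‖eE v‖ := by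
        calc ‖eE w‖ ^ 2 = RCLike.re (inner (𝕜 := ℂ) (eE w) (eE w)) :=
              (inner_self_eq_norm_sq _).symm
          _ = RCLike.re (inner (𝕜 := ℂ) (eE (hM.sqrt *ᵥ Sum.elim x 0))
                (eE (hM.sqrt *ᵥ Sum.elim (0 : Fin n₁ → ℂ) y))) := by
              rw [ip_eq, hxw, ← cross_dot A₁₁ A₁₂ A₁₂ᴴ A₂₂, key hM]
          _ ≤ ‖(inner (𝕜 := ℂ) (eE (hM.sqrt *ᵥ Sum.elim x 0))
                (eE (hM.sqrt *ᵥ Sum.elim (0 : Fin n₁ → ℂ) y)) : ℂ)‖ := RCLike.re_le_norm _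
          _ ≤ ‖eE (hM.sqrt *ᵥ Sum.elim x 0)‖ *
                ‖eE (hM.sqrt *ᵥ Sum.elim (0 : Fin n₁ → ℂ) y)‖ := norm_inner_le_norm _ _
          _ = ‖eE w‖ * ‖eE (sfun h₂₂.1 pfun *ᵥ v)‖ := by rw [e1, e2]
          _ ≤ ‖eE w‖ * ‖eE v‖ :=
              mul_le_mul_of_nonneg_left
                (proj_contract _ (p_herm h₂₂) (p_idem h₂₂) v) (norm_nonneg _)
      exact cancel_sq (norm_nonneg _) (norm_nonneg _) hsq
    refine ⟨sfun h₁₁.1 gfun * A₁₂ * sfun h₂₂.1 gfun, .of_dotProduct_mulVec_nonneg ?_ ?_, ?_⟩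
    · -- Hermitian
      exact Matrix.isHermitian_one.sub (Matrix.isHermitian_conjTranspose_mul_self _)
    · -- nonneg quadratic form
      intro v
      have hq : star v ⬝ᵥ ((1 - (sfun h₁₁.1 gfun * A₁₂ * sfun h₂₂.1 gfun)ᴴ *
            (sfun h₁₁.1 gfun * A₁₂ * sfun h₂₂.1 gfun)) *ᵥ v) =
          ((‖eE v‖ ^ 2 - ‖eE ((sfun h₁₁.1 gfun * A₁₂ * sfun h₂₂.1 gfun) *ᵥ v)‖ ^ 2 : ℝ) : ℂ) := by
        rw [sub_mulVec, one_mulVec, dotProduct_sub, ← mulVec_mulVec,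
          hmove ((sfun h₁₁.1 gfun * A₁₂ * sfun h₂₂.1 gfun)ᴴ),
          conjTranspose_conjTranspose, ← ip_eq, ← ip_eq, inner_self_eq_norm_sq_to_K,
          inner_self_eq_norm_sq_to_K]
        norm_cast
      rw [hq, Complex.zero_le_real]
      have := hcontr v
      nlinarith [norm_nonneg (eE ((sfun h₁₁.1 gfun * A₁₂ * sfun h₂₂.1 gfun) *ᵥ v)),
        norm_nonneg (eE v)]
    · -- factorization
      symm
      calc h₁₁.sqrt * (sfun h₁₁.1 gfun * A₁₂ * sfun h₂₂.1 gfun) * h₂₂.sqrt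
          = (h₁₁.sqrt * sfun h₁₁.1 gfun) * A₁₂ * (sfun h₂₂.1 gfun * h₂₂.sqrt) := by
            simp only [Matrix.mul_assoc]
        _ = sfun h₁₁.1 pfun * A₁₂ * sfun h₂₂.1 pfun := by
            rw [sqrt_mul_g h₁₁, g_mul_sqrt h₂₂]
        _ = A₁₂ := by rw [hP1A, hAP2]
  · -- backward direction
    rintro ⟨Γ, hΓ, h⟩
    have hE : (h₂₂.sqrtᴴ * (1 - Γᴴ * Γ) * h₂₂.sqrt).PosSemidef :=
      hΓ.conjTranspose_mul_mul_same h₂₂.sqrt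
    have hB : h₁₁.sqrtᴴ = h₁₁.sqrt := h₁₁.posSemidef_sqrt.1
    have hC : h₂₂.sqrtᴴ = h₂₂.sqrt := h₂₂.posSemidef_sqrt.1
    have hDh : hE.sqrtᴴ = hE.sqrt := hE.posSemidef_sqrt.1
    have hD2 : hE.sqrt * hE.sqrt = h₂₂.sqrt * (1 - Γᴴ * Γ) * h₂₂.sqrt := by
      rw [hE.sqrt_mul_self, hC]
    suffices heq : fromBlocks A₁₁ A₁₂ A₁₂ᴴ A₂₂ =
        (fromBlocks h₁₁.sqrt (Γ * h₂₂.sqrt) (0 : Matrix (Fin n₂) (Fin n₁) ℂ) hE.sqrt)ᴴ *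
        (fromBlocks h₁₁.sqrt (Γ * h₂₂.sqrt) (0 : Matrix (Fin n₂) (Fin n₁) ℂ) hE.sqrt) by
      rw [heq]
      exact posSemidef_conjTranspose_mul_self _
    rw [fromBlocks_conjTranspose, fromBlocks_multiply, fromBlocks_inj]
    refine ⟨?_, ?_, ?_, ?_⟩
    · rw [hB, h₁₁.sqrt_mul_self]
      simp
    · rw [hB, h]
      simp [Matrix.mul_assoc]
    · rw [h]
      simp [conjTranspose_mul, hB, hC, Matrix.mul_assoc]
    · rw [hDh, hD2, conjTranspose_mul, hC]
      conv_lhs => rw [← h₂₂.sqrt_mul_self]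
      simp only [Matrix.mul_sub, Matrix.sub_mul, Matrix.mul_one, Matrix.mul_assoc]
      abel
end

section
/- A row operator T = [T₁ T₂] : H₁ ⊕ H₂ → H is a contraction if and only if T₁ = Γ₁ is a contraction and there exists a contraction Γ₂ such that T₂ = D_{Γ₁*} Γ₂, where D_{Γ₁*} = (I - Γ₁Γ₁*)^(1/2). -/
open Matrix
open scoped ComplexOrder
namespace RowContrAux
variable {n : Type*} [Fintype n] [DecidableEq n]

noncomputable def cj (V : Matrix n n ℂ) (c : n → ℝ) : Matrix n n ℂ :=
  V * Matrix.diagonal (fun i => (c i : ℂ)) * Vᴴ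

lemma cj_mul {V : Matrix n n ℂ} (hV : Vᴴ * V = 1) (a b : n → ℝ) :
    cj V a * cj V b = cj V (fun i => a i * b i) := by
  unfold cj
  simp only [← Matrix.mul_assoc]
  rw [Matrix.mul_assoc (V * _) Vᴴ V, hV, Matrix.mul_one, Matrix.mul_assoc V,
    Matrix.diagonal_mul_diagonal]
  push_cast
  rfl

lemma cj_one {V : Matrix n n ℂ} (hV' : V * Vᴴ = 1) : cj V (fun _ => (1:ℝ)) = 1 := by
  unfold cj
  simp [hV']

lemma cj_zero (V : Matrix n n ℂ) : cj V (fun _ => (0:ℝ)) = 0 := by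
  unfold cj; simp

lemma cj_sub (V : Matrix n n ℂ) (a b : n → ℝ) :
    cj V (fun i => a i - b i) = cj V a - cj V b := by
  unfold cj
  rw [show (fun i => ((a i - b i : ℝ) : ℂ)) = (fun i => (a i : ℂ) - (b i : ℂ)) from
    by ext i; push_cast; rfl, ← Matrix.diagonal_sub, Matrix.mul_sub, Matrix.sub_mul]

lemma cj_herm (V : Matrix n n ℂ) (a : n → ℝ) : (cj V a)ᴴ = cj V a := by
  unfold cj
  rw [Matrix.conjTranspose_mul, Matrix.conjTranspose_mul, Matrix.conjTranspose_conjTranspose,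
    Matrix.diagonal_conjTranspose, Matrix.mul_assoc]
  congr 1
  ext i j
  simp [Matrix.diagonal, Complex.conj_ofReal]

lemma cj_psd (V : Matrix n n ℂ) {a : n → ℝ} (ha : ∀ i, 0 ≤ a i) : (cj V a).PosSemidef := by
  have h : (Matrix.diagonal (fun i => (a i : ℂ))).PosSemidef := by
    rw [Matrix.posSemidef_diagonal_iff]
    intro i
    exact_mod_cast ha i
  exact h.mul_mul_conjTranspose_same V

lemma cj_spectral {B : Matrix n n ℂ} (hB : B.IsHermitian) :
    B = cj (hB.eigenvectorUnitary : Matrix n n ℂ) hB.eigenvalues := by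
  unfold cj
  rw [← Matrix.star_eq_conjTranspose]
  exact hB.spectral_theorem

lemma unit_left {B : Matrix n n ℂ} (hB : B.IsHermitian) :
    ((hB.eigenvectorUnitary : Matrix n n ℂ))ᴴ * (hB.eigenvectorUnitary : Matrix n n ℂ) = 1 := by
  rw [← Matrix.star_eq_conjTranspose]
  exact Matrix.mem_unitaryGroup_iff'.mp hB.eigenvectorUnitary.2

lemma unit_right {B : Matrix n n ℂ} (hB : B.IsHermitian) :
    (hB.eigenvectorUnitary : Matrix n n ℂ) * ((hB.eigenvectorUnitary : Matrix n n ℂ))ᴴ = 1 := by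
  rw [← Matrix.star_eq_conjTranspose]
  exact Matrix.mem_unitaryGroup_iff.mp hB.eigenvectorUnitary.2

lemma diag_nonneg_of_cj_psd {V : Matrix n n ℂ} (hV : Vᴴ * V = 1) (a : n → ℝ)
    (h : (cj V a).PosSemidef) : ∀ i, 0 ≤ a i := by
  have h2 := h.conjTranspose_mul_mul_same V
  have e : Vᴴ * cj V a * V = Matrix.diagonal (fun i => (a i : ℂ)) := by
    unfold cj
    simp only [← Matrix.mul_assoc]
    rw [hV, Matrix.one_mul, Matrix.mul_assoc, hV, Matrix.mul_one]
  rw [e, Matrix.posSemidef_diagonal_iff] at h2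
  intro i
  exact_mod_cast h2 i

lemma psd_le_one {B : Matrix n n ℂ} (hB : B.PosSemidef) (h2 : (B - B * B).PosSemidef) :
    (1 - B).PosSemidef := by
  have hH : B.IsHermitian := hB.1
  set V : Matrix n n ℂ := (hH.eigenvectorUnitary : Matrix n n ℂ) with hVdef
  set μ : n → ℝ := hH.eigenvalues with hμdef
  have hV : Vᴴ * V = 1 := unit_left hH
  have hV' : V * Vᴴ = 1 := unit_right hH
  have hspec : B = cj V μ := cj_spectral hH
  have hsub : B - B * B = cj V (fun i => μ i - μ i * μ i) := by
    rw [cj_sub, ← cj_mul hV, ← hspec]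
  have hnn : ∀ i, 0 ≤ μ i := hB.eigenvalues_nonneg
  have hle : ∀ i, μ i ≤ 1 := by
    intro i
    have := diag_nonneg_of_cj_psd hV _ (hsub ▸ h2) i
    nlinarith [hnn i]
  have e1 : 1 - B = cj V (fun i => 1 - μ i) := by
    rw [cj_sub, cj_one hV', ← hspec]
  rw [e1]
  exact cj_psd V (fun i => by linarith [hle i])

lemma psd_eq_zero {X : Matrix n n ℂ} (h1 : X.PosSemidef) (h2 : (-X).PosSemidef) : X = 0 := by
  have hH : X.IsHermitian := h1.1
  set V : Matrix n n ℂ := (hH.eigenvectorUnitary : Matrix n n ℂ)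
  set μ : n → ℝ := hH.eigenvalues
  have hV : Vᴴ * V = 1 := unit_left hH
  have hspec : X = cj V μ := cj_spectral hH
  have hneg : -X = cj V (fun i => 0 - μ i) := by
    rw [cj_sub, cj_zero, ← hspec, zero_sub]
  have hle : ∀ i, 0 ≤ 0 - μ i := diag_nonneg_of_cj_psd hV _ (hneg ▸ h2)
  have hnn : ∀ i, 0 ≤ μ i := h1.eigenvalues_nonneg
  have : μ = fun _ => 0 := funext fun i => le_antisymm (by linarith [hle i]) (hnn i)
  rw [hspec, this, cj_zero]

lemma swap {m p : Type*} [Fintype m] [Fintype p] [DecidableEq m] [DecidableEq p]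
    (A : Matrix m p ℂ) (h : (1 - Aᴴ * A).PosSemidef) : (1 - A * Aᴴ).PosSemidef := by
  have h1 := h.mul_mul_conjTranspose_same A
  have e : A * (1 - Aᴴ * A) * Aᴴ = A * Aᴴ - (A * Aᴴ) * (A * Aᴴ) := by
    rw [Matrix.mul_sub, Matrix.mul_one, Matrix.sub_mul]
    simp only [Matrix.mul_assoc]
  rw [e] at h1
  exact psd_le_one (Matrix.posSemidef_self_mul_conjTranspose A) h1

end RowContrAux

open RowContrAux in
/-- A row operator T = [T₁ T₂] is a contraction iff T₁ is a contraction and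
T₂ = D_{T₁*} Γ₂ for some contraction Γ₂, where D_{T₁*} is the unique positive
square root of 1 - T₁T₁ᴴ. -/
theorem stmt_4 {k n₁ n₂ : ℕ} (T₁ : Matrix (Fin k) (Fin n₁) ℂ)
    (T₂ : Matrix (Fin k) (Fin n₂) ℂ) :
    (1 - (Matrix.fromCols T₁ T₂)ᴴ * Matrix.fromCols T₁ T₂).PosSemidef ↔
      (1 - T₁ᴴ * T₁).PosSemidef ∧
        ∃ (Γ₂ : Matrix (Fin k) (Fin n₂) ℂ) (D : Matrix (Fin k) (Fin k) ℂ),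
          (1 - Γ₂ᴴ * Γ₂).PosSemidef ∧ D.PosSemidef ∧
          D * D = 1 - T₁ * T₁ᴴ ∧ T₂ = D * Γ₂ := by
  constructor
  · intro h
    set T : Matrix (Fin k) (Fin n₁ ⊕ Fin n₂) ℂ := Matrix.fromCols T₁ T₂ with hT
    set E : Matrix (Fin n₁ ⊕ Fin n₂) (Fin n₁) ℂ :=
      Matrix.fromRows (1 : Matrix (Fin n₁) (Fin n₁) ℂ) (0 : Matrix (Fin n₂) (Fin n₁) ℂ) with hE
    have hTE : T * E = T₁ := by
      rw [hT, hE, Matrix.fromCols_mul_fromRows]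
      simp
    have hEE : Eᴴ * E = 1 := by
      rw [hE, Matrix.conjTranspose_fromRows_eq_fromCols_conjTranspose,
        Matrix.fromCols_mul_fromRows]
      simp
    have h1 : (1 - T₁ᴴ * T₁).PosSemidef := by
      have h2 := h.conjTranspose_mul_mul_same E
      have e : Eᴴ * (1 - Tᴴ * T) * E = 1 - T₁ᴴ * T₁ := by
        rw [Matrix.mul_sub, Matrix.mul_one, Matrix.sub_mul, hEE]
        congr 1
        calc Eᴴ * (Tᴴ * T) * E = (T * E)ᴴ * (T * E) := by
              rw [Matrix.conjTranspose_mul]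
              simp only [Matrix.mul_assoc]
          _ = T₁ᴴ * T₁ := by rw [hTE]
      rwa [e] at h2
    have hsw : (1 - T * Tᴴ).PosSemidef := swap T h
    have hTTc : T * Tᴴ = T₁ * T₁ᴴ + T₂ * T₂ᴴ := by
      rw [hT, Matrix.conjTranspose_fromCols_eq_fromRows_conjTranspose,
        Matrix.fromCols_mul_fromRows]
    set S : Matrix (Fin k) (Fin k) ℂ := 1 - T₁ * T₁ᴴ with hSdef
    have hSle : (S - T₂ * T₂ᴴ).PosSemidef := by
      have e : S - T₂ * T₂ᴴ = 1 - T * Tᴴ := by rw [hTTc, hSdef]; abel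
      rw [e]; exact hsw
    have hS : S.PosSemidef := by
      have e : S = (1 - T * Tᴴ) + T₂ * T₂ᴴ := by rw [hTTc, hSdef]; abel
      rw [e]; exact hsw.add (Matrix.posSemidef_self_mul_conjTranspose T₂)
    have hH : S.IsHermitian := hS.1
    set V : Matrix (Fin k) (Fin k) ℂ := (hH.eigenvectorUnitary : Matrix (Fin k) (Fin k) ℂ) with hVdef
    set μ : Fin k → ℝ := hH.eigenvalues with hμdef
    have hV : Vᴴ * V = 1 := unit_left hH
    have hV' : V * Vᴴ = 1 := unit_right hH
    have hspec : S = cj V μ := cj_spectral hH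
    have hnn : ∀ i, 0 ≤ μ i := hS.eigenvalues_nonneg
    set s : Fin k → ℝ := fun i => Real.sqrt (μ i) with hsdef
    set g : Fin k → ℝ := fun i => if μ i = 0 then 0 else (Real.sqrt (μ i))⁻¹ with hgdef
    set χ : Fin k → ℝ := fun i => if μ i = 0 then 0 else 1 with hχdef
    have hsqrt_ne : ∀ i, μ i ≠ 0 → Real.sqrt (μ i) ≠ 0 := fun i hi =>
      ne_of_gt (Real.sqrt_pos.mpr (lt_of_le_of_ne (hnn i) (Ne.symm hi)))
    have hss : ∀ i, s i * s i = μ i := fun i => Real.mul_self_sqrt (hnn i)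
    have hsg : ∀ i, s i * g i = χ i := by
      intro i
      by_cases hi : μ i = 0
      · simp [hsdef, hgdef, hχdef, hi]
      · simp [hsdef, hgdef, hχdef, hi, mul_inv_cancel₀ (hsqrt_ne i hi)]
    have hgs : ∀ i, g i * s i = χ i := by
      intro i; rw [mul_comm]; exact hsg i
    have hgμg : ∀ i, g i * μ i * g i = χ i := by
      intro i
      by_cases hi : μ i = 0
      · simp [hgdef, hχdef, hi]
      · rw [← hss i]
        simp only [hgdef, hχdef, if_neg hi]
        field_simp [hsqrt_ne i hi]
        rfl
    have hχμ : ∀ i, χ i * μ i = μ i := by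
      intro i
      by_cases hi : μ i = 0 <;> simp [hχdef, hi]
    set D : Matrix (Fin k) (Fin k) ℂ := cj V s with hDdef
    set Dp : Matrix (Fin k) (Fin k) ℂ := cj V g with hDpdef
    set P : Matrix (Fin k) (Fin k) ℂ := cj V χ with hPdef
    have hD : D.PosSemidef := cj_psd V (fun i => Real.sqrt_nonneg _)
    have hDD : D * D = S := by
      rw [hDdef, cj_mul hV, show (fun i => s i * s i) = μ from funext hss, ← hspec]
    have hDP : D * Dp = P := by
      rw [hDdef, hDpdef, hPdef, cj_mul hV, show (fun i => s i * g i) = χ from funext hsg]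
    have hPS : P * S = S := by
      conv_lhs => rw [hPdef, hspec, cj_mul hV, show (fun i => χ i * μ i) = μ from funext hχμ]
      exact hspec.symm
    have hPherm : (1 - P)ᴴ = 1 - P := by
      rw [Matrix.conjTranspose_sub, Matrix.conjTranspose_one, hPdef, cj_herm]
    set N : Matrix (Fin k) (Fin n₂) ℂ := (1 - P) * T₂ with hNdef
    have h0 : (1 - P) * S = 0 := by
      rw [Matrix.sub_mul, Matrix.one_mul, hPS, sub_self]
    have hX : ((1 - P) * (S - T₂ * T₂ᴴ) * (1 - P)).PosSemidef := by
      have := hSle.mul_mul_conjTranspose_same (1 - P)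
      rwa [hPherm] at this
    have hNh : Nᴴ = T₂ᴴ * (1 - P) := by
      rw [hNdef, Matrix.conjTranspose_mul, hPherm]
    have hXeq : (1 - P) * (S - T₂ * T₂ᴴ) * (1 - P) = -(N * Nᴴ) := by
      have e1 : (1 - P) * (S - T₂ * T₂ᴴ) = -(N * T₂ᴴ) := by
        rw [Matrix.mul_sub, h0, zero_sub, hNdef, Matrix.mul_assoc]
      rw [e1, hNh, Matrix.neg_mul, Matrix.mul_assoc]
    have hN0 : N = 0 := by
      have hNN : N * Nᴴ = 0 := by
        have hpos : (N * Nᴴ).PosSemidef := Matrix.posSemidef_self_mul_conjTranspose N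
        have hneg : (-(N * Nᴴ)).PosSemidef := hXeq ▸ hX
        exact psd_eq_zero hpos hneg
      exact Matrix.self_mul_conjTranspose_eq_zero.mp hNN
    have hPT : P * T₂ = T₂ := by
      have e : T₂ - P * T₂ = 0 := by
        rw [← Matrix.one_mul T₂, ← Matrix.mul_assoc, Matrix.mul_one, ← Matrix.sub_mul]
        exact hN0
      rw [sub_eq_zero] at e
      exact e.symm
    set Γ₂ : Matrix (Fin k) (Fin n₂) ℂ := Dp * T₂ with hΓdef
    have hT₂ : T₂ = D * Γ₂ := by
      rw [hΓdef, ← Matrix.mul_assoc, hDP, hPT]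
    have hDpS : Dp * S * Dp = P := by
      rw [hDpdef, hspec, hPdef, cj_mul hV, cj_mul hV,
        show (fun i => g i * μ i * g i) = χ from funext hgμg]
    have hDph : Dpᴴ = Dp := cj_herm V g
    have hG1 : (1 - Γ₂ * Γ₂ᴴ).PosSemidef := by
      have e2 : Dp * (S - T₂ * T₂ᴴ) * Dp = P - Γ₂ * Γ₂ᴴ := by
        rw [Matrix.mul_sub, Matrix.sub_mul, hDpS, hΓdef, Matrix.conjTranspose_mul, hDph]
        simp only [Matrix.mul_assoc]
      have e3 : 1 - Γ₂ * Γ₂ᴴ = (1 - P) + Dp * (S - T₂ * T₂ᴴ) * Dp := by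
        rw [e2]; abel
      rw [e3]
      have hP1 : (1 - P).PosSemidef := by
        have e4 : 1 - P = cj V (fun i => 1 - χ i) := by
          rw [cj_sub, cj_one hV', hPdef]
        rw [e4]
        refine cj_psd V (fun i => ?_)
        by_cases hi : μ i = 0 <;> simp [hχdef, hi]
      refine hP1.add ?_
      have := hSle.mul_mul_conjTranspose_same Dp
      rwa [hDph] at this
    have hG : (1 - Γ₂ᴴ * Γ₂).PosSemidef := by
      have := swap Γ₂ᴴ (by simpa using hG1)
      simpa using this
    exact ⟨h1, Γ₂, D, hG, hD, hDD, hT₂⟩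
  · rintro ⟨h1, Γ₂, D, hΓ, hD, hDD, hT2⟩
    have hG' : (1 - Γ₂ * Γ₂ᴴ).PosSemidef := swap Γ₂ hΓ
    have hDh : Dᴴ = D := hD.1
    set T : Matrix (Fin k) (Fin n₁ ⊕ Fin n₂) ℂ := Matrix.fromCols T₁ T₂ with hT
    have hTTc : T * Tᴴ = T₁ * T₁ᴴ + T₂ * T₂ᴴ := by
      rw [hT, Matrix.conjTranspose_fromCols_eq_fromRows_conjTranspose,
        Matrix.fromCols_mul_fromRows]
    have hT₂T₂ : T₂ * T₂ᴴ = D * (Γ₂ * Γ₂ᴴ) * D := by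
      rw [hT2, Matrix.conjTranspose_mul, hDh]
      simp only [Matrix.mul_assoc]
    have e : 1 - T * Tᴴ = D * (1 - Γ₂ * Γ₂ᴴ) * Dᴴ := by
      rw [hDh, Matrix.mul_sub, Matrix.sub_mul, Matrix.mul_one, hDD, hTTc, hT₂T₂]
      abel
    have hsw : (1 - T * Tᴴ).PosSemidef := by
      rw [e]
      exact hG'.mul_mul_conjTranspose_same D
    have := swap Tᴴ (by simpa using hsw)
    simpa using this
end

section
/- A row operator T = [T₁ T₂ ⋯ Tₙ] : ⊕ᵢ₌₁ⁿ Hᵢ → H is a contraction if and only if there exist contractions Γ₁, ..., Γₙ such that T₁ = Γ₁ and Tₖ = D_{Γ₁*} D_{Γ₂*} ⋯ D_{Γ_{k-1}*} Γₖ for 2 ≤ k ≤ n. -/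
open Matrix
open scoped ComplexOrder

namespace RowContr

noncomputable def vnorm {ι : Type*} [Fintype ι] (x : ι → ℂ) : ℝ :=
  ‖(WithLp.equiv 2 (ι → ℂ)).symm x‖

lemma vnorm_nonneg {ι : Type*} [Fintype ι] (x : ι → ℂ) : 0 ≤ vnorm x := norm_nonneg _

lemma dot_self_eq {ι : Type*} [Fintype ι] (x : ι → ℂ) :
    star x ⬝ᵥ x = ((vnorm x : ℂ)) ^ 2 := by
  rw [dotProduct_comm, ← EuclideanSpace.inner_toLp_toLp, inner_self_eq_norm_sq_to_K]
  rfl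

lemma dot_abs_le {ι : Type*} [Fintype ι] (x y : ι → ℂ) :
    ‖star x ⬝ᵥ y‖ ≤ vnorm x * vnorm y := by
  rw [dotProduct_comm, ← EuclideanSpace.inner_toLp_toLp]
  exact norm_inner_le_norm _ _

lemma quad {a b : Type*} [Fintype a] [Fintype b] [DecidableEq b] (A : Matrix a b ℂ) (x : b → ℂ) :
    star x ⬝ᵥ (1 - Aᴴ * A) *ᵥ x = ((vnorm x : ℂ)) ^ 2 - ((vnorm (A *ᵥ x) : ℂ)) ^ 2 := by
  rw [sub_mulVec, dotProduct_sub, one_mulVec, dot_self_eq]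
  congr 1
  rw [← mulVec_mulVec, dotProduct_mulVec, ← dot_self_eq, star_mulVec]

lemma contraction_iff {a b : Type*} [Fintype a] [Fintype b] [DecidableEq a] [DecidableEq b]
    {A : Matrix a b ℂ} :
    (1 - Aᴴ * A).PosSemidef ↔ ∀ x, vnorm (A *ᵥ x) ≤ vnorm x := by
  constructor
  · intro h x
    have h2 := h.dotProduct_mulVec_nonneg x
    rw [quad] at h2
    have h3 : ((vnorm x ^ 2 - vnorm (A *ᵥ x) ^ 2 : ℝ) : ℂ) =
        ((vnorm x : ℂ)) ^ 2 - ((vnorm (A *ᵥ x) : ℂ)) ^ 2 := by push_cast; ring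
    rw [← h3, Complex.zero_le_real] at h2
    nlinarith [vnorm_nonneg x, vnorm_nonneg (A *ᵥ x)]
  · intro h
    refine PosSemidef.of_dotProduct_mulVec_nonneg ((isHermitian_one).sub (isHermitian_conjTranspose_mul_self A)) fun x => ?_
    rw [quad]
    have h2 : (0:ℝ) ≤ vnorm x ^ 2 - vnorm (A *ᵥ x) ^ 2 := by
      nlinarith [vnorm_nonneg x, vnorm_nonneg (A *ᵥ x), h x]
    have h3 : ((vnorm x ^ 2 - vnorm (A *ᵥ x) ^ 2 : ℝ) : ℂ) =
        ((vnorm x : ℂ)) ^ 2 - ((vnorm (A *ᵥ x) : ℂ)) ^ 2 := by push_cast; ring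
    rw [← h3, Complex.zero_le_real]
    exact h2

lemma flip_psd {a b : Type*} [Fintype a] [Fintype b] [DecidableEq a] [DecidableEq b]
    {A : Matrix a b ℂ} (h : (1 - Aᴴ * A).PosSemidef) : (1 - A * Aᴴ).PosSemidef := by
  rw [contraction_iff] at h
  have key : ∀ y, vnorm (Aᴴ *ᵥ y) ≤ vnorm y := by
    intro y
    set u := Aᴴ *ᵥ y with hu
    set c := vnorm u with hc
    have hc0 : 0 ≤ c := vnorm_nonneg u
    have key : ((c : ℂ)) ^ 2 = star y ⬝ᵥ (A *ᵥ u) := by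
      rw [← dot_self_eq, hu, star_mulVec, conjTranspose_conjTranspose]
      conv_rhs => rw [dotProduct_mulVec]
    have hnorm : ‖((c : ℂ)) ^ 2‖ = c ^ 2 := by
      rw [norm_pow, Complex.norm_real, Real.norm_eq_abs, abs_of_nonneg hc0]
    have hmain : c ^ 2 ≤ vnorm y * c := by
      calc c ^ 2 = ‖((c : ℂ)) ^ 2‖ := hnorm.symm
        _ = ‖star y ⬝ᵥ (A *ᵥ u)‖ := by rw [key]
        _ ≤ vnorm y * vnorm (A *ᵥ u) := dot_abs_le _ _
        _ ≤ vnorm y * c := by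
            have := h u
            nlinarith [vnorm_nonneg y]
    rcases hc0.eq_or_lt with h0 | h0
    · rw [hc] at h0 ⊢
      exact h0 ▸ vnorm_nonneg y
    · have : c * c ≤ vnorm y * c := by nlinarith
      exact le_of_mul_le_mul_right this h0
  have := contraction_iff.mpr key
  simpa using this


lemma eq_zero_of_neg_psd {a b : Type*} [Fintype a] [Fintype b] [DecidableEq a] {B : Matrix a b ℂ}
    (h : (-(B * Bᴴ)).PosSemidef) : B = 0 := by
  rw [← self_mul_conjTranspose_eq_zero (A := B)]
  have h1 := posSemidef_self_mul_conjTranspose B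
  have hv : ∀ x, (B * Bᴴ) *ᵥ x = 0 := by
    intro x
    refine (h1.dotProduct_mulVec_zero_iff x).mp (le_antisymm ?_ (h1.dotProduct_mulVec_nonneg x))
    have := h.dotProduct_mulVec_nonneg x
    rwa [neg_mulVec, dotProduct_neg, le_neg, neg_zero] at this
  ext i j
  have := congrFun (hv (Pi.single j 1)) i
  simpa [mulVec_single] using this

section Trip

variable {a : Type*} [Fintype a] [DecidableEq a] {M : Matrix a a ℂ} (hH : M.IsHermitian)

noncomputable def trip (f : ℝ → ℝ) : Matrix a a ℂ :=
  (IsHermitian.eigenvectorUnitary hH : Matrix a a ℂ) *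
    diagonal (Complex.ofReal ∘ f ∘ hH.eigenvalues) *
    (star (IsHermitian.eigenvectorUnitary hH : Matrix a a ℂ))

lemma trip_mul (f g : ℝ → ℝ) :
    trip hH f * trip hH g = trip hH fun t => f t * g t := by
  have h1 : (star (IsHermitian.eigenvectorUnitary hH : Matrix a a ℂ)) *
      (IsHermitian.eigenvectorUnitary hH : Matrix a a ℂ) = 1 :=
    Matrix.mem_unitaryGroup_iff'.mp (IsHermitian.eigenvectorUnitary hH).2
  have h2 : ∀ X : Matrix a a ℂ,
      (star (IsHermitian.eigenvectorUnitary hH : Matrix a a ℂ)) *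
      ((IsHermitian.eigenvectorUnitary hH : Matrix a a ℂ) * X) = X := by
    intro X; rw [← Matrix.mul_assoc, h1, Matrix.one_mul]
  have hd : diagonal (Complex.ofReal ∘ f ∘ hH.eigenvalues) *
      diagonal (Complex.ofReal ∘ g ∘ hH.eigenvalues)
      = diagonal (Complex.ofReal ∘ (fun t => f t * g t) ∘ hH.eigenvalues) := by
    rw [diagonal_mul_diagonal]
    exact congrArg _ (funext fun i => by simp)
  unfold trip
  simp only [Matrix.mul_assoc, h2]
  rw [← Matrix.mul_assoc (diagonal _) (diagonal _), hd]

lemma trip_conjTranspose (f : ℝ → ℝ) : (trip hH f)ᴴ = trip hH f := by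
  have hd : (diagonal (Complex.ofReal ∘ f ∘ hH.eigenvalues))ᴴ
      = diagonal (Complex.ofReal ∘ f ∘ hH.eigenvalues) := by
    rw [diagonal_conjTranspose]
    exact congrArg _ (funext fun i => by simp [Pi.star_def])
  unfold trip
  rw [conjTranspose_mul, conjTranspose_mul, hd, ← star_eq_conjTranspose,
    ← star_eq_conjTranspose, star_star, Matrix.mul_assoc]

lemma trip_psd (f : ℝ → ℝ) (h : ∀ i, 0 ≤ f (hH.eigenvalues i)) : (trip hH f).PosSemidef := by
  unfold trip
  rw [star_eq_conjTranspose]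
  refine (posSemidef_diagonal_iff.mpr ?_).mul_mul_conjTranspose_same _
  intro i
  exact Complex.zero_le_real.mpr (h i)

lemma trip_congr {f g : ℝ → ℝ} (h : ∀ i, f (hH.eigenvalues i) = g (hH.eigenvalues i)) :
    trip hH f = trip hH g := by
  unfold trip
  rw [show (Complex.ofReal ∘ f ∘ hH.eigenvalues) = (Complex.ofReal ∘ g ∘ hH.eigenvalues) from
    funext fun i => by simp [h i]]

lemma trip_id : trip hH id = M := by
  unfold trip
  exact hH.spectral_theorem.symm

lemma trip_one : trip hH (fun _ => 1) = 1 := by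
  unfold trip
  rw [show (Complex.ofReal ∘ (fun _ : ℝ => (1:ℝ)) ∘ hH.eigenvalues) = fun _ => (1:ℂ) from
    funext fun i => by simp, diagonal_one, Matrix.mul_one]
  exact Matrix.mem_unitaryGroup_iff.mp (IsHermitian.eigenvectorUnitary hH).2

lemma trip_zero : trip hH (fun _ => 0) = 0 := by
  unfold trip
  rw [show (Complex.ofReal ∘ (fun _ : ℝ => (0:ℝ)) ∘ hH.eigenvalues) = fun _ => (0:ℂ) from
    funext fun i => by simp, diagonal_zero, Matrix.mul_zero, Matrix.zero_mul]

lemma trip_sub (f g : ℝ → ℝ) :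
    trip hH (fun t => f t - g t) = trip hH f - trip hH g := by
  have hd : diagonal (Complex.ofReal ∘ (fun t => f t - g t) ∘ hH.eigenvalues)
      = diagonal (Complex.ofReal ∘ f ∘ hH.eigenvalues)
        - diagonal (Complex.ofReal ∘ g ∘ hH.eigenvalues) := by
    ext i j
    by_cases hij : i = j <;> simp [Matrix.diagonal_apply, hij]
  unfold trip
  rw [hd, Matrix.mul_sub, Matrix.sub_mul]

end Trip

lemma douglas {a : Type*} [Fintype a] [DecidableEq a] {σ : Type*} [Fintype σ] [DecidableEq σ]
    {M : Matrix a a ℂ} (hM : M.PosSemidef) {A : Matrix a σ ℂ}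
    (h : (M - A * Aᴴ).PosSemidef) :
    ∃ D : Matrix a a ℂ, ∃ C : Matrix a σ ℂ,
      D.PosSemidef ∧ D * D = M ∧ A = D * C ∧ (1 - Cᴴ * C).PosSemidef := by
  classical
  have hH : M.IsHermitian := hM.1
  have hev : ∀ i, 0 ≤ hH.eigenvalues i := hM.eigenvalues_nonneg
  set g : ℝ → ℝ := fun t => if t = 0 then 0 else (Real.sqrt t)⁻¹ with hgdef
  set e : ℝ → ℝ := fun t => if t = 0 then 0 else 1 with hedef
  set Dm := trip hH Real.sqrt with hDm
  set N := trip hH g with hN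
  set P := trip hH e with hP
  have hsqrt_ne : ∀ i, hH.eigenvalues i ≠ 0 → Real.sqrt (hH.eigenvalues i) ≠ 0 := by
    intro i hi
    exact ne_of_gt (Real.sqrt_pos.mpr (lt_of_le_of_ne (hev i) (Ne.symm hi)))
  have hDN : Dm * N = P := by
    rw [hDm, hN, hP, trip_mul]
    refine trip_congr hH fun i => ?_
    by_cases h0 : hH.eigenvalues i = 0
    · simp [hgdef, hedef, h0]
    · simp only [hgdef, hedef, if_neg h0]
      exact mul_inv_cancel₀ (hsqrt_ne i h0)
  have hNherm : Nᴴ = N := trip_conjTranspose hH g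
  have hNMN : N * M * Nᴴ = P := by
    have h' : trip hH g * trip hH id * trip hH g = trip hH e := by
      rw [trip_mul, trip_mul]
      refine trip_congr hH fun i => ?_
      by_cases h0 : hH.eigenvalues i = 0
      · simp [hgdef, hedef, h0]
      · simp only [hgdef, hedef, if_neg h0, id_eq]
        have ht : Real.sqrt (hH.eigenvalues i) * Real.sqrt (hH.eigenvalues i)
            = hH.eigenvalues i := Real.mul_self_sqrt (hev i)
        have hne := hsqrt_ne i h0
        field_simp
        rw [Real.sq_sqrt (hev i)]
    rw [trip_id] at h'
    rw [hNherm, hN, hP]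
    exact h'
  have hQ : (1 : Matrix a a ℂ) - P = trip hH (fun t => 1 - e t) := by
    rw [trip_sub, trip_one, hP]
  have hQpsd : ((1 : Matrix a a ℂ) - P).PosSemidef := by
    rw [hQ]
    refine trip_psd hH _ fun i => ?_
    by_cases h0 : hH.eigenvalues i = 0 <;> simp [hedef, h0]
  have hQherm : ((1 : Matrix a a ℂ) - P)ᴴ = 1 - P := by
    rw [hQ]; exact trip_conjTranspose hH _
  have hQM : ((1:Matrix a a ℂ) - P) * M * (1 - P) = 0 := by
    have h' : trip hH (fun t => 1 - e t) * trip hH id * trip hH (fun t => 1 - e t)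
        = trip hH (fun _ => 0) := by
      rw [trip_mul, trip_mul]
      refine trip_congr hH fun i => ?_
      by_cases h0 : hH.eigenvalues i = 0 <;> simp [hedef, h0]
    rw [trip_id, trip_zero] at h'
    rw [hQ]
    exact h'
  have hQA : ((1:Matrix a a ℂ) - P) * A = 0 := by
    apply eq_zero_of_neg_psd
    have hpsd := h.mul_mul_conjTranspose_same ((1:Matrix a a ℂ) - P)
    have heq : ∀ Q : Matrix a a ℂ, Qᴴ = Q → Q * M * Q = 0 →
        Q * (M - A * Aᴴ) * Qᴴ = -((Q * A) * (Q * A)ᴴ) := by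
      intro Q hQh hQM0
      rw [hQh, Matrix.mul_sub, Matrix.sub_mul, hQM0, zero_sub, conjTranspose_mul, hQh]
      simp only [Matrix.mul_assoc]
    rwa [heq _ hQherm hQM] at hpsd
  have hPA : P * A = A := by
    rw [Matrix.sub_mul, Matrix.one_mul] at hQA
    exact (sub_eq_zero.mp hQA).symm
  refine ⟨Dm, N * A, ?_, ?_, ?_, ?_⟩
  · exact trip_psd hH _ fun i => Real.sqrt_nonneg _
  · rw [hDm, trip_mul]
    have h' : trip hH (fun t => Real.sqrt t * Real.sqrt t) = trip hH id :=
      trip_congr hH fun i => Real.mul_self_sqrt (hev i)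
    rw [h', trip_id]
  · rw [← Matrix.mul_assoc, hDN, hPA]
  · have hcc : ((1:Matrix a a ℂ) - (N * A) * (N * A)ᴴ).PosSemidef := by
      have h1 := h.mul_mul_conjTranspose_same N
      have heq : (1:Matrix a a ℂ) - (N * A) * (N * A)ᴴ
          = ((1:Matrix a a ℂ) - P) + N * (M - A * Aᴴ) * Nᴴ := by
        rw [Matrix.mul_sub, Matrix.sub_mul, hNMN, conjTranspose_mul, hNherm]
        simp only [Matrix.mul_assoc]
        abel
      rw [heq]
      exact hQpsd.add h1
    have h2 := flip_psd (A := (N * A)ᴴ) (by simpa using hcc)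
    rw [conjTranspose_conjTranspose] at h2
    exact h2

lemma sigma_mul_conjTranspose {k : ℕ} {ι : Type*} [Fintype ι] (d : ι → ℕ)
    (T : ∀ i, Matrix (Fin k) (Fin (d i)) ℂ) :
    (Matrix.of fun (r : Fin k) (p : (i : ι) × Fin (d i)) => T p.1 r p.2) *
      (Matrix.of fun (r : Fin k) (p : (i : ι) × Fin (d i)) => T p.1 r p.2)ᴴ
      = ∑ i, T i * (T i)ᴴ := by
  ext r s
  simp only [Matrix.sum_apply, mul_apply, conjTranspose_apply, of_apply]
  rw [← Finset.univ_sigma_univ, Finset.sum_sigma]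


lemma forward {k : ℕ} : ∀ (n : ℕ) (d : Fin n → ℕ) (T : ∀ i, Matrix (Fin k) (Fin (d i)) ℂ),
    (1 - ∑ i, T i * (T i)ᴴ).PosSemidef →
    ∃ (Γ : ∀ i, Matrix (Fin k) (Fin (d i)) ℂ) (D : Fin n → Matrix (Fin k) (Fin k) ℂ),
      (∀ i, (1 - (Γ i)ᴴ * Γ i).PosSemidef) ∧
      (∀ i, (D i).PosSemidef ∧ D i * D i = 1 - Γ i * (Γ i)ᴴ) ∧
      ∀ i, T i = (((List.finRange n).take (i : ℕ)).map D).prod * Γ i := by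
  intro n
  induction n with
  | zero =>
    intro d T _
    exact ⟨T, fun _ => 1, fun i => i.elim0, fun i => i.elim0, fun i => i.elim0⟩
  | succ n IH =>
    intro d T h
    set A : Matrix (Fin k) ((j : Fin n) × Fin (d j.succ)) ℂ :=
      Matrix.of (fun (r : Fin k) (p : (j : Fin n) × Fin (d j.succ)) => T p.1.succ r p.2) with hAdef
    have hAA : A * Aᴴ = ∑ j : Fin n, T j.succ * (T j.succ)ᴴ :=
      sigma_mul_conjTranspose (fun j : Fin n => d j.succ) (fun j : Fin n => T j.succ)
    have hMpsd : ((1:Matrix (Fin k) (Fin k) ℂ) - T 0 * (T 0)ᴴ).PosSemidef := by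
      have hsum : ((1:Matrix (Fin k) (Fin k) ℂ) - T 0 * (T 0)ᴴ)
          = (1 - ∑ i, T i * (T i)ᴴ) + A * Aᴴ := by
        rw [hAA, Fin.sum_univ_succ]; abel
      rw [hsum]
      exact h.add (posSemidef_self_mul_conjTranspose A)
    have hMA : (((1:Matrix (Fin k) (Fin k) ℂ) - T 0 * (T 0)ᴴ) - A * Aᴴ).PosSemidef := by
      have hsum : ((1:Matrix (Fin k) (Fin k) ℂ) - T 0 * (T 0)ᴴ) - A * Aᴴ
          = 1 - ∑ i, T i * (T i)ᴴ := by
        rw [hAA, Fin.sum_univ_succ]; abel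
      rw [hsum]; exact h
    obtain ⟨Dm, C, hDpsd, hDD, hAC, hC⟩ := douglas hMpsd hMA
    set S : ∀ j : Fin n, Matrix (Fin k) (Fin (d j.succ)) ℂ :=
      fun j => Matrix.of (fun r t => C r ⟨j, t⟩) with hSdef
    have hCS : (Matrix.of fun (r : Fin k) (p : (j : Fin n) × Fin (d j.succ)) => S p.1 r p.2)
        = C := rfl
    have hSsum : ((1:Matrix (Fin k) (Fin k) ℂ) - ∑ j, S j * (S j)ᴴ).PosSemidef := by
      have hs := sigma_mul_conjTranspose (fun j : Fin n => d j.succ) S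
      rw [hCS] at hs
      rw [← hs]
      exact flip_psd hC
    obtain ⟨Γ', D', hΓ', hD', hT'⟩ := IH (fun j => d j.succ) S hSsum
    have hTS : ∀ j : Fin n, T j.succ = Dm * S j := by
      intro j; ext r t
      have h1 : T j.succ r t = (Dm * C) r ⟨j, t⟩ := congrFun (congrFun hAC r) ⟨j, t⟩
      rw [h1, mul_apply, mul_apply]
      rfl
    refine ⟨Fin.cases (T 0) Γ', Fin.cases Dm D', fun i => ?_, fun i => ?_, fun i => ?_⟩
    · refine Fin.cases ?_ ?_ i
      · simp only [Fin.cases_zero]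
        have h2 := flip_psd (A := (T 0)ᴴ) (by simpa using hMpsd)
        rw [conjTranspose_conjTranspose] at h2
        exact h2
      · intro j; simpa only [Fin.cases_succ] using hΓ' j
    · refine Fin.cases ?_ ?_ i
      · simp only [Fin.cases_zero]
        exact ⟨hDpsd, hDD⟩
      · intro j; simpa only [Fin.cases_succ] using hD' j
    · refine Fin.cases ?_ ?_ i
      · simp only [Fin.cases_zero, Fin.val_zero, List.take_zero, List.map_nil, List.prod_nil,
          Matrix.one_mul]
      · intro j
        have hprod : (((List.finRange (n+1)).take ((j : ℕ)+1)).map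
              (Fin.cases Dm D' : Fin (n+1) → Matrix (Fin k) (Fin k) ℂ)).prod
            = Dm * (((List.finRange n).take (j:ℕ)).map D').prod := by
          rw [List.finRange_succ, List.take_succ_cons, List.map_cons, List.prod_cons,
            Fin.cases_zero]
          congr 1
          rw [← List.map_take, List.map_map]
          congr 1
        simp only [Fin.cases_succ, Fin.val_succ]
        rw [hprod, hTS j, hT' j, Matrix.mul_assoc]

lemma backward {k n : ℕ} (d : Fin n → ℕ) (T : ∀ i, Matrix (Fin k) (Fin (d i)) ℂ)
    (Γ : ∀ i, Matrix (Fin k) (Fin (d i)) ℂ) (D : Fin n → Matrix (Fin k) (Fin k) ℂ)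
    (hD : ∀ i, (D i).PosSemidef ∧ D i * D i = 1 - Γ i * (Γ i)ᴴ)
    (hT : ∀ i, T i = (((List.finRange n).take (i:ℕ)).map D).prod * Γ i) :
    ((1:Matrix (Fin k) (Fin k) ℂ) - ∑ i, T i * (T i)ᴴ).PosSemidef := by
  set Q : ℕ → Matrix (Fin k) (Fin k) ℂ :=
    fun j => (((List.finRange n).take j).map D).prod with hQdef
  have hQsucc : ∀ j : Fin n, Q ((j:ℕ)+1) = Q (j:ℕ) * D j := by
    intro j
    rw [hQdef]
    simp only
    have hjlt : (j:ℕ) < (List.finRange n).length := by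
      simp only [List.length_finRange]
      exact j.isLt
    rw [List.take_succ, List.getElem?_eq_getElem hjlt]
    have hje : (List.finRange n)[(j:ℕ)] = j := by
      apply Fin.ext
      simp
    rw [hje]
    simp
  have key : ∀ i : Fin n, T i * (T i)ᴴ
      = Q (i:ℕ) * (Q (i:ℕ))ᴴ - Q ((i:ℕ)+1) * (Q ((i:ℕ)+1))ᴴ := by
    intro i
    have hherm : (D i)ᴴ = D i := (hD i).1.1
    have h2 : Γ i * (Γ i)ᴴ = 1 - D i * D i := by
      rw [(hD i).2]; abel
    rw [hT i, hQsucc i]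
    rw [conjTranspose_mul, conjTranspose_mul, hherm]
    calc Q (i:ℕ) * Γ i * ((Γ i)ᴴ * (Q (i:ℕ))ᴴ)
        = Q (i:ℕ) * (Γ i * (Γ i)ᴴ) * (Q (i:ℕ))ᴴ := by simp only [Matrix.mul_assoc]
      _ = Q (i:ℕ) * (1 - D i * D i) * (Q (i:ℕ))ᴴ := by rw [h2]
      _ = Q (i:ℕ) * (Q (i:ℕ))ᴴ - Q (i:ℕ) * D i * (D i * (Q (i:ℕ))ᴴ) := by
          rw [Matrix.mul_sub, Matrix.sub_mul, Matrix.mul_one]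
          simp only [Matrix.mul_assoc]
  have tele : ∑ i : Fin n, T i * (T i)ᴴ = Q 0 * (Q 0)ᴴ - Q n * (Q n)ᴴ := by
    calc ∑ i : Fin n, T i * (T i)ᴴ
        = ∑ i : Fin n, (Q (i:ℕ) * (Q (i:ℕ))ᴴ - Q ((i:ℕ)+1) * (Q ((i:ℕ)+1))ᴴ) :=
          Finset.sum_congr rfl fun i _ => key i
      _ = ∑ i ∈ Finset.range n, (Q i * (Q i)ᴴ - Q (i+1) * (Q (i+1))ᴴ) :=
          Fin.sum_univ_eq_sum_range (fun i => Q i * (Q i)ᴴ - Q (i+1) * (Q (i+1))ᴴ) n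
      _ = Q 0 * (Q 0)ᴴ - Q n * (Q n)ᴴ := Finset.sum_range_sub' _ n
  have hQ0 : Q 0 = 1 := by simp [hQdef]
  rw [tele, hQ0]
  have : (1:Matrix (Fin k) (Fin k) ℂ) - (1 * (1:Matrix (Fin k) (Fin k) ℂ)ᴴ - Q n * (Q n)ᴴ)
      = Q n * (Q n)ᴴ := by
    simp
  rw [this]
  exact posSemidef_self_mul_conjTranspose _

end RowContr

/-- A row operator T = [T₁ ⋯ Tₙ] is a contraction iff there are contractions Γᵢ with
T₁ = Γ₁ and Tₖ = D_{Γ₁*} ⋯ D_{Γ_{k-1}*} Γₖ, where D_{Γ*} = (1 - ΓΓᴴ)^(1/2). -/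
theorem stmt_5 {n k : ℕ} (d : Fin n → ℕ) (T : (i : Fin n) → Matrix (Fin k) (Fin (d i)) ℂ) :
    (1 - (Matrix.of fun (r : Fin k) (p : (i : Fin n) × Fin (d i)) => T p.1 r p.2)ᴴ *
        Matrix.of fun (r : Fin k) (p : (i : Fin n) × Fin (d i)) => T p.1 r p.2).PosSemidef ↔
      ∃ (Γ : (i : Fin n) → Matrix (Fin k) (Fin (d i)) ℂ)
        (D : Fin n → Matrix (Fin k) (Fin k) ℂ),
        (∀ i, (1 - (Γ i)ᴴ * Γ i).PosSemidef) ∧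
        (∀ i, (D i).PosSemidef ∧ D i * D i = 1 - Γ i * (Γ i)ᴴ) ∧
        ∀ i, T i = (((List.finRange n).take (i : ℕ)).map D).prod * Γ i := by
  set B : Matrix (Fin k) ((i : Fin n) × Fin (d i)) ℂ :=
    Matrix.of fun (r : Fin k) (p : (i : Fin n) × Fin (d i)) => T p.1 r p.2 with hBdef
  have hBB : B * Bᴴ = ∑ i, T i * (T i)ᴴ := RowContr.sigma_mul_conjTranspose d T
  constructor
  · intro h
    have h1 : ((1:Matrix (Fin k) (Fin k) ℂ) - ∑ i, T i * (T i)ᴴ).PosSemidef := by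
      rw [← hBB]
      exact RowContr.flip_psd h
    exact RowContr.forward n d T h1
  · rintro ⟨Γ, D, _, hD, hT⟩
    have h1 := RowContr.backward d T Γ D hD hT
    rw [← hBB] at h1
    have h2 := RowContr.flip_psd (A := Bᴴ) (by simpa using h1)
    rw [conjTranspose_conjTranspose] at h2
    exact h2
end

section
/- Any density matrix σ ∈ Mₘ(ℂ) ⊗ M₂(ℂ) whose 2×2 blocks σᵢⱼ (i,j = 1,...,m) are all symmetric matrices (σᵢⱼᵀ = σᵢⱼ) is separable, i.e., σ is a convex combination of tensor products of density matrices ρₖ^A ⊗ ρₖ^B with ρₖ^A ∈ Mₘ(ℂ), ρₖ^B ∈ M₂(ℂ). -/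
open Matrix
open scoped ComplexOrder Kronecker

namespace Stmt9Aux

variable {n : Type*} [Fintype n] [DecidableEq n]
set_option linter.unusedSectionVars false

/-- outer product of a vector with its conjugate is PSD -/
lemma psd_outer (w : n → ℂ) : (Matrix.vecMulVec w (star w)).PosSemidef := by
  have h : Matrix.vecMulVec w (star w)
      = (Matrix.of fun (_ : Fin 1) j => (starRingEnd ℂ) (w j))ᴴ
        * (Matrix.of fun (_ : Fin 1) j => (starRingEnd ℂ) (w j)) := by
    ext i j
    simp [Matrix.vecMulVec_apply, Matrix.mul_apply, Matrix.conjTranspose_apply, mul_comm]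
  rw [h]
  exact Matrix.posSemidef_conjTranspose_mul_self _

lemma trace_outer (w : n → ℂ) :
    (Matrix.vecMulVec w (star w)).trace = ∑ i, (Complex.normSq (w i) : ℂ) := by
  simp only [Matrix.trace, Matrix.diag, Matrix.vecMulVec_apply, Pi.star_apply]
  congr 1; funext i
  rw [show star (w i) = (starRingEnd ℂ) (w i) from rfl, Complex.mul_conj]

open scoped MatrixOrder in
/-- PSD trace is a nonneg real, and zero trace forces the matrix to vanish -/
lemma psd_trace {M : Matrix n n ℂ} (hM : M.PosSemidef) :
    ∃ r : ℝ, 0 ≤ r ∧ M.trace = (r : ℂ) ∧ (r = 0 → M = 0) := by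
  obtain ⟨B, rfl⟩ : ∃ B : Matrix n n ℂ, M = Bᴴ * B := by
    obtain ⟨X, hX, -, rfl⟩ := CFC.exists_sqrt_of_isSelfAdjoint_of_quasispectrumRestricts
      hM.isHermitian (QuasispectrumRestricts.nnreal_of_nonneg hM.nonneg)
    exact ⟨X, by rw [← Matrix.star_eq_conjTranspose, hX.star_eq]⟩
  refine ⟨∑ j, ∑ i, Complex.normSq (B i j), Finset.sum_nonneg fun _ _ => Finset.sum_nonneg fun _ _ => Complex.normSq_nonneg _, ?_, ?_⟩
  · simp only [Matrix.trace, Matrix.diag, Matrix.mul_apply, Matrix.conjTranspose_apply]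
    push_cast
    congr 1; funext j; congr 1; funext i
    rw [show star (B i j) = (starRingEnd ℂ) (B i j) from rfl, ← Complex.normSq_eq_conj_mul_self]
  · intro h
    have hB : B = 0 := by
      ext i j
      have h1 : ∀ j ∈ Finset.univ, (0:ℝ) ≤ ∑ i, Complex.normSq (B i j) := by
        intro j _; exact Finset.sum_nonneg fun _ _ => Complex.normSq_nonneg _
      have h2 := (Finset.sum_eq_zero_iff_of_nonneg h1).mp h j (Finset.mem_univ j)
      have h3 : ∀ i ∈ Finset.univ, (0:ℝ) ≤ Complex.normSq (B i j) := by
        intro _ _; exact Complex.normSq_nonneg _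
      have h4 := (Finset.sum_eq_zero_iff_of_nonneg h3).mp h2 i (Finset.mem_univ i)
      simpa using Complex.normSq_eq_zero.mp h4
    rw [hB]; simp

/-- scaling a PSD matrix by a nonneg real (as a complex scalar) keeps it PSD -/
lemma psd_smul {M : Matrix n n ℂ} (hM : M.PosSemidef) {r : ℝ} (hr : 0 ≤ r) :
    (((r : ℂ)) • M).PosSemidef := by
  refine Matrix.PosSemidef.of_dotProduct_mulVec_nonneg ?_ ?_
  · unfold Matrix.IsHermitian
    rw [Matrix.conjTranspose_smul, hM.1]
    congr 1
    simp [Complex.conj_ofReal]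
  · intro x
    rw [Matrix.smul_mulVec, dotProduct_smul]
    exact mul_nonneg (by exact_mod_cast Complex.zero_le_real.mpr hr) (hM.dotProduct_mulVec_nonneg x)

variable {m : ℕ}

set_option maxHeartbeats 1000000 in
theorem blocks_separable (P Q R : Matrix (Fin m) (Fin m) ℂ)
    (hτ : (Matrix.fromBlocks P Q Q R).PosSemidef) :
    ∃ (lam : Fin m → ℝ) (A : Fin m → Matrix (Fin m) (Fin m) ℂ)
      (S : Matrix (Fin m) (Fin m) ℂ),
      (∀ k, ∃ w, A k = Matrix.vecMulVec w (star w)) ∧ S.PosSemidef ∧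
      (∑ k, A k = P) ∧ (∑ k, (lam k : ℂ) • A k = Q) ∧
      (∑ k, ((lam k : ℂ)^2) • A k + S = R) := by
  classical
  -- blocks of τ
  have hP : P.PosSemidef := by
    have h := hτ.submatrix (Sum.inl : Fin m → Fin m ⊕ Fin m)
    have he : (Matrix.fromBlocks P Q Q R).submatrix Sum.inl Sum.inl = P := by ext i j; rfl
    rwa [he] at h
  have hQ : Q.IsHermitian := by
    ext i j
    have h := congrFun (congrFun hτ.1 (Sum.inr i)) (Sum.inl j)
    simpa [Matrix.conjTranspose_apply] using h
  have hR : R.IsHermitian := by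
    ext i j
    have h := congrFun (congrFun hτ.1 (Sum.inr i)) (Sum.inr j)
    simpa [Matrix.conjTranspose_apply] using h
  -- spectral decomposition of P
  have hPh : P.IsHermitian := hP.1
  obtain ⟨d, hd_def⟩ : ∃ d, d = hPh.eigenvalues := ⟨_, rfl⟩
  have hd : ∀ i, 0 ≤ d i := by rw [hd_def]; exact fun i => hP.eigenvalues_nonneg i
  obtain ⟨U, hU_def⟩ : ∃ U, U = (hPh.eigenvectorUnitary : Matrix (Fin m) (Fin m) ℂ) := ⟨_, rfl⟩
  have hUU : U * star U = 1 := by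
    rw [hU_def]; exact Matrix.mem_unitaryGroup_iff.mp (hPh.eigenvectorUnitary).2
  have hUU' : star U * U = 1 := by
    rw [hU_def]; exact Matrix.mem_unitaryGroup_iff'.mp (hPh.eigenvectorUnitary).2
  have hspec : P = U * Matrix.diagonal (fun i => (d i : ℂ)) * star U := by
    rw [hU_def, hd_def]; exact hPh.spectral_theorem
  obtain ⟨cd, hcd_def⟩ :
      ∃ cd : (Fin m → ℝ) → Matrix (Fin m) (Fin m) ℂ,
        cd = fun f => U * Matrix.diagonal (fun i => (f i : ℂ)) * star U := ⟨_, rfl⟩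
  have cd_mul : ∀ f g, cd f * cd g = cd (fun i => f i * g i) := by
    intro f g
    rw [hcd_def]
    calc U * Matrix.diagonal (fun i => (f i:ℂ)) * star U
          * (U * Matrix.diagonal (fun i => (g i:ℂ)) * star U)
        = U * Matrix.diagonal (fun i => (f i:ℂ)) * (star U * U)
          * Matrix.diagonal (fun i => (g i:ℂ)) * star U := by
          simp only [Matrix.mul_assoc]
      _ = U * (Matrix.diagonal (fun i => (f i:ℂ)) * Matrix.diagonal (fun i => (g i:ℂ))) * star U := by
          rw [hUU']; simp only [Matrix.mul_one, Matrix.mul_assoc]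
      _ = U * Matrix.diagonal (fun i => ((f i * g i : ℝ) :ℂ)) * star U := by
          rw [Matrix.diagonal_mul_diagonal]; push_cast; rfl
  have cd_herm : ∀ f, (cd f)ᴴ = cd f := by
    intro f
    have hdiag : (Matrix.diagonal (fun i => ((f i : ℝ):ℂ))).IsHermitian := by
      apply Matrix.isHermitian_diagonal_of_self_adjoint
      funext i; simp [Complex.conj_ofReal]
    have := (Matrix.isHermitian_mul_mul_conjTranspose U hdiag)
    simpa only [hcd_def, Matrix.star_eq_conjTranspose] using this.eq
  have cdc : ∀ {f g : Fin m → ℝ}, (∀ i, f i = g i) → cd f = cd g :=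
    fun h => congrArg cd (funext h)
  -- G = sqrt(P), N = pseudo-inverse of G, Pi = support projection, K = N^2
  obtain ⟨g, hg_def⟩ : ∃ g : Fin m → ℝ, g = fun i => Real.sqrt (d i) := ⟨_, rfl⟩
  obtain ⟨nn, hnn_def⟩ :
      ∃ nn : Fin m → ℝ, nn = fun i => if d i = 0 then 0 else (Real.sqrt (d i))⁻¹ := ⟨_, rfl⟩
  obtain ⟨pp, hpp_def⟩ : ∃ pp : Fin m → ℝ, pp = fun i => if d i = 0 then 0 else 1 := ⟨_, rfl⟩
  obtain ⟨G, hG_def⟩ : ∃ G, G = cd g := ⟨_, rfl⟩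
  obtain ⟨N, hN_def⟩ : ∃ N, N = cd nn := ⟨_, rfl⟩
  obtain ⟨Pi, hPi_def⟩ : ∃ Pi, Pi = cd pp := ⟨_, rfl⟩
  obtain ⟨K, hK_def⟩ : ∃ K, K = N * N := ⟨_, rfl⟩
  have hPcd : P = cd d := by rw [hcd_def]; exact hspec
  have hsne : ∀ i, d i ≠ 0 → Real.sqrt (d i) ≠ 0 := fun i h =>
    Real.sqrt_ne_zero'.mpr (lt_of_le_of_ne (hd i) (Ne.symm h))
  have hGG : G * G = P := by
    rw [hG_def, cd_mul, hPcd]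
    exact cdc fun i => by rw [hg_def]; exact Real.mul_self_sqrt (hd i)
  have hGN : G * N = Pi := by
    rw [hG_def, hN_def, cd_mul, hPi_def]
    refine cdc fun i => ?_
    by_cases h : d i = 0
    · simp [hnn_def, hpp_def, h]
    · simp [hnn_def, hpp_def, h, hg_def, mul_inv_cancel₀ (hsne i h)]
  have hNG : N * G = Pi := by
    rw [hN_def, hG_def, cd_mul, hPi_def]
    refine cdc fun i => ?_
    by_cases h : d i = 0
    · simp [hnn_def, hpp_def, h]
    · simp [hnn_def, hpp_def, h, hg_def, inv_mul_cancel₀ (hsne i h)]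
  have hKcd : K = cd (fun i => nn i * nn i) := by rw [hK_def, hN_def, cd_mul]
  have hnn2 : ∀ i, nn i * nn i = if d i = 0 then 0 else (d i)⁻¹ := by
    intro i
    by_cases h : d i = 0
    · simp [hnn_def, h]
    · simp only [hnn_def, h, if_neg, if_false]
      rw [← mul_inv, Real.mul_self_sqrt (hd i)]
  have hKPK : K * P * K = K := by
    rw [hKcd, hPcd, cd_mul, cd_mul]
    refine cdc fun i => ?_
    rw [hnn2 i]
    by_cases h : d i = 0
    · simp [h]
    · simp only [h, if_neg, if_false]
      field_simp
  -- vectors in the kernel of P are killed by Q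
  have hker : ∀ i : Fin m, d i = 0 → Q *ᵥ (fun k => U k i) = 0 := by
    intro i hdi
    have hPU : P * U = U * Matrix.diagonal (fun i => (d i : ℂ)) := by
      rw [hspec, Matrix.mul_assoc, Matrix.mul_assoc, hUU', Matrix.mul_one]
    have hPu : P *ᵥ (fun k => U k i) = 0 := by
      funext k
      have h1 : (P *ᵥ (fun k => U k i)) k = (P * U) k i := by
        simp [Matrix.mulVec, Matrix.mul_apply, dotProduct]
      rw [h1, hPU, Matrix.mul_diagonal, hdi]
      simp
    have hτz : (Matrix.fromBlocks P Q Q R) *ᵥ (Sum.elim (fun k => U k i) 0)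
        = Sum.elim (0 : Fin m → ℂ) (Q *ᵥ (fun k => U k i)) := by
      rw [Matrix.fromBlocks_mulVec]
      simp [hPu]
    have hquad : star (Sum.elim (fun k => U k i) (0 : Fin m → ℂ))
        ⬝ᵥ ((Matrix.fromBlocks P Q Q R) *ᵥ (Sum.elim (fun k => U k i) 0)) = 0 := by
      have hsz : star (Sum.elim (fun k => U k i) (0 : Fin m → ℂ))
          = Sum.elim (star (fun k => U k i)) 0 := by
        funext x; cases x <;> simp
      rw [hτz, hsz, sumElim_dotProduct_sumElim]
      simp
    have h0 := (hτ.dotProduct_mulVec_zero_iff _).mp hquad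
    rw [hτz] at h0
    funext j
    exact congrFun h0 (Sum.inr j)
  -- the support projection fixes Q
  have hPiQ : Pi * Q = Q := by
    have key : Matrix.diagonal (fun i => (pp i : ℂ)) * (star U * Q) = star U * Q := by
      ext i j
      rw [Matrix.diagonal_mul]
      by_cases h : d i = 0
      · have h2 : (star U * Q) i j = 0 := by
          have h3 : (star U * Q) i j = (starRingEnd ℂ) ((Q *ᵥ (fun k => U k i)) j) := by
            simp only [Matrix.mul_apply, Matrix.mulVec, dotProduct, map_sum,
              Matrix.star_apply, Matrix.star_eq_conjTranspose, Matrix.conjTranspose_apply]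
            congr 1; funext k
            have hq : Q k j = (starRingEnd ℂ) (Q j k) := by
              conv_lhs => rw [← hQ.eq]
              simp [Matrix.conjTranspose_apply]
            rw [hq, Complex.star_def, RingHom.map_mul (starRingEnd ℂ) (Q j k) (U k i)]
            ring
          rw [h3, hker i h]
          simp
        rw [h2]; simp
      · simp [hpp_def, h]
    calc Pi * Q = U * (Matrix.diagonal (fun i => (pp i : ℂ)) * (star U * Q)) := by
          rw [hPi_def, hcd_def]; simp only [Matrix.mul_assoc]
      _ = U * (star U * Q) := by rw [key]
      _ = Q := by rw [← Matrix.mul_assoc, hUU, Matrix.one_mul]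
  have hQPi : Q * Pi = Q := by
    have h := congrArg Matrix.conjTranspose hPiQ
    rw [Matrix.conjTranspose_mul, hQ.eq] at h
    rwa [show Piᴴ = Pi by rw [hPi_def]; exact cd_herm pp] at h
  -- H = N Q N and its spectral decomposition
  obtain ⟨H, hH_def⟩ : ∃ H, H = N * Q * N := ⟨_, rfl⟩
  have hNherm : Nᴴ = N := by rw [hN_def]; exact cd_herm nn
  have hHherm : H.IsHermitian := by
    show Hᴴ = H
    rw [hH_def]
    calc (N * Q * N)ᴴ = Nᴴ * (N * Q)ᴴ := Matrix.conjTranspose_mul _ _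
      _ = Nᴴ * (Qᴴ * Nᴴ) := by rw [Matrix.conjTranspose_mul N Q]
      _ = N * (Q * N) := by rw [hNherm, hQ.eq]
      _ = N * Q * N := by rw [Matrix.mul_assoc]
  obtain ⟨lam, hlam_def⟩ : ∃ lam, lam = hHherm.eigenvalues := ⟨_, rfl⟩
  obtain ⟨V, hV_def⟩ : ∃ V, V = (hHherm.eigenvectorUnitary : Matrix (Fin m) (Fin m) ℂ) := ⟨_, rfl⟩
  have hVV : V * star V = 1 := by
    rw [hV_def]; exact Matrix.mem_unitaryGroup_iff.mp (hHherm.eigenvectorUnitary).2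
  have hVV' : star V * V = 1 := by
    rw [hV_def]; exact Matrix.mem_unitaryGroup_iff'.mp (hHherm.eigenvectorUnitary).2
  obtain ⟨Dl, hDl_def⟩ : ∃ Dl, Dl = Matrix.diagonal (fun k => (lam k : ℂ)) := ⟨_, rfl⟩
  have hHspec : H = V * Dl * star V := by
    rw [hV_def, hDl_def, hlam_def]; exact hHherm.spectral_theorem
  have hGherm : star G = G := by
    rw [Matrix.star_eq_conjTranspose, hG_def]; exact cd_herm g
  have hGHG : G * H * G = Q := by
    rw [hH_def]
    calc G * (N * Q * N) * G = (G * N) * Q * (N * G) := by simp only [Matrix.mul_assoc]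
      _ = Pi * Q * Pi := by rw [hGN, hNG]
      _ = Q := by rw [hPiQ, hQPi]
  have hGH2G : G * (H * H) * G = Q * K * Q := by
    rw [hH_def]
    calc G * (N * Q * N * (N * Q * N)) * G
        = (G * N) * Q * (N * N) * Q * (N * G) := by simp only [Matrix.mul_assoc]
      _ = Pi * Q * K * Q * Pi := by rw [hGN, hNG, hK_def]
      _ = Q * K * Q := by
          rw [hPiQ]
          calc Q * K * Q * Pi = Q * K * (Q * Pi) := by simp only [Matrix.mul_assoc]
            _ = Q * K * Q := by rw [hQPi]
  have hHH : H * H = V * (Dl * Dl) * star V := by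
    rw [hHspec]
    calc V * Dl * star V * (V * Dl * star V) = V * Dl * (star V * V) * Dl * star V := by
          simp only [Matrix.mul_assoc]
      _ = V * (Dl * Dl) * star V := by rw [hVV', Matrix.mul_one]; simp only [Matrix.mul_assoc]
  -- the vectors w_k and rank-one pieces A_k
  obtain ⟨W, hW_def⟩ : ∃ W, W = G * V := ⟨_, rfl⟩
  obtain ⟨A, hA_def⟩ : ∃ A : Fin m → Matrix (Fin m) (Fin m) ℂ,
      A = fun k => Matrix.vecMulVec (fun i => W i k) (star (fun i => W i k)) := ⟨_, rfl⟩
  have sum_formula : ∀ c : Fin m → ℝ,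
      ∑ k, ((c k : ℂ)) • A k = W * Matrix.diagonal (fun k => (c k : ℂ)) * star W := by
    intro c
    ext i j
    simp only [Matrix.sum_apply, Matrix.smul_apply, hA_def, Matrix.vecMulVec_apply,
      Pi.star_apply, smul_eq_mul]
    rw [Matrix.mul_apply]
    refine Finset.sum_congr rfl fun k _ => ?_
    rw [Matrix.mul_diagonal]
    simp only [Matrix.star_eq_conjTranspose, Matrix.conjTranspose_apply]
    ring_nf
    rfl
  have hWW : star W = star V * G := by rw [hW_def, Matrix.star_mul, hGherm]
  have hT0 : ∑ k, A k = P := by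
    have h1 := sum_formula (fun _ => (1:ℝ))
    have h2 : ∑ k, A k = ∑ k, (((1:ℝ) : ℂ)) • A k := by
      refine Finset.sum_congr rfl fun k _ => by norm_num
    rw [h2, h1, hWW]
    have h3 : Matrix.diagonal (fun _ : Fin m => ((1:ℝ):ℂ)) = 1 := by
      rw [show (fun _ : Fin m => ((1:ℝ):ℂ)) = fun _ => (1:ℂ) by norm_num]
      exact Matrix.diagonal_one
    rw [h3, Matrix.mul_one, hW_def]
    calc G * V * (star V * G) = G * (V * star V) * G := by simp only [Matrix.mul_assoc]
      _ = P := by rw [hVV, Matrix.mul_one, hGG]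
  have hT1 : ∑ k, ((lam k : ℂ)) • A k = Q := by
    rw [sum_formula lam, hWW, ← hDl_def, hW_def]
    calc G * V * Dl * (star V * G) = G * (V * Dl * star V) * G := by
          simp only [Matrix.mul_assoc]
      _ = G * H * G := by rw [← hHspec]
      _ = Q := hGHG
  have hT2 : ∑ k, ((lam k : ℂ)^2) • A k = Q * K * Q := by
    have hcast : ∀ k : Fin m, ((lam k ^ 2 : ℝ) : ℂ) = (lam k : ℂ)^2 := by
      intro k; push_cast; ring
    calc ∑ k, ((lam k : ℂ)^2) • A k = ∑ k, (((lam k ^ 2 : ℝ) : ℂ)) • A k := by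
          refine Finset.sum_congr rfl fun k _ => by rw [hcast k]
      _ = W * Matrix.diagonal (fun k => ((lam k ^ 2 : ℝ) : ℂ)) * star W :=
          sum_formula (fun k => lam k ^ 2)
      _ = W * (Dl * Dl) * star W := by
          rw [hDl_def, Matrix.diagonal_mul_diagonal]
          have he : (fun k : Fin m => ((lam k ^ 2 : ℝ) : ℂ))
              = fun i => (lam i : ℂ) * (lam i : ℂ) := by
            funext k; rw [hcast k]; ring
          rw [he]
      _ = G * (H * H) * G := by rw [hWW, hHH, hW_def]; simp only [Matrix.mul_assoc]
      _ = Q * K * Q := hGH2G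
  -- the Schur-complement remainder S
  obtain ⟨S, hS_def⟩ : ∃ S, S = R - Q * K * Q := ⟨_, rfl⟩
  have hKherm : Kᴴ = K := by
    rw [hK_def, Matrix.conjTranspose_mul, hNherm]
  have hKQherm : (K * Q)ᴴ = Q * K := by rw [Matrix.conjTranspose_mul, hKherm, hQ.eq]
  have hQKherm' : (Q * K)ᴴ = K * Q := by rw [Matrix.conjTranspose_mul, hKherm, hQ.eq]
  have hQKQherm : (Q * K * Q)ᴴ = Q * K * Q := by
    rw [Matrix.conjTranspose_mul (Q * K) Q, hQKherm', hQ.eq, ← Matrix.mul_assoc]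
  have hSherm : S.IsHermitian := by
    show Sᴴ = S
    rw [hS_def, Matrix.conjTranspose_sub, hR.eq, hQKQherm]
  have hdot : ∀ (M1 M2 : Matrix (Fin m) (Fin m) ℂ) (y v : Fin m → ℂ),
      star (M1 *ᵥ y) ⬝ᵥ (M2 *ᵥ v) = star y ⬝ᵥ ((M1ᴴ * M2) *ᵥ v) := by
    intro M1 M2 y v
    rw [star_mulVec, dotProduct_mulVec, Matrix.vecMul_vecMul, ← dotProduct_mulVec]
  have hQKPKQ : (Q * K) * (P * (K * Q)) = Q * K * Q := by
    calc (Q * K) * (P * (K * Q)) = Q * (K * P * K) * Q := by simp only [Matrix.mul_assoc]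
      _ = Q * K * Q := by rw [hKPK]
  have p1 : ∀ y : Fin m → ℂ, star ((K * Q) *ᵥ y) ⬝ᵥ (P *ᵥ ((K * Q) *ᵥ y))
      = star y ⬝ᵥ ((Q * K * Q) *ᵥ y) := by
    intro y
    rw [Matrix.mulVec_mulVec, hdot, hKQherm, hQKPKQ]
  have p2 : ∀ y : Fin m → ℂ, star ((K * Q) *ᵥ y) ⬝ᵥ (Q *ᵥ y)
      = star y ⬝ᵥ ((Q * K * Q) *ᵥ y) := by
    intro y
    rw [hdot, hKQherm]
  have p3 : ∀ y : Fin m → ℂ, star y ⬝ᵥ (Q *ᵥ ((K * Q) *ᵥ y))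
      = star y ⬝ᵥ ((Q * K * Q) *ᵥ y) := by
    intro y
    rw [Matrix.mulVec_mulVec, ← Matrix.mul_assoc]
  have hSpsd : S.PosSemidef := by
    refine .of_dotProduct_mulVec_nonneg hSherm fun y => ?_
    have h := hτ.dotProduct_mulVec_nonneg (Sum.elim (-((K * Q) *ᵥ y)) y)
    have key : star (Sum.elim (-((K * Q) *ᵥ y)) y)
        ⬝ᵥ ((Matrix.fromBlocks P Q Q R) *ᵥ (Sum.elim (-((K * Q) *ᵥ y)) y))
        = star y ⬝ᵥ (S *ᵥ y) := by
      have e1 : star (Sum.elim (-((K * Q) *ᵥ y)) y)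
          = Sum.elim (star (-((K * Q) *ᵥ y))) (star y) := by
        funext t; cases t <;> simp
      rw [Matrix.fromBlocks_mulVec, e1, sumElim_dotProduct_sumElim]
      simp only [Sum.elim_comp_inl, Sum.elim_comp_inr]
      simp only [Matrix.mulVec_neg, star_neg, neg_dotProduct, dotProduct_neg,
        dotProduct_add, neg_neg]
      rw [p1 y, p2 y, p3 y, hS_def, Matrix.sub_mulVec, dotProduct_sub]
      ring
    rw [key] at h
    exact h
  exact ⟨lam, A, S, fun k => ⟨_, by rw [hA_def]⟩, hSpsd, hT0, hT1, by rw [hS_def, hT2]; abel⟩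

end Stmt9Aux

open Stmt9Aux in
set_option maxHeartbeats 2000000 in
/-- Any density matrix on ℂᵐ ⊗ ℂ² all of whose 2×2 blocks are symmetric matrices
is separable. -/
theorem stmt_9 {m : ℕ} (σ : Matrix (Fin m × Fin 2) (Fin m × Fin 2) ℂ)
    (hpsd : σ.PosSemidef) (htr : σ.trace = 1)
    (hsym : ∀ (i j : Fin m) (a b : Fin 2), σ (i, a) (j, b) = σ (i, b) (j, a)) :
    ∃ (k : ℕ) (p : Fin k → ℝ) (ρA : Fin k → Matrix (Fin m) (Fin m) ℂ)
      (ρB : Fin k → Matrix (Fin 2) (Fin 2) ℂ),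
      (∀ i, 0 ≤ p i) ∧ (∑ i, p i = 1) ∧
      (∀ i, (ρA i).PosSemidef ∧ (ρA i).trace = 1) ∧
      (∀ i, (ρB i).PosSemidef ∧ (ρB i).trace = 1) ∧
      σ = ∑ i, (p i : ℂ) • Matrix.kroneckerMap (· * ·) (ρA i) (ρB i) := by
  classical
  rcases Nat.eq_zero_or_pos m with hm0 | hm
  · exfalso
    subst hm0
    have h0 : σ.trace = 0 := by
      simp [Matrix.trace]
    rw [h0] at htr
    exact one_ne_zero htr.symm
  have hmR : (m : ℝ) ≠ 0 := ne_of_gt (Nat.cast_pos.mpr hm)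
  have hmC : ((m : ℝ) : ℂ) ≠ 0 := Complex.ofReal_ne_zero.mpr hmR
  -- the blocks of σ
  obtain ⟨P, hPdef⟩ : ∃ P : Matrix (Fin m) (Fin m) ℂ,
    P = Matrix.of (fun i j => σ (i, 0) (j, 0)) := ⟨_, rfl⟩
  obtain ⟨Q, hQdef⟩ : ∃ Q : Matrix (Fin m) (Fin m) ℂ,
    Q = Matrix.of (fun i j => σ (i, 0) (j, 1)) := ⟨_, rfl⟩
  obtain ⟨R, hRdef⟩ : ∃ R : Matrix (Fin m) (Fin m) ℂ,
    R = Matrix.of (fun i j => σ (i, 1) (j, 1)) := ⟨_, rfl⟩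
  have hτ : (Matrix.fromBlocks P Q Q R).PosSemidef := by
    have h := hpsd.submatrix
      (Sum.elim (fun i : Fin m => ((i, 0) : Fin m × Fin 2)) (fun i => (i, 1)))
    have he : σ.submatrix
        (Sum.elim (fun i : Fin m => ((i, 0) : Fin m × Fin 2)) (fun i => (i, 1)))
        (Sum.elim (fun i : Fin m => ((i, 0) : Fin m × Fin 2)) (fun i => (i, 1)))
        = Matrix.fromBlocks P Q Q R := by
      ext x y
      cases x with
      | inl i => cases y with
        | inl j => simp [hPdef]
        | inr j => simp [hQdef]
      | inr i => cases y with
        | inl j => simpa [hQdef] using hsym i j 1 0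
        | inr j => simp [hRdef]
    rwa [he] at h
  obtain ⟨lam, A, S, hAout, hSpsd, hT0, hT1, hT2⟩ := blocks_separable P Q R hτ
  have hApsd : ∀ k, (A k).PosSemidef := fun k => by
    obtain ⟨w, hw⟩ := hAout k; rw [hw]; exact psd_outer w
  choose a ha0 ha1 ha2 using fun k => psd_trace (hApsd k)
  obtain ⟨s, hs0, hs1, hs2⟩ := psd_trace hSpsd
  have hpos : ∀ k, (0:ℝ) < 1 + lam k ^ 2 := fun k => by positivity
  have hposC : ∀ k, ((1 + lam k ^ 2 : ℝ) : ℂ) ≠ 0 := fun k => by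
    exact_mod_cast ne_of_gt (hpos k)
  -- trace bookkeeping
  have htrP : P.trace = ∑ k, (a k : ℂ) := by
    rw [← hT0, Matrix.trace_sum]
    exact Finset.sum_congr rfl fun k _ => ha1 k
  have htrR : R.trace = (∑ k, ((lam k : ℂ))^2 * (a k : ℂ)) + (s : ℂ) := by
    rw [← hT2, Matrix.trace_add, Matrix.trace_sum, hs1]
    congr 1
    refine Finset.sum_congr rfl fun k _ => ?_
    rw [Matrix.trace_smul, ha1 k]
    simp [smul_eq_mul]
  have htrσ : σ.trace = P.trace + R.trace := by
    simp [Matrix.trace, Matrix.diag, Fintype.sum_prod_type, Fin.sum_univ_two, hPdef, hRdef,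
      Finset.sum_add_distrib]
  have hsum1 : (∑ k, a k * (1 + lam k ^ 2)) + s = 1 := by
    have hthis := htrσ
    rw [htr, htrP, htrR] at hthis
    have hc : ((∑ k, a k * (1 + lam k ^ 2) + s : ℝ) : ℂ) = 1 := by
      push_cast
      have hmerge : ∑ k, (a k : ℂ) * (1 + (lam k : ℂ)^2)
          = ∑ k, (a k : ℂ) + ∑ k, ((lam k : ℂ))^2 * (a k : ℂ) := by
        rw [← Finset.sum_add_distrib]
        exact Finset.sum_congr rfl fun k _ => by ring
      rw [hmerge]
      linear_combination -hthis
    exact_mod_cast hc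
  -- the ensemble
  obtain ⟨p, hp⟩ : ∃ p : Fin (m+1) → ℝ,
      p = Fin.snoc (fun k : Fin m => a k * (1 + lam k ^ 2)) s := ⟨_, rfl⟩
  obtain ⟨ρA, hρA⟩ : ∃ ρA : Fin (m+1) → Matrix (Fin m) (Fin m) ℂ,
      ρA = Fin.snoc
        (fun k : Fin m => if a k = 0 then (((m:ℝ) : ℂ))⁻¹ • (1 : Matrix (Fin m) (Fin m) ℂ)
          else ((a k : ℝ) : ℂ)⁻¹ • A k)
        (if s = 0 then (((m:ℝ) : ℂ))⁻¹ • (1 : Matrix (Fin m) (Fin m) ℂ)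
          else ((s : ℝ) : ℂ)⁻¹ • S) := ⟨_, rfl⟩
  obtain ⟨ρB, hρB⟩ : ∃ ρB : Fin (m+1) → Matrix (Fin 2) (Fin 2) ℂ,
      ρB = Fin.snoc
        (fun k : Fin m => (((1 + lam k ^ 2 : ℝ) : ℂ))⁻¹
          • Matrix.vecMulVec ![1, (lam k : ℂ)] (star ![1, (lam k : ℂ)]))
        (Matrix.vecMulVec ![0, 1] (star ![0, 1])) := ⟨_, rfl⟩
  refine ⟨m + 1, p, ρA, ρB, ?_, ?_, ?_, ?_, ?_⟩
  · -- nonnegativity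
    intro i
    refine Fin.lastCases ?_ (fun k => ?_) i
    · rw [hp, Fin.snoc_last]; exact hs0
    · rw [hp, Fin.snoc_castSucc]
      have := ha0 k
      nlinarith [sq_nonneg (lam k)]
  · -- sums to one
    rw [hp, Fin.sum_univ_castSucc]
    simp only [Fin.snoc_castSucc, Fin.snoc_last]
    exact hsum1
  · -- ρA are density matrices
    intro i
    refine Fin.lastCases ?_ (fun k => ?_) i
    · rw [hρA, Fin.snoc_last]
      by_cases h : s = 0
      · rw [if_pos h]
        constructor
        · rw [show (((m:ℝ) : ℂ))⁻¹ = ((((m:ℝ)⁻¹ : ℝ)) : ℂ) by push_cast; ring]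
          exact psd_smul Matrix.PosSemidef.one (inv_nonneg.mpr (Nat.cast_nonneg m))
        · rw [Matrix.trace_smul, Matrix.trace_one]
          simp only [smul_eq_mul]
          rw [show ((Fintype.card (Fin m) : ℂ)) = ((m:ℝ):ℂ) by push_cast [Fintype.card_fin]; ring]
          exact inv_mul_cancel₀ hmC
      · rw [if_neg h]
        constructor
        · rw [show (((s:ℝ)):ℂ)⁻¹ = (((s⁻¹ : ℝ)):ℂ) by push_cast; ring]
          exact psd_smul hSpsd (inv_nonneg.mpr hs0)
        · rw [Matrix.trace_smul, hs1]
          simp only [smul_eq_mul]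
          exact inv_mul_cancel₀ (by exact_mod_cast h)
    · rw [hρA, Fin.snoc_castSucc]
      by_cases h : a k = 0
      · rw [if_pos h]
        constructor
        · rw [show (((m:ℝ) : ℂ))⁻¹ = ((((m:ℝ)⁻¹ : ℝ)) : ℂ) by push_cast; ring]
          exact psd_smul Matrix.PosSemidef.one (inv_nonneg.mpr (Nat.cast_nonneg m))
        · rw [Matrix.trace_smul, Matrix.trace_one]
          simp only [smul_eq_mul]
          rw [show ((Fintype.card (Fin m) : ℂ)) = ((m:ℝ):ℂ) by push_cast [Fintype.card_fin]; ring]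
          exact inv_mul_cancel₀ hmC
      · rw [if_neg h]
        constructor
        · rw [show (((a k:ℝ)):ℂ)⁻¹ = ((((a k)⁻¹ : ℝ)):ℂ) by push_cast; ring]
          exact psd_smul (hApsd k) (inv_nonneg.mpr (ha0 k))
        · rw [Matrix.trace_smul, ha1 k]
          simp only [smul_eq_mul]
          exact inv_mul_cancel₀ (by exact_mod_cast h)
  · -- ρB are density matrices
    intro i
    refine Fin.lastCases ?_ (fun k => ?_) i
    · rw [hρB, Fin.snoc_last]
      constructor
      · exact psd_outer _
      · rw [trace_outer]
        simp [Fin.sum_univ_two]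
    · rw [hρB, Fin.snoc_castSucc]
      constructor
      · rw [show (((1 + lam k ^ 2 : ℝ) : ℂ))⁻¹ = ((((1 + lam k ^ 2)⁻¹ : ℝ)):ℂ) by push_cast; ring]
        exact psd_smul (psd_outer _) (inv_nonneg.mpr (le_of_lt (hpos k)))
      · rw [Matrix.trace_smul, trace_outer]
        have hv : ∑ i : Fin 2, (Complex.normSq (![1, (lam k:ℂ)] i) : ℂ)
            = ((1 + lam k ^ 2 : ℝ) : ℂ) := by
          rw [Fin.sum_univ_two]
          rw [show Complex.normSq (![1, (lam k:ℂ)] 0) = 1 by simp]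
          rw [show Complex.normSq (![1, (lam k:ℂ)] 1) = lam k ^ 2 by
            simp [Complex.normSq_ofReal]; ring]
          push_cast; ring
        rw [hv]
        simp only [smul_eq_mul]
        exact inv_mul_cancel₀ (hposC k)
  · -- the decomposition
    have hterm : ∀ k : Fin m,
        ((p k.castSucc : ℝ) : ℂ) • Matrix.kroneckerMap (· * ·) (ρA k.castSucc) (ρB k.castSucc)
        = Matrix.kroneckerMap (· * ·) (A k)
            (Matrix.vecMulVec ![1, (lam k : ℂ)] (star ![1, (lam k : ℂ)])) := by
      intro k
      rw [hp, hρA, hρB, Fin.snoc_castSucc, Fin.snoc_castSucc, Fin.snoc_castSucc]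
      by_cases h : a k = 0
      · rw [h, ha2 k h]
        ext x y
        simp [Matrix.kroneckerMap_apply]
        exact (zero_mul _).symm
      · rw [if_neg h]
        rw [Matrix.smul_kronecker, Matrix.kronecker_smul, smul_smul, smul_smul]
        rw [show (((a k * (1 + lam k ^ 2) : ℝ)) : ℂ) * ((a k : ℝ) : ℂ)⁻¹
            * (((1 + lam k ^ 2 : ℝ) : ℂ))⁻¹ = 1 by
          have hne : (1 : ℂ) + (lam k : ℂ)^2 ≠ 0 := by
            have h5 := hposC k; push_cast at h5; exact h5
          push_cast
          field_simp]
        rw [one_smul]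
    have hlast : ((p (Fin.last m) : ℝ) : ℂ)
          • Matrix.kroneckerMap (· * ·) (ρA (Fin.last m)) (ρB (Fin.last m))
        = Matrix.kroneckerMap (· * ·) S (Matrix.vecMulVec ![0, 1] (star ![0, 1])) := by
      rw [hp, hρA, hρB, Fin.snoc_last, Fin.snoc_last, Fin.snoc_last]
      by_cases h : s = 0
      · rw [h, hs2 h]
        ext x y
        simp [Matrix.kroneckerMap_apply]
        exact (zero_mul _).symm
      · rw [if_neg h]
        rw [Matrix.smul_kronecker, smul_smul]
        rw [show (((s : ℝ)) : ℂ) * ((s : ℝ) : ℂ)⁻¹ = 1 by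
          exact mul_inv_cancel₀ (by exact_mod_cast h)]
        rw [one_smul]
    rw [Fin.sum_univ_castSucc]
    rw [Finset.sum_congr rfl (fun k _ => hterm k), hlast]
    -- entrywise verification
    ext ⟨i, c⟩ ⟨j, b⟩
    have h00 : (∑ k, A k) i j = P i j := by rw [hT0]
    have h01 : (∑ k, ((lam k : ℂ)) • A k) i j = Q i j := by rw [hT1]
    have h11 : (∑ k, ((lam k : ℂ)^2) • A k + S) i j = R i j := by rw [hT2]
    rw [Matrix.sum_apply] at h00 h01
    rw [Matrix.add_apply, Matrix.sum_apply] at h11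
    simp only [Matrix.smul_apply, smul_eq_mul] at h01 h11
    simp only [Matrix.add_apply, Matrix.sum_apply, Matrix.kroneckerMap_apply,
      Matrix.vecMulVec_apply, Pi.star_apply]
    have h2 : ∀ t : Fin 2, t = 0 ∨ t = 1 := by decide
    rcases h2 c with rfl | rfl <;> rcases h2 b with rfl | rfl
    · -- (0,0)
      simpa [hPdef] using h00.symm
    · -- (0,1)
      rw [show σ (i, 0) (j, 1) = Q i j from by rw [hQdef]; rfl, ← h01]
      rw [show ((![0, (1:ℂ)] 0) * star (![0, (1:ℂ)] 1)) = 0 from by simp, mul_zero, add_zero]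
      refine Finset.sum_congr rfl fun k _ => ?_
      rw [show ((![1, ((lam k :ℝ):ℂ)] 0) * star (![1, ((lam k:ℝ):ℂ)] 1)) = ((lam k : ℝ):ℂ)
        from by simp [Complex.conj_ofReal]]
      ring
    · -- (1,0)
      rw [show σ (i, 1) (j, 0) = Q i j from by rw [hQdef]; exact hsym i j 1 0, ← h01]
      rw [show ((![0, (1:ℂ)] 1) * star (![0, (1:ℂ)] 0)) = 0 from by simp, mul_zero, add_zero]
      refine Finset.sum_congr rfl fun k _ => ?_
      rw [show ((![1, ((lam k :ℝ):ℂ)] 1) * star (![1, ((lam k:ℝ):ℂ)] 0)) = ((lam k : ℝ):ℂ)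
        from by simp]
      ring
    · -- (1,1)
      rw [show σ (i, 1) (j, 1) = R i j from by rw [hRdef]; rfl, ← h11]
      rw [show ((![0, (1:ℂ)] 1) * star (![0, (1:ℂ)] 1)) = 1 from by simp, mul_one]
      refine congrArg₂ (· + ·) (Finset.sum_congr rfl fun k _ => ?_) rfl
      rw [show ((![1, ((lam k :ℝ):ℂ)] 1) * star (![1, ((lam k:ℝ):ℂ)] 1)) = ((lam k : ℝ):ℂ)^2
        from by simp [Complex.conj_ofReal]; ring]
      ring
end

section
/- Every positive semidefinite 2m×2m matrix that is Hankel (as a scalar matrix, entries constant along anti-diagonals) with trace 1 is separable when viewed as a state on ℂᵐ ⊗ ℂ². -/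
open Matrix
open scoped ComplexOrder
open Polynomial

private theorem sos_aux : ∀ (N : ℕ) (p : Polynomial ℝ), p.natDegree ≤ N →
    (∀ x : ℝ, 0 ≤ p.eval x) → ∃ σ τ : Polynomial ℝ, p = σ ^ 2 + τ ^ 2 := by
  intro N
  induction N using Nat.strong_induction_on with
  | _ N ih =>
  intro p hdeg hp
  by_cases hp0 : p = 0
  · exact ⟨0, 0, by simp [hp0]⟩
  by_cases hd0 : p.natDegree = 0
  · refine ⟨C (Real.sqrt (p.coeff 0)), 0, ?_⟩
    have h0 : 0 ≤ p.coeff 0 := by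
      have := hp 0
      rwa [← Polynomial.coeff_zero_eq_eval_zero] at this
    have : p = C (p.coeff 0) := Polynomial.eq_C_of_natDegree_eq_zero hd0
    conv_lhs => rw [this]
    rw [← Polynomial.C_pow, Real.sq_sqrt h0]
    ring
  -- now natDegree ≥ 1
  have hd1 : 0 < p.natDegree := Nat.pos_of_ne_zero hd0
  have hN : 0 < N := lt_of_lt_of_le hd1 hdeg
  -- complex root
  have hmapdeg : 0 < (p.map (algebraMap ℝ ℂ)).degree := by
    rw [Polynomial.degree_map_eq_of_injective (algebraMap ℝ ℂ).injective]
    exact Polynomial.natDegree_pos_iff_degree_pos.mp hd1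
  obtain ⟨z, hz⟩ := Complex.exists_root hmapdeg
  have hz' : Polynomial.aeval z p = 0 := by
    rwa [Polynomial.IsRoot, Polynomial.eval_map, ← Polynomial.aeval_def] at hz
  by_cases him : z.im = 0
  · -- real root r
    set r := z.re with hr
    have hzr : z = (r : ℂ) := by
      apply Complex.ext <;> simp [him, hr]
    have hroot : p.eval r = 0 := by
      have : (algebraMap ℝ ℂ) (p.eval r) = 0 := by
        rw [← Polynomial.eval₂_at_apply, ← Polynomial.aeval_def]
        have hcoe : (algebraMap ℝ ℂ) r = (r : ℂ) := rfl
        rw [hcoe, ← hzr]; exact hz'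
      have hcoe2 : (algebraMap ℝ ℂ) (p.eval r) = ((p.eval r : ℝ) : ℂ) := rfl
      rw [hcoe2] at this
      exact_mod_cast this
    have hmin : IsLocalMin (fun x => p.eval x) r := by
      apply Filter.Eventually.of_forall
      intro x
      simp only [hroot]
      exact hp x
    have hderiv : p.derivative.eval r = 0 := by
      rw [← Polynomial.deriv]; exact hmin.deriv_eq_zero
    obtain ⟨h, hh⟩ := (Polynomial.dvd_iff_isRoot).mpr hroot
    have hhr : h.eval r = 0 := by
      have := hderiv
      rw [hh] at this
      simp only [Polynomial.derivative_mul, Polynomial.derivative_sub,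
        Polynomial.derivative_X, Polynomial.derivative_C, Polynomial.eval_add,
        Polynomial.eval_mul, Polynomial.eval_sub, Polynomial.eval_X, Polynomial.eval_C,
        Polynomial.eval_one, sub_zero, sub_self, zero_mul, one_mul, zero_add] at this
      simpa using this
    obtain ⟨g, hg⟩ := (Polynomial.dvd_iff_isRoot).mpr hhr
    have hpg : p = (X - C r) ^ 2 * g := by rw [hh, hg]; ring
    have hgne : g ≠ 0 := by
      intro h0; rw [h0, mul_zero] at hpg; exact hp0 hpg
    have hgnn : ∀ x : ℝ, 0 ≤ g.eval x := by
      intro x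
      by_contra hneg
      push_neg at hneg
      -- find x' ≠ r with g.eval x' < 0
      obtain ⟨x', hx'lt, hx'ne⟩ : ∃ x', g.eval x' < 0 ∧ x' ≠ r := by
        rcases ne_or_eq x r with hxr | hxr
        · exact ⟨x, hneg, hxr⟩
        · subst hxr
          have hopen : IsOpen {y : ℝ | g.eval y < 0} :=
            isOpen_lt (Polynomial.continuous g) continuous_const
          have hmem : {y : ℝ | g.eval y < 0} ∈ nhdsWithin r {r}ᶜ :=
            mem_nhdsWithin_of_mem_nhds (hopen.mem_nhds hneg)
          obtain ⟨x', hx'⟩ :=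
            Filter.nonempty_of_mem (Filter.inter_mem hmem self_mem_nhdsWithin)
          exact ⟨x', hx'.1, by simpa using hx'.2⟩
      have := hp x'
      rw [hpg] at this
      simp only [Polynomial.eval_mul, Polynomial.eval_pow, Polynomial.eval_sub,
        Polynomial.eval_X, Polynomial.eval_C] at this
      nlinarith [pow_pos (abs_pos.mpr (sub_ne_zero.mpr hx'ne)) 2, sq_abs (x' - r)]
    have hdegg : g.natDegree < N := by
      have h2 : ((X - C r) ^ 2 : Polynomial ℝ) ≠ 0 := by
        apply pow_ne_zero; exact Polynomial.X_sub_C_ne_zero r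
      have : p.natDegree = 2 + g.natDegree := by
        rw [hpg, Polynomial.natDegree_mul h2 hgne]
        congr 1
        rw [Polynomial.natDegree_pow, Polynomial.natDegree_X_sub_C]
      omega
    obtain ⟨σ, τ, hστ⟩ := ih g.natDegree hdegg g le_rfl hgnn
    exact ⟨(X - C r) * σ, (X - C r) * τ, by rw [hpg, hστ]; ring⟩
  · -- nonreal root: quadratic factor
    set q2 : Polynomial ℝ := (X - C z.re) ^ 2 + (C z.im) ^ 2 with hq2
    have hq2monic : q2.Monic := by
      apply Polynomial.Monic.add_of_left
      · exact (Polynomial.monic_X_sub_C z.re).pow 2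
      · have h1 : (((C z.im) ^ 2 : Polynomial ℝ)).degree ≤ 0 := by
          rw [← Polynomial.C_pow]; exact Polynomial.degree_C_le
        have h2 : (((X - C z.re) ^ 2 : Polynomial ℝ)).degree = 2 := by
          rw [Polynomial.degree_pow, Polynomial.degree_X_sub_C]
          decide
        rw [h2]
        exact lt_of_le_of_lt h1 (by decide)
    have hq2deg : q2.natDegree = 2 := by
      rw [hq2, ← Polynomial.C_pow, Polynomial.natDegree_add_C,
        Polynomial.natDegree_pow, Polynomial.natDegree_X_sub_C]
    have hq2ne1 : q2 ≠ 1 := by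
      intro h1; rw [h1] at hq2deg; simp at hq2deg
    have hrem := Polynomial.natDegree_modByMonic_lt p hq2monic hq2ne1
    rw [hq2deg] at hrem
    have hdiv := Polynomial.modByMonic_add_div p q2
    -- evaluate at z over ℂ
    have haq2 : Polynomial.aeval z q2 = 0 := by
      rw [hq2]
      simp only [_root_.map_add, _root_.map_pow, _root_.map_sub, Polynomial.aeval_X, Polynomial.aeval_C]
      have : z - (algebraMap ℝ ℂ) z.re = z.im * Complex.I := by
        simp [Complex.ext_iff]
      rw [this]
      have : ((algebraMap ℝ ℂ) z.im) = (z.im : ℂ) := rfl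
      rw [this]
      rw [mul_pow, Complex.I_sq]
      ring
    have hremz : Polynomial.aeval z (p %ₘ q2) = 0 := by
      have := congrArg (Polynomial.aeval z) hdiv
      rw [_root_.map_add, _root_.map_mul, haq2, zero_mul, add_zero] at this
      rw [this]; exact hz'
    have hremform := Polynomial.eq_X_add_C_of_natDegree_le_one (Nat.lt_succ_iff.mp hrem)
    rw [hremform] at hremz
    simp only [_root_.map_add, _root_.map_mul, Polynomial.aeval_X, Polynomial.aeval_C] at hremz
    have hc1 : (p %ₘ q2).coeff 1 = 0 := by
      have him' := congrArg Complex.im hremz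
      simp only [Complex.add_im, Complex.mul_im, Complex.zero_im] at him'
      have : (p %ₘ q2).coeff 1 * z.im = 0 := by
        simpa using him'
      exact (mul_eq_zero.mp this).resolve_right him
    have hc0 : (p %ₘ q2).coeff 0 = 0 := by
      have hre' := congrArg Complex.re hremz
      simp only [Complex.add_re, Complex.mul_re, Complex.zero_re] at hre'
      have : (p %ₘ q2).coeff 1 * z.re + (p %ₘ q2).coeff 0 = 0 := by
        simpa using hre'
      rw [hc1] at this; linarith
    have hrem0 : p %ₘ q2 = 0 := by rw [hremform, hc1, hc0]; simp
    set g := p /ₘ q2 with hgdef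
    have hpg : p = q2 * g := by
      conv_lhs => rw [← hdiv]
      rw [hrem0, zero_add]
    have hq2pos : ∀ x : ℝ, 0 < q2.eval x := by
      intro x
      rw [hq2]
      simp only [Polynomial.eval_add, Polynomial.eval_pow, Polynomial.eval_sub,
        Polynomial.eval_X, Polynomial.eval_C]
      have : z.im ^ 2 > 0 := by positivity
      nlinarith [sq_nonneg (x - z.re)]
    have hgne : g ≠ 0 := by
      intro h0; rw [h0, mul_zero] at hpg; exact hp0 hpg
    have hgnn : ∀ x : ℝ, 0 ≤ g.eval x := by
      intro x
      have h1 := hp x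
      rw [hpg, Polynomial.eval_mul] at h1
      nlinarith [hq2pos x]
    have hdegg : g.natDegree < N := by
      have hq2ne : q2 ≠ 0 := hq2monic.ne_zero
      have : p.natDegree = 2 + g.natDegree := by
        rw [hpg, Polynomial.natDegree_mul hq2ne hgne, hq2deg]
      omega
    obtain ⟨σ, τ, hστ⟩ := ih g.natDegree hdegg g le_rfl hgnn
    refine ⟨(X - C z.re) * σ - (C z.im) * τ, (X - C z.re) * τ + (C z.im) * σ, ?_⟩
    rw [hpg, hστ, hq2]; ring

theorem sos_of_nonneg (p : Polynomial ℝ) (hp : ∀ x : ℝ, 0 ≤ p.eval x) :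
    ∃ σ τ : Polynomial ℝ, p = σ ^ 2 + τ ^ 2 :=
  sos_aux p.natDegree p le_rfl hp
open Polynomial

private theorem coeff_sq_two_mul (σ : Polynomial ℝ) (d : ℕ) (hd : σ.natDegree ≤ d) :
    (σ ^ 2).coeff (2 * d) = (σ.coeff d) ^ 2 := by
  rw [sq, Polynomial.coeff_mul]
  rw [Finset.sum_eq_single ((d, d) : ℕ × ℕ)]
  · exact (sq (σ.coeff d)).symm
  · rintro ⟨b1, b2⟩ hb hne
    rw [Finset.HasAntidiagonal.mem_antidiagonal] at hb
    have : d < b1 ∨ d < b2 := by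
      rcases Prod.mk.injEq .. ▸ (fun h => hne h : ¬((b1, b2) = (d, d))) with h
      by_contra hc
      push_neg at hc
      exact hne (by
        have : b1 = d ∧ b2 = d := by omega
        simp [this.1, this.2])
    rcases this with h | h
    · rw [Polynomial.coeff_eq_zero_of_natDegree_lt (lt_of_le_of_lt hd h), zero_mul]
    · rw [Polynomial.coeff_eq_zero_of_natDegree_lt (lt_of_le_of_lt hd h), mul_zero]
  · intro h
    exact absurd (Finset.HasAntidiagonal.mem_antidiagonal.mpr (by omega)) h

private theorem two_natDegree_le_of_sq_add_sq (p σ τ : Polynomial ℝ) (h : p = σ ^ 2 + τ ^ 2) :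
    2 * σ.natDegree ≤ p.natDegree := by
  by_cases hσ : σ = 0
  · simp [hσ]
  set d := max σ.natDegree τ.natDegree with hd
  have hσd : σ.natDegree ≤ d := le_max_left _ _
  have hτd : τ.natDegree ≤ d := le_max_right _ _
  have hcd : p.coeff (2 * d) = (σ.coeff d) ^ 2 + (τ.coeff d) ^ 2 := by
    rw [h, Polynomial.coeff_add, coeff_sq_two_mul σ d hσd, coeff_sq_two_mul τ d hτd]
  have hne : p.coeff (2 * d) ≠ 0 := by
    rw [hcd]
    rcases eq_or_lt_of_le hσd with hσeq | hσlt
    · have h1 : σ.coeff d ≠ 0 := by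
        rw [← hσeq]
        exact Polynomial.leadingCoeff_ne_zero.mpr hσ
      intro hzero
      nlinarith [sq_nonneg (σ.coeff d), sq_nonneg (τ.coeff d), sq_pos_of_ne_zero h1]
    · have hτeq : τ.natDegree = d := by omega
      have hτ : τ ≠ 0 := by
        intro h0
        rw [h0, Polynomial.natDegree_zero] at hτeq
        omega
      have h1 : τ.coeff d ≠ 0 := by
        rw [← hτeq]
        exact Polynomial.leadingCoeff_ne_zero.mpr hτ
      intro hzero
      nlinarith [sq_nonneg (σ.coeff d), sq_nonneg (τ.coeff d), sq_pos_of_ne_zero h1]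
  calc 2 * σ.natDegree ≤ 2 * d := by omega
    _ ≤ p.natDegree := Polynomial.le_natDegree_of_ne_zero hne

private theorem pair_sum (n : ℕ) (M : Fin n → Fin n → ℝ) (h : ℕ → ℝ) :
    ∑ s ∈ Finset.range (2 * n - 1),
      (∑ i : Fin n, ∑ j : Fin n,
        (C (M i j) * X ^ ((i : ℕ) + (j : ℕ)) : Polynomial ℝ)).coeff s * h s
    = ∑ i : Fin n, ∑ j : Fin n, M i j * h ((i : ℕ) + (j : ℕ)) := by
  simp only [Polynomial.finset_sum_coeff, Polynomial.coeff_C_mul, Polynomial.coeff_X_pow,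
    mul_ite, mul_one, mul_zero, Finset.sum_mul, Finset.sum_ite_eq, ite_mul, zero_mul]
  rw [Finset.sum_comm]
  apply Finset.sum_congr rfl
  intro i _
  rw [Finset.sum_comm]
  apply Finset.sum_congr rfl
  intro j _
  have hmem : (i : ℕ) + (j : ℕ) ∈ Finset.range (2 * n - 1) := by
    have := i.isLt; have := j.isLt
    rw [Finset.mem_range]; omega
  rw [Finset.sum_ite_eq' (Finset.range (2 * n - 1)) ((i : ℕ) + (j : ℕ)) (fun s => M i j * h s)]
  rw [if_pos hmem]

private theorem sq_poly_rep (n : ℕ) (σ : Polynomial ℝ) (hσ : σ.natDegree < n) :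
    ∑ i : Fin n, ∑ j : Fin n,
      (C (σ.coeff i * σ.coeff j) * X ^ ((i : ℕ) + (j : ℕ)) : Polynomial ℝ) = σ ^ 2 := by
  have hrep : σ = ∑ i : Fin n, C (σ.coeff i) * X ^ (i : ℕ) := by
    conv_lhs => rw [Polynomial.as_sum_range' σ n hσ]
    rw [← Fin.sum_univ_eq_sum_range (fun i => (Polynomial.monomial i) (σ.coeff i)) n]
    apply Finset.sum_congr rfl
    intro i _
    rw [Polynomial.C_mul_X_pow_eq_monomial]
  conv_rhs => rw [hrep]
  rw [sq, Finset.sum_mul_sum]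
  apply Finset.sum_congr rfl
  intro i _
  apply Finset.sum_congr rfl
  intro j _
  rw [pow_add, _root_.map_mul]
  ring

private theorem fin_pad_sum {E : Type*} {M : Type*} [AddCommMonoid M] [DecidableEq E]
    (t : Finset E) (D : ℕ) (hc : t.card ≤ D) (F : E → M) :
    ∑ i : Fin D, (if h : (i : ℕ) < t.card then F ((t.equivFin.symm ⟨(i : ℕ), h⟩ : ↑t) : E) else 0)
      = ∑ y ∈ t, F y := by
  classical
  set c := t.card with hcc
  set e := t.equivFin with he
  set g : Fin D → M := fun i =>
    (if h : (i : ℕ) < c then F ((e.symm ⟨(i : ℕ), h⟩ : ↑t) : E) else 0) with hg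
  have emb : Fin c ↪ Fin D := Fin.castLEEmb hc
  have h1 : ∑ i : Fin D, g i = ∑ i ∈ Finset.univ.map (Fin.castLEEmb hc), g i := by
    symm
    apply Finset.sum_subset (Finset.subset_univ _)
    intro i _ hi
    have : ¬ ((i : ℕ) < c) := by
      intro hlt
      apply hi
      rw [Finset.mem_map]
      exact ⟨⟨(i : ℕ), hlt⟩, Finset.mem_univ _, by ext; simp⟩
    simp [hg, this]
  have h2 : ∑ i ∈ Finset.univ.map (Fin.castLEEmb hc), g i
      = ∑ j : Fin c, F ((e.symm j : ↑t) : E) := by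
    rw [Finset.sum_map]
    apply Finset.sum_congr rfl
    intro j _
    have hj : ((Fin.castLEEmb hc j : Fin D) : ℕ) < c := by simp
    rw [hg]
    simp only []
    rw [dif_pos hj]
    have hjj : (⟨((Fin.castLEEmb hc j : Fin D) : ℕ), hj⟩ : Fin c) = j := by
      ext; simp
    rw [hjj]
  have h3 : ∑ j : Fin c, F ((e.symm j : ↑t) : E) = ∑ y ∈ t, F y := by
    rw [Equiv.sum_comp e.symm (fun y : ↑t => F (y : E))]
    exact Finset.sum_coe_sort t F
  rw [h1, h2, h3]

private theorem isCompact_convexHull' {E : Type*} [NormedAddCommGroup E] [NormedSpace ℝ E]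
    [FiniteDimensional ℝ E] {s : Set E} (hne : s.Nonempty) (hs : IsCompact s) :
    IsCompact (convexHull ℝ s) := by
  classical
  obtain ⟨x₀, hx₀⟩ := hne
  set D := Module.finrank ℝ E + 1 with hD
  set F : ((Fin D → ℝ) × (Fin D → E)) → E := fun q => ∑ i : Fin D, q.1 i • q.2 i with hF
  set K : Set ((Fin D → ℝ) × (Fin D → E)) :=
    (stdSimplex ℝ (Fin D)) ×ˢ (Set.univ.pi fun _ : Fin D => s) with hK
  have hKc : IsCompact K := (isCompact_stdSimplex (𝕜 := ℝ) (ι := Fin D)).prod (isCompact_univ_pi fun _ => hs)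
  have hFc : Continuous F := by
    apply continuous_finset_sum
    intro i _
    exact ((continuous_apply i).comp continuous_fst).smul
      ((continuous_apply i).comp continuous_snd)
  have heq : convexHull ℝ s = F '' K := by
    apply Set.Subset.antisymm
    · intro x hx
      rw [convexHull_eq_union] at hx
      simp only [Set.mem_iUnion] at hx
      obtain ⟨t, hts, hai, hxt⟩ := hx
      rw [Finset.convexHull_eq] at hxt
      obtain ⟨w, hw0, hw1, hwx⟩ := hxt
      have hcard : t.card ≤ D := by
        have h1 := hai.card_le_finrank_succ
        rw [Fintype.card_coe] at h1
        exact le_trans h1 (Nat.add_le_add_right (Submodule.finrank_le _) 1)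
      set z' : Fin D → E := fun i =>
        if h : (i : ℕ) < t.card then ((t.equivFin.symm ⟨(i : ℕ), h⟩ : ↑t) : E) else x₀ with hz'
      set w' : Fin D → ℝ := fun i =>
        if h : (i : ℕ) < t.card then w ((t.equivFin.symm ⟨(i : ℕ), h⟩ : ↑t) : E) else 0 with hw'
      refine ⟨(w', z'), ⟨⟨fun i => ?_, ?_⟩, fun i _ => ?_⟩, ?_⟩
      · rw [hw']
        by_cases h : (i : ℕ) < t.card
        · simp only [dif_pos h]
          exact hw0 _ (Finset.coe_mem _)
        · simp only [dif_neg h]; exact le_refl 0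
      · rw [hw']
        have := fin_pad_sum t D hcard w
        simp only at this ⊢
        rw [this]; exact hw1
      · rw [hz']
        by_cases h : (i : ℕ) < t.card
        · simp only [dif_pos h]
          exact hts (Finset.coe_mem _)
        · simp only [dif_neg h]; exact hx₀
      · rw [hF]
        simp only
        have hsum : ∑ i : Fin D, w' i • z' i
            = ∑ i : Fin D, (if h : (i : ℕ) < t.card then
                (fun y : E => w y • y) ((t.equivFin.symm ⟨(i : ℕ), h⟩ : ↑t) : E) else 0) := by
          apply Finset.sum_congr rfl
          intro i _
          rw [hw', hz']
          by_cases h : (i : ℕ) < t.card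
          · simp only [dif_pos h]
          · simp only [dif_neg h, zero_smul]
        rw [hsum, fin_pad_sum t D hcard (fun y : E => w y • y)]
        rw [← hwx, Finset.centerMass_eq_of_sum_1 _ _ hw1]
        simp
    · rintro x ⟨⟨w, z⟩, ⟨hw, hz⟩, rfl⟩
      have h1 : Finset.univ.centerMass w z = F (w, z) := by
        rw [Finset.centerMass_eq_of_sum_1 _ _ hw.2]
      rw [← h1]
      exact Finset.centerMass_mem_convexHull _ (fun i _ => hw.1 i)
        (by rw [hw.2]; exact one_pos) (fun i _ => hz i (Set.mem_univ i))
  rw [heq]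
  exact hKc.image hFc
open Polynomial

noncomputable def wvec (n : ℕ) (q : ℝ × ℝ) : Fin n → ℝ :=
  fun i => q.1 ^ (n - 1 - (i : ℕ)) * q.2 ^ (i : ℕ)

noncomputable def wnorm (n : ℕ) (q : ℝ × ℝ) : ℝ := ∑ i : Fin n, (wvec n q i) ^ 2

noncomputable def gmap (n : ℕ) (q : ℝ × ℝ) : Fin n → Fin n → ℝ :=
  fun i j => (wnorm n q)⁻¹ * (wvec n q i * wvec n q j)

theorem wnorm_pos (n : ℕ) (hn : 1 ≤ n) (q : ℝ × ℝ) (hq : q ≠ 0) : 0 < wnorm n q := by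
  apply Finset.sum_pos'
  · intro i _; positivity
  · have hcases : q.1 ≠ 0 ∨ q.2 ≠ 0 := by
      by_contra hc
      push_neg at hc
      exact hq (Prod.ext hc.1 hc.2)
    rcases hcases with h1 | h2
    · refine ⟨⟨0, by omega⟩, Finset.mem_univ _, ?_⟩
      have : wvec n q ⟨0, by omega⟩ = q.1 ^ (n - 1) := by
        simp [wvec]
      rw [this]
      positivity
    · refine ⟨⟨n - 1, by omega⟩, Finset.mem_univ _, ?_⟩
      have : wvec n q ⟨n - 1, by omega⟩ = q.2 ^ (n - 1) := by
        simp [wvec]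
      rw [this]
      positivity

theorem gmap_trace (n : ℕ) (hn : 1 ≤ n) (q : ℝ × ℝ) (hq : q ≠ 0) :
    ∑ i : Fin n, gmap n q i i = 1 := by
  have h1 : ∑ i : Fin n, gmap n q i i = (wnorm n q)⁻¹ * wnorm n q := by
    rw [wnorm, Finset.mul_sum]
    apply Finset.sum_congr rfl
    intro i _
    rw [gmap, wnorm]
    ring
  rw [h1, inv_mul_cancel₀ (ne_of_gt (wnorm_pos n hn q hq))]

theorem gmap_continuousOn (n : ℕ) (hn : 1 ≤ n) :
    ContinuousOn (gmap n) (Metric.sphere (0 : ℝ × ℝ) 1) := by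
  have hwv : ∀ i : Fin n, Continuous (fun q : ℝ × ℝ => wvec n q i) := by
    intro i
    exact (continuous_fst.pow _).mul (continuous_snd.pow _)
  have hwn : Continuous (fun q : ℝ × ℝ => wnorm n q) := by
    apply continuous_finset_sum
    intro i _
    exact (hwv i).pow 2
  have hne : ∀ q ∈ Metric.sphere (0 : ℝ × ℝ) 1, wnorm n q ≠ 0 := by
    intro q hq
    have : q ≠ 0 := by
      intro h0
      rw [h0] at hq
      simp at hq
    exact ne_of_gt (wnorm_pos n hn q this)
  rw [show gmap n = fun q => gmap n q from rfl]
  apply continuousOn_pi.mpr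
  intro i
  apply continuousOn_pi.mpr
  intro j
  exact (hwn.continuousOn.inv₀ hne).mul
    (((hwv i).mul (hwv j)).continuousOn)

theorem hankel_mem_hull (m : ℕ) (hm : 1 ≤ m) (Hr : Fin (m * 2) → Fin (m * 2) → ℝ)
    (hH : ∀ i j k l : Fin (m * 2), (i : ℕ) + (j : ℕ) = (k : ℕ) + (l : ℕ) → Hr i j = Hr k l)
    (hpsd : ∀ x : Fin (m * 2) → ℝ, 0 ≤ ∑ i : Fin (m * 2), ∑ j : Fin (m * 2),
      x i * x j * Hr i j)
    (htr : ∑ i : Fin (m * 2), Hr i i = 1) :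
    Hr ∈ convexHull ℝ (gmap (m * 2) '' Metric.sphere (0 : ℝ × ℝ) 1) := by
  classical
  have hn1 : 1 ≤ m * 2 := by omega
  set S : Set (Fin (m * 2) → Fin (m * 2) → ℝ) :=
    gmap (m * 2) '' Metric.sphere (0 : ℝ × ℝ) 1 with hS
  have hSne : S.Nonempty := by
    refine ⟨gmap (m * 2) ((1 : ℝ), (0 : ℝ)), Set.mem_image_of_mem _ ?_⟩
    rw [mem_sphere_zero_iff_norm]
    simp [Prod.norm_def]
  have hScomp : IsCompact S :=
    (isCompact_sphere (0 : ℝ × ℝ) 1).image_of_continuousOn (gmap_continuousOn (m * 2) hn1)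
  have hhullcomp : IsCompact (convexHull ℝ S) := isCompact_convexHull' hSne hScomp
  by_contra hnot
  obtain ⟨f, u, hfu, huf⟩ :=
    geometric_hahn_banach_closed_point (convex_convexHull ℝ S) hhullcomp.isClosed hnot
  -- matrix of the functional
  set ev : Fin (m * 2) → Fin (m * 2) → (Fin (m * 2) → Fin (m * 2) → ℝ) :=
    fun i j => fun k l => (if i = k then (1 : ℝ) else 0) * (if j = l then 1 else 0) with hev
  have hexpand : ∀ X : Fin (m * 2) → Fin (m * 2) → ℝ,
      X = ∑ i : Fin (m * 2), ∑ j : Fin (m * 2), X i j • ev i j := by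
    intro X
    funext k l
    symm
    calc (∑ i : Fin (m * 2), ∑ j : Fin (m * 2), X i j • ev i j) k l
        = ∑ i : Fin (m * 2), ∑ j : Fin (m * 2),
            X i j * ((if i = k then (1 : ℝ) else 0) * (if j = l then 1 else 0)) := by
          simp only [Finset.sum_apply, Pi.smul_apply, smul_eq_mul, hev]
      _ = ∑ i : Fin (m * 2), ∑ j : Fin (m * 2),
            (if j = l then (if i = k then X i j else 0) else 0) := by
          apply Finset.sum_congr rfl
          intro i _
          apply Finset.sum_congr rfl
          intro j _
          split_ifs <;> ring
      _ = ∑ i : Fin (m * 2), (if i = k then X i l else 0) := by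
          apply Finset.sum_congr rfl
          intro i _
          rw [Finset.sum_ite_eq' Finset.univ l (fun j => if i = k then X i j else 0)]
          rw [if_pos (Finset.mem_univ l)]
      _ = X k l := by
          rw [Finset.sum_ite_eq' Finset.univ k (fun i => X i l)]
          rw [if_pos (Finset.mem_univ k)]
  have hf : ∀ X : Fin (m * 2) → Fin (m * 2) → ℝ,
      f X = ∑ i : Fin (m * 2), ∑ j : Fin (m * 2), X i j * f (ev i j) := by
    intro X
    conv_lhs => rw [hexpand X]
    rw [_root_.map_sum]
    apply Finset.sum_congr rfl
    intro i _
    rw [_root_.map_sum]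
    apply Finset.sum_congr rfl
    intro j _
    rw [_root_.map_smul, smul_eq_mul]
  set A : Fin (m * 2) → Fin (m * 2) → ℝ :=
    fun i j => (if i = j then u else 0) - f (ev i j) with hA
  have hpair : ∀ X : Fin (m * 2) → Fin (m * 2) → ℝ,
      ∑ i : Fin (m * 2), ∑ j : Fin (m * 2), A i j * X i j
        = u * (∑ i : Fin (m * 2), X i i) - f X := by
    intro X
    have hterm : ∀ i j, A i j * X i j
        = (if i = j then u * X i j else 0) - f (ev i j) * X i j := by
      intro i j
      rw [hA]
      simp only [ite_mul, zero_mul, sub_mul]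
    calc ∑ i : Fin (m * 2), ∑ j : Fin (m * 2), A i j * X i j
        = ∑ i : Fin (m * 2), ∑ j : Fin (m * 2),
            ((if i = j then u * X i j else 0) - f (ev i j) * X i j) := by
          apply Finset.sum_congr rfl
          intro i _
          apply Finset.sum_congr rfl
          intro j _
          exact hterm i j
      _ = (∑ i : Fin (m * 2), ∑ j : Fin (m * 2), (if i = j then u * X i j else 0))
            - ∑ i : Fin (m * 2), ∑ j : Fin (m * 2), f (ev i j) * X i j := by
          simp only [Finset.sum_sub_distrib]
      _ = u * (∑ i : Fin (m * 2), X i i) - f X := by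
          congr 1
          · rw [Finset.mul_sum]
            apply Finset.sum_congr rfl
            intro i _
            rw [Finset.sum_ite_eq Finset.univ i (fun j => u * X i j)]
            rw [if_pos (Finset.mem_univ i)]
          · rw [hf X]
            apply Finset.sum_congr rfl
            intro i _
            apply Finset.sum_congr rfl
            intro j _
            rw [mul_comm]
  have hgood : ∀ q ∈ Metric.sphere (0 : ℝ × ℝ) 1,
      0 ≤ ∑ i : Fin (m * 2), ∑ j : Fin (m * 2), A i j * gmap (m * 2) q i j := by
    intro q hq
    have hq0 : q ≠ 0 := by
      intro h0; rw [h0] at hq; simp at hq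
    rw [hpair, gmap_trace (m * 2) hn1 q hq0, mul_one]
    have : f (gmap (m * 2) q) < u :=
      hfu _ (subset_convexHull ℝ S (Set.mem_image_of_mem _ hq))
    linarith
  have hbad : ∑ i : Fin (m * 2), ∑ j : Fin (m * 2), A i j * Hr i j < 0 := by
    rw [hpair, htr, mul_one]
    linarith
  -- the polynomial
  set p : Polynomial ℝ := ∑ i : Fin (m * 2), ∑ j : Fin (m * 2),
    C (A i j) * X ^ ((i : ℕ) + (j : ℕ)) with hp
  have hpeval : ∀ t : ℝ, p.eval t
      = ∑ i : Fin (m * 2), ∑ j : Fin (m * 2), A i j * t ^ ((i : ℕ) + (j : ℕ)) := by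
    intro t
    rw [hp]
    simp [Polynomial.eval_finset_sum]
  have hpnn : ∀ t : ℝ, 0 ≤ p.eval t := by
    intro t
    set lt := ‖((1 : ℝ), t)‖ with hlt
    have hlt1 : 1 ≤ lt := by
      have := norm_fst_le ((1 : ℝ), t)
      exact le_trans (le_of_eq (by simp)) this
    have hltpos : 0 < lt := by linarith
    set q : ℝ × ℝ := lt⁻¹ • ((1 : ℝ), t) with hq
    have hqsph : q ∈ Metric.sphere (0 : ℝ × ℝ) 1 := by
      rw [mem_sphere_zero_iff_norm, hq, norm_smul, norm_inv, Real.norm_eq_abs,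
        abs_of_pos hltpos, ← hlt, inv_mul_cancel₀ (ne_of_gt hltpos)]
    have hq1 : q.1 = lt⁻¹ := by simp [hq]
    have hq2 : q.2 = lt⁻¹ * t := by simp [hq]
    have hwv : ∀ i : Fin (m * 2), wvec (m * 2) q i = lt⁻¹ ^ (m * 2 - 1) * t ^ (i : ℕ) := by
      intro i
      rw [wvec, hq1, hq2, mul_pow, ← mul_assoc, ← pow_add]
      congr 2
      have := i.isLt
      omega
    have hq0 : q ≠ 0 := by
      intro h0; rw [h0] at hqsph; simp at hqsph
    have hwpos : 0 < wnorm (m * 2) q := wnorm_pos (m * 2) hn1 q hq0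
    have key : ∑ i : Fin (m * 2), ∑ j : Fin (m * 2), A i j * gmap (m * 2) q i j
        = (wnorm (m * 2) q)⁻¹ * (lt⁻¹ ^ (m * 2 - 1)) ^ 2 * p.eval t := by
      rw [hpeval, Finset.mul_sum]
      apply Finset.sum_congr rfl
      intro i _
      rw [Finset.mul_sum]
      apply Finset.sum_congr rfl
      intro j _
      rw [gmap, hwv i, hwv j, pow_add]
      ring
    have h0 := hgood q hqsph
    rw [key] at h0
    have hfacpos : 0 < (wnorm (m * 2) q)⁻¹ * (lt⁻¹ ^ (m * 2 - 1)) ^ 2 := by positivity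
    by_contra hneg
    push_neg at hneg
    nlinarith
  obtain ⟨σ, τ, hστ⟩ := sos_of_nonneg p hpnn
  have hdegp : p.natDegree ≤ 2 * (m * 2) - 2 := by
    rw [hp]
    apply Polynomial.natDegree_sum_le_of_forall_le
    intro i _
    apply Polynomial.natDegree_sum_le_of_forall_le
    intro j _
    have h1 : (C (A i j) * X ^ ((i : ℕ) + (j : ℕ)) : Polynomial ℝ).natDegree
        ≤ (i : ℕ) + (j : ℕ) := by
      apply le_trans (Polynomial.natDegree_mul_le)
      simp
    have hi := i.isLt
    have hj := j.isLt
    omega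
  have hσdeg : σ.natDegree < m * 2 := by
    have := two_natDegree_le_of_sq_add_sq p σ τ hστ
    omega
  have hτdeg : τ.natDegree < m * 2 := by
    have := two_natDegree_le_of_sq_add_sq p τ σ (by rw [hστ]; ring)
    omega
  -- Hankel representative function
  set hfun : ℕ → ℝ := fun s =>
    if hs : s < 2 * (m * 2) - 1 then
      Hr ⟨min s (m * 2 - 1), by omega⟩ ⟨s - min s (m * 2 - 1), by omega⟩
    else 0 with hhfun
  have hrepH : ∀ i j : Fin (m * 2), Hr i j = hfun ((i : ℕ) + (j : ℕ)) := by
    intro i j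
    have hi := i.isLt
    have hj := j.isLt
    have hij : (i : ℕ) + (j : ℕ) < 2 * (m * 2) - 1 := by omega
    rw [hhfun]
    simp only []
    rw [dif_pos hij]
    apply hH
    show (i : ℕ) + (j : ℕ) = min ((i : ℕ) + (j : ℕ)) (m * 2 - 1)
      + (((i : ℕ) + (j : ℕ)) - min ((i : ℕ) + (j : ℕ)) (m * 2 - 1))
    omega
  have hquad : ∀ σ' : Polynomial ℝ, σ'.natDegree < m * 2 →
      0 ≤ ∑ s ∈ Finset.range (2 * (m * 2) - 1), (σ' ^ 2).coeff s * hfun s := by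
    intro σ' hσ'
    rw [← sq_poly_rep (m * 2) σ' hσ', pair_sum]
    have heq : ∑ i : Fin (m * 2), ∑ j : Fin (m * 2),
        σ'.coeff (i : ℕ) * σ'.coeff (j : ℕ) * hfun ((i : ℕ) + (j : ℕ))
        = ∑ i : Fin (m * 2), ∑ j : Fin (m * 2),
        σ'.coeff (i : ℕ) * σ'.coeff (j : ℕ) * Hr i j := by
      apply Finset.sum_congr rfl
      intro i _
      apply Finset.sum_congr rfl
      intro j _
      rw [← hrepH i j]
    rw [heq]
    exact hpsd (fun i => σ'.coeff (i : ℕ))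
  have hsplit : ∑ i : Fin (m * 2), ∑ j : Fin (m * 2), A i j * Hr i j
      = (∑ s ∈ Finset.range (2 * (m * 2) - 1), (σ ^ 2).coeff s * hfun s)
        + (∑ s ∈ Finset.range (2 * (m * 2) - 1), (τ ^ 2).coeff s * hfun s) := by
    have h1 : ∑ i : Fin (m * 2), ∑ j : Fin (m * 2), A i j * Hr i j
        = ∑ i : Fin (m * 2), ∑ j : Fin (m * 2), A i j * hfun ((i : ℕ) + (j : ℕ)) := by
      apply Finset.sum_congr rfl
      intro i _
      apply Finset.sum_congr rfl
      intro j _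
      rw [hrepH i j]
    rw [h1, ← pair_sum (m * 2) A hfun, ← hp]
    rw [hστ]
    rw [← Finset.sum_add_distrib]
    apply Finset.sum_congr rfl
    intro s _
    rw [Polynomial.coeff_add]
    ring
  have h2 := hquad σ hσdeg
  have h3 := hquad τ hτdeg
  rw [hsplit] at hbad
  linarith

private theorem outer_psd (k : ℕ) (v : Fin k → ℝ) :
    (Matrix.of fun i j : Fin k => ((v i * v j : ℝ) : ℂ)).PosSemidef := by
  have heq : (Matrix.of fun i j : Fin k => ((v i * v j : ℝ) : ℂ))
      = (Matrix.of fun (_ : Fin 1) (j : Fin k) => ((v j : ℝ) : ℂ))ᴴ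
        * (Matrix.of fun (_ : Fin 1) (j : Fin k) => ((v j : ℝ) : ℂ)) := by
    ext i j
    simp [Matrix.mul_apply, Matrix.conjTranspose_apply, Complex.conj_ofReal]
  rw [heq]
  exact Matrix.posSemidef_conjTranspose_mul_self _

private theorem factor_wvec (m : ℕ) (q : ℝ × ℝ) (k : Fin m) (j : Fin 2) :
    wvec (m * 2) q (finProdFinEquiv (k, j))
      = wvec m (q.1 ^ 2, q.2 ^ 2) k * wvec 2 q j := by
  have hk := k.isLt
  have hj := j.isLt
  have hval : ((finProdFinEquiv (k, j) : Fin (m * 2)) : ℕ) = (j : ℕ) + 2 * (k : ℕ) := rfl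
  rw [wvec, wvec, wvec, hval]
  simp only []
  rw [← pow_mul, ← pow_mul]
  rw [show m * 2 - 1 - ((j : ℕ) + 2 * (k : ℕ))
      = (m - 1 - (k : ℕ)) * 2 + (2 - 1 - (j : ℕ)) from by omega]
  rw [show (j : ℕ) + 2 * (k : ℕ) = (k : ℕ) * 2 + (j : ℕ) from by omega]
  rw [pow_add, pow_add]
  ring

private theorem factor_wnorm (m : ℕ) (q : ℝ × ℝ) :
    wnorm (m * 2) q = wnorm m (q.1 ^ 2, q.2 ^ 2) * wnorm 2 q := by
  rw [wnorm, wnorm, wnorm]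
  rw [← Equiv.sum_comp (finProdFinEquiv : Fin m × Fin 2 ≃ Fin (m * 2))
    (fun s => (wvec (m * 2) q s) ^ 2)]
  rw [Fintype.sum_prod_type]
  rw [Finset.sum_mul_sum]
  apply Finset.sum_congr rfl
  intro k _
  apply Finset.sum_congr rfl
  intro j _
  rw [factor_wvec m q k j]
  ring

/-- Every positive semidefinite Hankel matrix of size 2m with trace 1 is separable
as a state on ℂᵐ ⊗ ℂ². -/
theorem stmt_10 {m : ℕ} (Hm : Matrix (Fin (m * 2)) (Fin (m * 2)) ℂ)
    (hHankel : ∀ i j k l : Fin (m * 2),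
      (i : ℕ) + (j : ℕ) = (k : ℕ) + (l : ℕ) → Hm i j = Hm k l)
    (hpsd : Hm.PosSemidef) (htr : Hm.trace = 1) :
    ∃ (r : ℕ) (p : Fin r → ℝ) (ρA : Fin r → Matrix (Fin m) (Fin m) ℂ)
      (ρB : Fin r → Matrix (Fin 2) (Fin 2) ℂ),
      (∀ i, 0 ≤ p i) ∧ (∑ i, p i = 1) ∧
      (∀ i, (ρA i).PosSemidef ∧ (ρA i).trace = 1) ∧
      (∀ i, (ρB i).PosSemidef ∧ (ρB i).trace = 1) ∧
      Hm.submatrix finProdFinEquiv finProdFinEquiv =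
        ∑ i, (p i : ℂ) • Matrix.kroneckerMap (· * ·) (ρA i) (ρB i) := by
  classical
  rcases Nat.eq_zero_or_pos m with hm0 | hm
  · exfalso
    subst hm0
    rw [Matrix.trace] at htr
    simp at htr
  set Hr : Fin (m * 2) → Fin (m * 2) → ℝ := fun i j => (Hm i j).re with hHr
  have hreal : ∀ i j : Fin (m * 2), Hm i j = ((Hr i j : ℝ) : ℂ) := by
    intro i j
    have hsym : Hm j i = Hm i j := hHankel j i i j (by omega)
    have hherm := hpsd.1
    have h1 : (starRingEnd ℂ) (Hm j i) = Hm i j := by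
      have := congrFun (congrFun hherm i) j
      rw [Matrix.conjTranspose_apply] at this
      exact this
    rw [hsym] at h1
    have him : (Hm i j).im = 0 := Complex.conj_eq_iff_im.mp h1
    apply Complex.ext
    · simp [hHr]
    · simp [hHr, him]
  have hHrHankel : ∀ i j k l : Fin (m * 2),
      (i : ℕ) + (j : ℕ) = (k : ℕ) + (l : ℕ) → Hr i j = Hr k l := by
    intro i j k l h
    rw [hHr]
    simp only []
    rw [hHankel i j k l h]
  have hpsdR : ∀ x : Fin (m * 2) → ℝ,
      0 ≤ ∑ i : Fin (m * 2), ∑ j : Fin (m * 2), x i * x j * Hr i j := by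
    intro x
    have h1 := hpsd.dotProduct_mulVec_nonneg (fun i => ((x i : ℝ) : ℂ))
    have hform : (star (fun i => ((x i : ℝ) : ℂ))) ⬝ᵥ
        Hm.mulVec (fun i => ((x i : ℝ) : ℂ))
        = ((∑ i : Fin (m * 2), ∑ j : Fin (m * 2), x i * x j * Hr i j : ℝ) : ℂ) := by
      rw [dotProduct]
      push_cast
      apply Finset.sum_congr rfl
      intro i _
      rw [Matrix.mulVec, dotProduct]
      rw [Finset.mul_sum]
      apply Finset.sum_congr rfl
      intro j _
      rw [hreal i j]
      simp [Pi.star_apply, Complex.conj_ofReal]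
      ring
    rw [hform] at h1
    exact_mod_cast h1
  have htrR : ∑ i : Fin (m * 2), Hr i i = 1 := by
    have : (Hm.trace).re = 1 := by rw [htr]; simp
    rw [Matrix.trace] at this
    rw [← this]
    rw [Complex.re_sum]
    rfl
  have hmem := hankel_mem_hull m hm Hr hHrHankel hpsdR htrR
  rw [convexHull_eq] at hmem
  obtain ⟨ι, t, wt, zt, h0, h1, hz, hcm⟩ := hmem
  rw [Finset.centerMass_eq_of_sum_1 _ _ h1] at hcm
  set e := t.equivFin with he
  have hz' : ∀ i : Fin t.card, ∃ q : ℝ × ℝ,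
      q ∈ Metric.sphere (0 : ℝ × ℝ) 1 ∧ gmap (m * 2) q = zt ((e.symm i : ↑t) : ι) := by
    intro i
    rcases hz _ (e.symm i).2 with ⟨q, hq1, hq2⟩
    exact ⟨q, hq1, hq2⟩
  choose Q hQs hQg using hz'
  have hQ0 : ∀ i, (Q i) ≠ 0 := by
    intro i h0
    have := hQs i
    rw [h0] at this
    simp at this
  set NA : Fin t.card → ℝ := fun i => wnorm m ((Q i).1 ^ 2, (Q i).2 ^ 2) with hNAdef
  set NB : Fin t.card → ℝ := fun i => wnorm 2 (Q i) with hNBdef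
  have hNA : ∀ i : Fin t.card, 0 < NA i := by
    intro i
    apply wnorm_pos m hm
    intro hc
    apply hQ0 i
    have hc1 : (Q i).1 ^ 2 = 0 := congrArg Prod.fst hc
    have hc2 : (Q i).2 ^ 2 = 0 := congrArg Prod.snd hc
    exact Prod.ext (by simpa using sq_eq_zero_iff.mp hc1) (by simpa using sq_eq_zero_iff.mp hc2)
  have hNB : ∀ i : Fin t.card, 0 < NB i := by
    intro i
    exact wnorm_pos 2 (by omega) _ (hQ0 i)
  set uA : Fin t.card → Fin m → ℝ :=
    fun i k => Real.sqrt ((NA i)⁻¹) * wvec m ((Q i).1 ^ 2, (Q i).2 ^ 2) k with huA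
  set uB : Fin t.card → Fin 2 → ℝ :=
    fun i k => Real.sqrt ((NB i)⁻¹) * wvec 2 (Q i) k with huB
  have huAmul : ∀ i k l, uA i k * uA i l
      = (NA i)⁻¹ * (wvec m ((Q i).1 ^ 2, (Q i).2 ^ 2) k * wvec m ((Q i).1 ^ 2, (Q i).2 ^ 2) l) := by
    intro i k l
    rw [huA]
    simp only []
    rw [mul_mul_mul_comm, Real.mul_self_sqrt (inv_nonneg.mpr (le_of_lt (hNA i)))]
  have huBmul : ∀ i k l, uB i k * uB i l
      = (NB i)⁻¹ * (wvec 2 (Q i) k * wvec 2 (Q i) l) := by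
    intro i k l
    rw [huB]
    simp only []
    rw [mul_mul_mul_comm, Real.mul_self_sqrt (inv_nonneg.mpr (le_of_lt (hNB i)))]
  refine ⟨t.card, fun i => wt ((e.symm i : ↑t) : ι),
    fun i => Matrix.of fun k l => ((uA i k * uA i l : ℝ) : ℂ),
    fun i => Matrix.of fun k l => ((uB i k * uB i l : ℝ) : ℂ), ?_, ?_, ?_, ?_, ?_⟩
  · intro i
    exact h0 _ (e.symm i).2
  · calc ∑ i : Fin t.card, wt ((e.symm i : ↑t) : ι)
        = ∑ y : ↑t, wt (y : ι) := Equiv.sum_comp e.symm (fun y : ↑t => wt (y : ι))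
      _ = ∑ y ∈ t, wt y := Finset.sum_coe_sort t wt
      _ = 1 := h1
  · intro i
    constructor
    · exact outer_psd m (uA i)
    · have htrace : (Matrix.of fun k l => ((uA i k * uA i l : ℝ) : ℂ)).trace
          = ((∑ k : Fin m, uA i k * uA i k : ℝ) : ℂ) := by
        rw [Matrix.trace]
        push_cast
        rfl
      rw [htrace]
      have : ∑ k : Fin m, uA i k * uA i k = 1 := by
        have hterm : ∀ k : Fin m, uA i k * uA i k
            = (NA i)⁻¹ * (wvec m ((Q i).1 ^ 2, (Q i).2 ^ 2) k) ^ 2 := by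
          intro k
          rw [huAmul i k k]
          ring
        rw [Finset.sum_congr rfl (fun k _ => hterm k), ← Finset.mul_sum]
        rw [show ∑ k : Fin m, (wvec m ((Q i).1 ^ 2, (Q i).2 ^ 2) k) ^ 2 = NA i from rfl]
        exact inv_mul_cancel₀ (ne_of_gt (hNA i))
      rw [this]
      norm_num
  · intro i
    constructor
    · exact outer_psd 2 (uB i)
    · have htrace : (Matrix.of fun k l => ((uB i k * uB i l : ℝ) : ℂ)).trace
          = ((∑ k : Fin 2, uB i k * uB i k : ℝ) : ℂ) := by
        rw [Matrix.trace]
        push_cast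
        rfl
      rw [htrace]
      have : ∑ k : Fin 2, uB i k * uB i k = 1 := by
        have hterm : ∀ k : Fin 2, uB i k * uB i k
            = (NB i)⁻¹ * (wvec 2 (Q i) k) ^ 2 := by
          intro k
          rw [huBmul i k k]
          ring
        rw [Finset.sum_congr rfl (fun k _ => hterm k), ← Finset.mul_sum]
        rw [show ∑ k : Fin 2, (wvec 2 (Q i) k) ^ 2 = NB i from rfl]
        exact inv_mul_cancel₀ (ne_of_gt (hNB i))
      rw [this]
      norm_num
  · ext x y
    obtain ⟨k, j⟩ := x
    obtain ⟨k', j'⟩ := y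
    rw [Matrix.submatrix_apply]
    set E1 := (finProdFinEquiv (k, j) : Fin (m * 2)) with hE1
    set E2 := (finProdFinEquiv (k', j') : Fin (m * 2)) with hE2
    have hgg : ∀ i : Fin t.card, gmap (m * 2) (Q i) E1 E2
        = (uA i k * uA i k') * (uB i j * uB i j') := by
      intro i
      rw [gmap, hE1, hE2, factor_wvec m (Q i) k j, factor_wvec m (Q i) k' j',
        factor_wnorm m (Q i), huAmul, huBmul]
      rw [mul_inv]
      ring
    have hHrval : Hr E1 E2
        = ∑ i : Fin t.card, wt ((e.symm i : ↑t) : ι) * gmap (m * 2) (Q i) E1 E2 := by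
      rw [← hcm]
      rw [Finset.sum_apply, Finset.sum_apply]
      rw [← Finset.sum_coe_sort t (fun y => (wt y • zt y) E1 E2)]
      rw [← Equiv.sum_comp e.symm (fun y : ↑t => (wt (y : ι) • zt (y : ι)) E1 E2)]
      apply Finset.sum_congr rfl
      intro i _
      rw [Pi.smul_apply, Pi.smul_apply, smul_eq_mul, hQg i]
    rw [hreal E1 E2, hHrval]
    rw [Matrix.sum_apply]
    push_cast
    apply Finset.sum_congr rfl
    intro i _
    rw [Matrix.smul_apply, Matrix.kroneckerMap_apply, Matrix.of_apply, Matrix.of_apply,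
      smul_eq_mul, hgg i]
    push_cast
    ring
end

section
/- Any density matrix ρ ∈ Mₘ(ℂ) ⊗ M₃(ℂ) whose 3×3 blocks all lie in the subspace S₁ = { [[a,a,b],[a,a,b],[b,b,c]] : a,b,c ∈ ℂ } is separable. -/
open Matrix
open scoped ComplexOrder


section FunCalc
variable {n : Type*} [Fintype n] [DecidableEq n] {A : Matrix n n ℂ} (hA : A.IsHermitian)

noncomputable def funCalc (f : ℝ → ℝ) : Matrix n n ℂ :=
  (hA.eigenvectorUnitary : Matrix n n ℂ) * diagonal (fun i => (f (hA.eigenvalues i) : ℂ)) *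
    (star hA.eigenvectorUnitary : Matrix n n ℂ)

lemma funCalc_mul (f g : ℝ → ℝ) :
    funCalc hA f * funCalc hA g = funCalc hA (fun x => f x * g x) := by
  unfold funCalc
  have h1 : (star hA.eigenvectorUnitary : Matrix n n ℂ) * (hA.eigenvectorUnitary : Matrix n n ℂ) = 1 := by
    exact_mod_cast Unitary.coe_star_mul_self hA.eigenvectorUnitary
  have h2 : ∀ X : Matrix n n ℂ, (star hA.eigenvectorUnitary : Matrix n n ℂ) *
      ((hA.eigenvectorUnitary : Matrix n n ℂ) * X) = X := fun X => by
    rw [← Matrix.mul_assoc, h1, Matrix.one_mul]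
  simp only [Matrix.mul_assoc, h2, ← Matrix.mul_assoc (diagonal _) (diagonal _),
    diagonal_mul_diagonal]
  norm_cast

lemma funCalc_conjTranspose (f : ℝ → ℝ) : (funCalc hA f)ᴴ = funCalc hA f := by
  unfold funCalc
  simp [Matrix.conjTranspose_mul, Matrix.diagonal_conjTranspose, Matrix.mul_assoc,
    star_star, Function.comp]
  congr 1
  ext i j
  simp [Matrix.diagonal, Complex.conj_ofReal]
  aesop

lemma funCalc_id : funCalc hA (fun x => x) = A := (hA.spectral_theorem).symm

lemma funCalc_congr {f g : ℝ → ℝ} (h : ∀ i, f (hA.eigenvalues i) = g (hA.eigenvalues i)) :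
    funCalc hA f = funCalc hA g := by
  unfold funCalc
  congr 1
  · congr 1
    ext i j
    by_cases hij : i = j <;> simp [Matrix.diagonal, hij, h]
end FunCalc


set_option linter.unusedSectionVars false
section Aux
variable {n : Type*} [Fintype n] [DecidableEq n]

lemma rankOnePSD (v : n → ℂ) : (Matrix.vecMulVec v (star v)).PosSemidef := by
  rw [Matrix.posSemidef_iff_dotProduct_mulVec]
  constructor
  · ext i j
    simp [Matrix.vecMulVec, Matrix.conjTranspose_apply, mul_comm]
  · intro x
    have : (Matrix.vecMulVec v (star v)) *ᵥ x = (star v ⬝ᵥ x) • v := by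
      ext i
      simp only [Matrix.mulVec, Matrix.vecMulVec_apply, dotProduct, Pi.smul_apply,
        Pi.star_apply, smul_eq_mul, Finset.sum_mul]
      exact Finset.sum_congr rfl fun k _ => by ring

    rw [this]
    have h2 : star x ⬝ᵥ v = star (star v ⬝ᵥ x) := by
      rw [star_dotProduct]
    rw [dotProduct_smul, h2, smul_eq_mul, mul_comm]

    exact star_mul_self_nonneg _

lemma sandwich (M N : Matrix n n ℂ) (x y : n → ℂ) :
    star (M *ᵥ x) ⬝ᵥ (N *ᵥ y) = star x ⬝ᵥ ((Mᴴ * N) *ᵥ y) := by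
  rw [Matrix.star_mulVec, ← Matrix.dotProduct_mulVec, ← Matrix.mulVec_mulVec]

lemma sumOuter (N : Matrix n n ℂ) (d : n → ℂ) :
    N * diagonal d * Nᴴ = ∑ k, d k • Matrix.vecMulVec (fun i => N i k) (star (fun j => N j k)) := by
  ext i j
  simp only [Matrix.sum_apply, Matrix.smul_apply, Matrix.vecMulVec_apply, Pi.star_apply,
    Matrix.mul_apply, Matrix.diagonal_apply, Matrix.conjTranspose_apply, smul_eq_mul]
  refine Finset.sum_congr rfl fun k _ => ?_
  rw [show (∑ x : n, N i x * if x = k then d x else 0) = N i k * d k by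
    rw [Finset.sum_eq_single k] <;> simp +contextual]
  ring


lemma smulPSD (c : ℝ) (hc : 0 ≤ c) {M : Matrix n n ℂ} (hM : M.PosSemidef) :
    ((c : ℂ) • M).PosSemidef := by
  rw [Matrix.posSemidef_iff_dotProduct_mulVec]
  constructor
  · ext i j
    simp only [Matrix.conjTranspose_apply, Matrix.smul_apply, star_mul', smul_eq_mul]
    rw [show (star (c:ℂ)) = (c:ℂ) by exact Complex.conj_ofReal c]
    rw [show star (M j i) = Mᴴ i j from rfl, hM.1]
    try ring
  · intro x
    have := hM.dotProduct_mulVec_nonneg x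
    have h2 : star x ⬝ᵥ ((c : ℂ) • M) *ᵥ x = (c : ℂ) * (star x ⬝ᵥ M *ᵥ x) := by
      rw [Matrix.smul_mulVec, dotProduct_smul, smul_eq_mul]
    rw [h2]
    exact mul_nonneg (by exact_mod_cast hc) this

lemma tracePSD {M : Matrix n n ℂ} (hM : M.PosSemidef) :
    ∃ t : ℝ, 0 ≤ t ∧ M.trace = (t : ℂ) ∧ (t = 0 → M = 0) := by
  obtain ⟨B, rfl⟩ : ∃ B : Matrix n n ℂ, M = Bᴴ * B := by
    open scoped MatrixOrder in
    exact CStarAlgebra.nonneg_iff_eq_star_mul_self.mp (Matrix.nonneg_iff_posSemidef.mpr hM)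
  refine ⟨∑ j, ∑ i, Complex.normSq (B i j), ?_, ?_, ?_⟩
  · refine Finset.sum_nonneg fun j _ => Finset.sum_nonneg fun i _ => Complex.normSq_nonneg _
  · rw [Matrix.trace]
    push_cast
    refine Finset.sum_congr rfl fun j _ => ?_
    simp only [Matrix.diag_apply, Matrix.mul_apply, Matrix.conjTranspose_apply]
    refine Finset.sum_congr rfl fun i _ => ?_
    rw [Complex.normSq_eq_conj_mul_self]
    rfl
  · intro ht
    have : ∀ i j, B i j = 0 := by
      intro i j
      have hle : Complex.normSq (B i j) ≤ 0 := by
        nlinarith [Finset.sum_nonneg (s := Finset.univ) (f := fun i => Complex.normSq (B i j))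
            (fun i _ => Complex.normSq_nonneg (B i j)),
          Finset.single_le_sum (f := fun j' => ∑ i, Complex.normSq (B i j'))
            (fun j' _ => Finset.sum_nonneg fun i _ => Complex.normSq_nonneg _) (Finset.mem_univ j),
          Finset.single_le_sum (f := fun i' => Complex.normSq (B i' j))
            (fun i' _ => Complex.normSq_nonneg _) (Finset.mem_univ i)]
      exact Complex.normSq_eq_zero.mp (le_antisymm hle (Complex.normSq_nonneg _))
    have hB : B = 0 := by ext i j; exact this i j
    rw [hB]
    simp

end Aux


section Decomp
variable {m : ℕ}

lemma mulColZero {P Q B : Matrix (Fin m) (Fin m) ℂ}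
    (hker : ∀ v, P *ᵥ v = 0 → Q *ᵥ v = 0) (hPB : P * B = 0) : Q * B = 0 := by
  ext i j
  have hcol : P *ᵥ (fun k => B k j) = 0 := by
    ext i'
    simpa [Matrix.mulVec, dotProduct, Matrix.mul_apply] using congrFun (congrFun hPB i') j
  have := congrFun (hker _ hcol) i
  simpa [Matrix.mulVec, dotProduct, Matrix.mul_apply] using this

lemma decomp (P Q R : Matrix (Fin m) (Fin m) ℂ)
    (hP : P.PosSemidef) (hQ : Qᴴ = Q) (hR : Rᴴ = R)
    (hform : ∀ v w : Fin m → ℂ,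
      0 ≤ star v ⬝ᵥ P *ᵥ v + star v ⬝ᵥ Q *ᵥ w + star w ⬝ᵥ Q *ᵥ v + star w ⬝ᵥ R *ᵥ w) :
    ∃ (N : Matrix (Fin m) (Fin m) ℂ) (μ : Fin m → ℝ) (Δ : Matrix (Fin m) (Fin m) ℂ),
      Δ.PosSemidef ∧ P = N * Nᴴ ∧ Q = N * diagonal (fun k => (μ k : ℂ)) * Nᴴ ∧
      R = N * diagonal (fun k => ((μ k : ℂ))^2) * Nᴴ + Δ := by
  classical
  have hPH := hP.1
  have evnn : ∀ i, 0 ≤ hPH.eigenvalues i := hP.eigenvalues_nonneg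
  set g : ℝ → ℝ := fun x => if x = 0 then 0 else (Real.sqrt x)⁻¹ with hg
  set χ : ℝ → ℝ := fun x => if x = 0 then 0 else 1 with hχ
  set S := funCalc hPH Real.sqrt with hS
  set Sp := funCalc hPH g with hSp
  set Pi := funCalc hPH χ with hPi
  set Pinv := funCalc hPH (fun x => g x * g x) with hPinv
  -- identities
  have hSS : S * S = P := by
    rw [hS, funCalc_mul, funCalc_congr hPH (g := fun x => x)
      (fun i => Real.mul_self_sqrt (evnn i)), funCalc_id]
  have hSSp : S * Sp = Pi := by
    rw [hS, hSp, funCalc_mul]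
    refine funCalc_congr hPH fun i => ?_
    by_cases h : hPH.eigenvalues i = 0
    · simp [hg, hχ, h]
    · have : Real.sqrt (hPH.eigenvalues i) ≠ 0 :=
        Real.sqrt_ne_zero'.mpr (lt_of_le_of_ne (evnn i) (Ne.symm h))
      simp [hg, hχ, h, this]
  have hSpS : Sp * S = Pi := by
    rw [hS, hSp, funCalc_mul]
    refine funCalc_congr hPH fun i => ?_
    by_cases h : hPH.eigenvalues i = 0
    · simp [hg, hχ, h]
    · have : Real.sqrt (hPH.eigenvalues i) ≠ 0 :=
        Real.sqrt_ne_zero'.mpr (lt_of_le_of_ne (evnn i) (Ne.symm h))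
      simp [hg, hχ, h, this]
  have hSpSp : Sp * Sp = Pinv := by rw [hSp, funCalc_mul]
  have hPPi : P * Pi = P := by
    conv_lhs => rw [← funCalc_id hPH]
    rw [hPi, funCalc_mul]
    rw [funCalc_congr hPH (g := fun x => x) fun i => ?_, funCalc_id]
    by_cases h : hPH.eigenvalues i = 0 <;> simp [hχ, h]
  have hPinvPPinv : Pinv * P * Pinv = Pinv := by
    conv_lhs => rw [← funCalc_id hPH]
    rw [hPinv, funCalc_mul, funCalc_mul]
    refine funCalc_congr hPH fun i => ?_
    by_cases h : hPH.eigenvalues i = 0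
    · simp [hg, h]
    · have h0 : 0 < hPH.eigenvalues i := lt_of_le_of_ne (evnn i) (Ne.symm h)
      have : Real.sqrt (hPH.eigenvalues i) ≠ 0 := Real.sqrt_ne_zero'.mpr h0
      have hsq : Real.sqrt (hPH.eigenvalues i) * Real.sqrt (hPH.eigenvalues i)
          = hPH.eigenvalues i := Real.mul_self_sqrt (evnn i)
      simp only [hg, if_neg h]
      field_simp
      rw [sq, hsq]
  have hSH : Sᴴ = S := funCalc_conjTranspose hPH _
  have hSpH : Spᴴ = Sp := funCalc_conjTranspose hPH _
  have hPiH : Piᴴ = Pi := funCalc_conjTranspose hPH _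
  have hPinvH : Pinvᴴ = Pinv := funCalc_conjTranspose hPH _
  have hfront : ∀ X : Matrix (Fin m) (Fin m) ℂ, S * (Sp * X) = Pi * X := fun X => by
    rw [← Matrix.mul_assoc, hSSp]
  -- kernel lemma
  have hker : ∀ v, P *ᵥ v = 0 → Q *ᵥ v = 0 := by
    intro v hv
    have step1 : ∀ w, star v ⬝ᵥ Q *ᵥ w = 0 := by
      intro w
      set s := star v ⬝ᵥ Q *ᵥ w with hs
      set q := star w ⬝ᵥ R *ᵥ w with hq
      have hq0 : 0 ≤ q := by
        have := hform 0 w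
        simpa [hq] using this
      have hconj : star w ⬝ᵥ Q *ᵥ v = star s := by
        rw [hs, star_dotProduct, Matrix.star_mulVec, hQ]
        simp [star_star, ← Matrix.dotProduct_mulVec]
      have main : ∀ t : ℝ, 0 < t →
          0 ≤ Complex.normSq s * (-2 * t + t^2 * q.re) := by
        intro t ht
        have := hform v ((((-t : ℝ) : ℂ) * star s) • w)
        set c : ℂ := ((-t : ℝ) : ℂ) * star s with hc
        have e1 : star v ⬝ᵥ P *ᵥ v = 0 := by rw [hv]; simp
        have e2 : star v ⬝ᵥ Q *ᵥ (c • w) = c * s := by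
          rw [Matrix.mulVec_smul, dotProduct_smul, hs, smul_eq_mul]
        have e3 : star (c • w) ⬝ᵥ Q *ᵥ v = star c * star s := by
          rw [star_smul, smul_dotProduct, hconj, smul_eq_mul]
        have e4 : star (c • w) ⬝ᵥ R *ᵥ (c • w) = star c * c * q := by
          rw [star_smul, smul_dotProduct, Matrix.mulVec_smul, dotProduct_smul, hq]
          simp [smul_eq_mul]
          ring
        rw [e1, e2, e3, e4, zero_add] at this
        have hqre : q = (q.re : ℂ) :=
          Complex.ext (by simp) (by simp [← (Complex.nonneg_iff.mp hq0).2])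
        have hsc : star c = ((-t : ℝ) : ℂ) * s := by
          rw [hc, star_mul', star_star, Complex.star_def, Complex.conj_ofReal]
        have hns : star s * s = ((Complex.normSq s : ℝ) : ℂ) := by
          rw [Complex.normSq_eq_conj_mul_self]; rfl
        have hns2 : s * star s = ((Complex.normSq s : ℝ) : ℂ) := by
          rw [mul_comm]; exact hns
        have hex : c * s + star c * star s + star c * c * q =
            ((Complex.normSq s * (-2 * t + t^2 * q.re) : ℝ) : ℂ) := by
          rw [hsc, hc, hqre]
          push_cast
          simp only [Complex.ofReal_re]
          linear_combination (-(t:ℂ)) * hns + (-(t:ℂ) + (t:ℂ)^2 * ((q.re:ℝ):ℂ)) * hns2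
        rw [hex] at this
        exact_mod_cast this
      have hb : 0 ≤ q.re := (Complex.nonneg_iff.mp hq0).1
      have hmain := main (1 / (q.re + 1)) (by positivity)
      have hne : q.re + 1 > 0 := by linarith
      have hkey : (-2 * (1 / (q.re + 1)) + (1 / (q.re + 1))^2 * q.re)
          = -((q.re + 2) / (q.re + 1)^2) := by
        field_simp
        ring
      rw [hkey] at hmain
      have hpos : 0 < (q.re + 2) / (q.re + 1)^2 := by positivity
      have hns : Complex.normSq s = 0 := by
        nlinarith [Complex.normSq_nonneg s]
      exact Complex.normSq_eq_zero.mp hns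
    -- conclude Q *ᵥ v = 0
    have hvm : star v ᵥ* Q = 0 := by
      have h0 : (star v ᵥ* Q) ⬝ᵥ star (star v ᵥ* Q) = 0 := by
        rw [← Matrix.dotProduct_mulVec]
        exact step1 _
      ext i
      have expand : (star v ᵥ* Q) ⬝ᵥ star (star v ᵥ* Q) =
          ((∑ j, Complex.normSq ((star v ᵥ* Q) j) : ℝ) : ℂ) := by
        rw [dotProduct]
        push_cast
        refine Finset.sum_congr rfl fun j _ => ?_
        rw [← Complex.mul_conj]
        rfl
      rw [expand] at h0
      have : ∑ j, Complex.normSq ((star v ᵥ* Q) j) = 0 := by exact_mod_cast h0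
      have hzero := (Finset.sum_eq_zero_iff_of_nonneg
        (fun j _ => Complex.normSq_nonneg _)).mp this i (Finset.mem_univ i)
      simpa using Complex.normSq_eq_zero.mp hzero
    have : star (Q *ᵥ v) = 0 := by rw [Matrix.star_mulVec, hQ]; exact hvm
    have := congrArg star this
    simpa using this
  -- Q is supported on range of P
  have hQPi : Q * Pi = Q := by
    have hPB : P * (Pi - 1) = 0 := by rw [Matrix.mul_sub, hPPi, Matrix.mul_one, sub_self]
    have := mulColZero hker hPB
    rw [Matrix.mul_sub, Matrix.mul_one, sub_eq_zero] at this
    exact this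
  have hPiQ : Pi * Q = Q := by
    have := congrArg Matrix.conjTranspose hQPi
    rwa [Matrix.conjTranspose_mul, hPiH, hQ] at this
  -- T and its spectral decomposition
  set T := Sp * Q * Sp with hT
  have hTH : T.IsHermitian := by
    unfold Matrix.IsHermitian
    rw [hT, Matrix.conjTranspose_mul, Matrix.conjTranspose_mul, hSpH, hQ, Matrix.mul_assoc]
  set W : Matrix (Fin m) (Fin m) ℂ := (hTH.eigenvectorUnitary : Matrix (Fin m) (Fin m) ℂ)
    with hW
  set μ := hTH.eigenvalues with hμ
  have hWW : W * star W = 1 := by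
    exact_mod_cast Unitary.coe_mul_star_self hTH.eigenvectorUnitary
  have hWW' : star W * W = 1 := by
    exact_mod_cast Unitary.coe_star_mul_self hTH.eigenvectorUnitary
  have hspecT : T = W * diagonal (fun i => (μ i : ℂ)) * star W := by
    have := hTH.spectral_theorem
    rw [Unitary.conjStarAlgAut_apply] at this
    exact this
  refine ⟨S * W, μ, R - Q * Pinv * Q, ?_, ?_, ?_, ?_⟩
  · rw [Matrix.posSemidef_iff_dotProduct_mulVec]
    constructor
    · unfold Matrix.IsHermitian
      rw [Matrix.conjTranspose_sub, hR, Matrix.conjTranspose_mul, Matrix.conjTranspose_mul,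
        hQ, hPinvH, Matrix.mul_assoc]
    · intro ξ
      have := hform (-((Pinv * Q) *ᵥ ξ)) ξ
      have e1 : star (-((Pinv * Q) *ᵥ ξ)) ⬝ᵥ P *ᵥ (-((Pinv * Q) *ᵥ ξ)) =
          star ξ ⬝ᵥ ((Q * Pinv * Q) *ᵥ ξ) := by
        have hmat : (Pinv * Q)ᴴ * (P * (Pinv * Q)) = Q * Pinv * Q := by
          rw [Matrix.conjTranspose_mul, hQ, hPinvH]
          calc Q * Pinv * (P * (Pinv * Q)) = Q * (Pinv * P * Pinv) * Q := by
                simp only [Matrix.mul_assoc]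
            _ = Q * Pinv * Q := by rw [hPinvPPinv]
        rw [star_neg, neg_dotProduct, Matrix.mulVec_neg, dotProduct_neg, neg_neg,
          Matrix.mulVec_mulVec, sandwich, hmat]
      have e2 : star (-((Pinv * Q) *ᵥ ξ)) ⬝ᵥ Q *ᵥ ξ =
          -(star ξ ⬝ᵥ ((Q * Pinv * Q) *ᵥ ξ)) := by
        have hmat : (Pinv * Q)ᴴ * Q = Q * Pinv * Q := by
          rw [Matrix.conjTranspose_mul, hQ, hPinvH, Matrix.mul_assoc]
        rw [star_neg, neg_dotProduct, sandwich, hmat]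
      have e3 : star ξ ⬝ᵥ Q *ᵥ (-((Pinv * Q) *ᵥ ξ)) =
          -(star ξ ⬝ᵥ ((Q * Pinv * Q) *ᵥ ξ)) := by
        rw [Matrix.mulVec_neg, dotProduct_neg, Matrix.mulVec_mulVec, Matrix.mul_assoc]
      rw [e1, e2, e3] at this
      have e4 : star ξ ⬝ᵥ ((Q * Pinv * Q) *ᵥ ξ) + -(star ξ ⬝ᵥ ((Q * Pinv * Q) *ᵥ ξ)) +
          -(star ξ ⬝ᵥ ((Q * Pinv * Q) *ᵥ ξ)) + star ξ ⬝ᵥ R *ᵥ ξ =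
          star ξ ⬝ᵥ ((R - Q * Pinv * Q) *ᵥ ξ) := by
        rw [Matrix.sub_mulVec, dotProduct_sub]
        ring
      rwa [e4] at this
  · rw [Matrix.conjTranspose_mul, hSH, ← Matrix.star_eq_conjTranspose,
      Matrix.mul_assoc, ← Matrix.mul_assoc W, hWW, Matrix.one_mul, hSS]
  · rw [Matrix.conjTranspose_mul, hSH, ← Matrix.star_eq_conjTranspose]
    symm
    calc S * W * diagonal (fun k => (μ k : ℂ)) * (star W * S)
        = S * (W * diagonal (fun k => (μ k : ℂ)) * star W) * S := by
          simp only [Matrix.mul_assoc]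
      _ = S * T * S := by rw [← hspecT]
      _ = Q := by
          rw [hT]
          simp only [Matrix.mul_assoc]
          rw [hSpS, hQPi, hfront, hPiQ]
  · rw [Matrix.conjTranspose_mul, hSH, ← Matrix.star_eq_conjTranspose]
    have habs : ∀ X : Matrix (Fin m) (Fin m) ℂ, star W * (W * X) = X := fun X => by
      rw [← Matrix.mul_assoc, hWW', Matrix.one_mul]
    have hdiag2 : diagonal (fun k => ((μ k : ℂ))^2) =
        diagonal (fun k => (μ k : ℂ)) * diagonal (fun k => (μ k : ℂ)) := by
      rw [diagonal_mul_diagonal]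
      refine congrArg Matrix.diagonal (funext fun k => ?_)
      ring
    have hNd2 : S * W * diagonal (fun k => ((μ k : ℂ))^2) * (star W * S) = Q * Pinv * Q := by
      calc S * W * diagonal (fun k => ((μ k : ℂ))^2) * (star W * S)
          = S * (W * diagonal (fun k => (μ k : ℂ)) * star W) *
              ((W * diagonal (fun k => (μ k : ℂ)) * star W) * S) := by
            rw [hdiag2]
            simp only [Matrix.mul_assoc]
            rw [habs]
        _ = S * T * (T * S) := by rw [← hspecT]
        _ = Q * Pinv * Q := by
            rw [hT]
            simp only [Matrix.mul_assoc]
            rw [hSpS, hQPi, show ∀ X : Matrix (Fin m) (Fin m) ℂ, Sp * (Sp * X) = Pinv * X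
                from fun X => by rw [← Matrix.mul_assoc, hSpSp],
              hfront, ← Matrix.mul_assoc, hPiQ]
            try simp only [Matrix.mul_assoc]
    rw [hNd2]
    abel
end Decomp

section Main
variable {m : ℕ}

lemma kronSmul (c d : ℂ) (A : Matrix (Fin m) (Fin m) ℂ) (B : Matrix (Fin 3) (Fin 3) ℂ) :
    Matrix.kroneckerMap (· * ·) (c • A) (d • B) =
      (c * d) • Matrix.kroneckerMap (· * ·) A B := by
  ext ⟨i, x⟩ ⟨j, y⟩
  simp [Matrix.kroneckerMap_apply]
  ring

lemma kronZeroL (B : Matrix (Fin 3) (Fin 3) ℂ) :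
    Matrix.kroneckerMap (· * ·) (0 : Matrix (Fin m) (Fin m) ℂ) B = 0 := by
  ext ⟨i, x⟩ ⟨j, y⟩
  simp [Matrix.kroneckerMap_apply]

lemma kronTrace (A : Matrix (Fin m) (Fin m) ℂ) (B : Matrix (Fin 3) (Fin 3) ℂ) :
    (Matrix.kroneckerMap (· * ·) A B).trace = A.trace * B.trace :=
  Matrix.trace_kronecker A B

end Main

/-- Any density matrix on ℂᵐ ⊗ ℂ³ all of whose 3×3 blocks lie in the subspace
S₁ = { [[a,a,b],[a,a,b],[b,b,c]] : a,b,c ∈ ℂ } is separable. -/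
theorem stmt_12 {m : ℕ} (ρ : Matrix (Fin m × Fin 3) (Fin m × Fin 3) ℂ)
    (hpsd : ρ.PosSemidef) (htr : ρ.trace = 1)
    (hblocks : ∀ i j : Fin m, ∃ a b c : ℂ,
      ∀ x y : Fin 3, ρ (i, x) (j, y) = !![a, a, b; a, a, b; b, b, c] x y) :
    ∃ (r : ℕ) (p : Fin r → ℝ) (ρA : Fin r → Matrix (Fin m) (Fin m) ℂ)
      (ρB : Fin r → Matrix (Fin 3) (Fin 3) ℂ),
      (∀ i, 0 ≤ p i) ∧ (∑ i, p i = 1) ∧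
      (∀ i, (ρA i).PosSemidef ∧ (ρA i).trace = 1) ∧
      (∀ i, (ρB i).PosSemidef ∧ (ρB i).trace = 1) ∧
      ρ = ∑ i, (p i : ℂ) • Matrix.kroneckerMap (· * ·) (ρA i) (ρB i) := by
  classical
  -- m is nonzero
  have hm0 : 0 < m := by
    by_contra h
    push_neg at h
    interval_cases m
    rw [Matrix.trace] at htr
    rw [show (Finset.univ : Finset (Fin 0 × Fin 3)) = ∅ from rfl] at htr
    simp at htr
  -- named block entries
  choose a b c hab using hblocks
  have hent : ∀ i j : Fin m,
      ρ (i, 0) (j, 0) = a i j ∧ ρ (i, 0) (j, 1) = a i j ∧ ρ (i, 1) (j, 0) = a i j ∧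
      ρ (i, 1) (j, 1) = a i j ∧ ρ (i, 0) (j, 2) = b i j ∧ ρ (i, 1) (j, 2) = b i j ∧
      ρ (i, 2) (j, 0) = b i j ∧ ρ (i, 2) (j, 1) = b i j ∧ ρ (i, 2) (j, 2) = c i j := by
    intro i j
    refine ⟨?_, ?_, ?_, ?_, ?_, ?_, ?_, ?_, ?_⟩ <;>
      · rw [hab i j]
        rfl
  -- the three blocks
  set P : Matrix (Fin m) (Fin m) ℂ := Matrix.of fun i j => ρ (i, 0) (j, 0) with hPdef
  set Q : Matrix (Fin m) (Fin m) ℂ := Matrix.of fun i j => ρ (i, 0) (j, 2) with hQdef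
  set R : Matrix (Fin m) (Fin m) ℂ := Matrix.of fun i j => ρ (i, 2) (j, 2) with hRdef
  have hPa : ∀ i j, P i j = a i j := fun i j => (hent i j).1
  have hQb : ∀ i j, Q i j = b i j := fun i j => (hent i j).2.2.2.2.1
  have hRc : ∀ i j, R i j = c i j := fun i j => (hent i j).2.2.2.2.2.2.2.2
  have hρH : ∀ p q, star (ρ p q) = ρ q p := fun p q => congrFun (congrFun hpsd.1 q) p
  have hP : P.PosSemidef := by
    have := hpsd.submatrix (fun i : Fin m => (i, (0 : Fin 3)))
    exact this
  have hQ : Qᴴ = Q := by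
    ext i j
    rw [Matrix.conjTranspose_apply]
    show star (ρ (j, 0) (i, 2)) = ρ (i, 0) (j, 2)
    rw [hρH, (hent i j).2.2.2.2.2.2.1, ← (hent i j).2.2.2.2.1]
  have hR : Rᴴ = R := by
    ext i j
    rw [Matrix.conjTranspose_apply]
    show star (ρ (j, 2) (i, 2)) = ρ (i, 2) (j, 2)
    rw [hρH]
  -- the quadratic form hypothesis
  have hform : ∀ v w : Fin m → ℂ,
      0 ≤ star v ⬝ᵥ P *ᵥ v + star v ⬝ᵥ Q *ᵥ w + star w ⬝ᵥ Q *ᵥ v + star w ⬝ᵥ R *ᵥ w := by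
    intro v w
    set z : Fin m × Fin 3 → ℂ :=
      fun p => if p.2 = 0 then v p.1 else if p.2 = 2 then w p.1 else 0 with hz
    have h0 := hpsd.dotProduct_mulVec_nonneg z
    have key : star z ⬝ᵥ ρ *ᵥ z =
        star v ⬝ᵥ P *ᵥ v + star v ⬝ᵥ Q *ᵥ w + star w ⬝ᵥ Q *ᵥ v + star w ⬝ᵥ R *ᵥ w := by
      rw [dotProduct, Fintype.sum_prod_type]
      have inner : ∀ (i : Fin m) (x : Fin 3), (ρ *ᵥ z) (i, x)
          = ∑ j, (ρ (i, x) (j, 0) * v j + ρ (i, x) (j, 2) * w j) := by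
        intro i x
        rw [Matrix.mulVec, dotProduct, Fintype.sum_prod_type]
        refine Finset.sum_congr rfl fun j _ => ?_
        rw [Fin.sum_univ_three]
        simp [hz]
      calc ∑ i, ∑ x, star (z (i, x)) * (ρ *ᵥ z) (i, x)
          = ∑ i, (star (v i) * ∑ j, (P i j * v j + Q i j * w j)
              + star (w i) * ∑ j, (Q i j * v j + R i j * w j)) := by
            refine Finset.sum_congr rfl fun i _ => ?_
            rw [Fin.sum_univ_three, inner, inner, inner]
            have hz0 : z (i, (0 : Fin 3)) = v i := by simp [hz]
            have hz1 : z (i, (1 : Fin 3)) = 0 := by simp [hz]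
            have hz2 : z (i, (2 : Fin 3)) = w i := by simp [hz]
            rw [hz0, hz1, hz2]
            simp only [star_zero, zero_mul, add_zero, zero_add]
            have e2 : ∀ j : Fin m, ρ (i, 2) (j, 0) = Q i j := fun j => by
              rw [(hent i j).2.2.2.2.2.2.1, ← hQb i j]
            simp only [e2]
            rfl
        _ = star v ⬝ᵥ P *ᵥ v + star v ⬝ᵥ Q *ᵥ w + star w ⬝ᵥ Q *ᵥ v + star w ⬝ᵥ R *ᵥ w := by
            simp only [dotProduct, Matrix.mulVec, Pi.star_apply, Finset.mul_sum, mul_add,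
              Finset.sum_add_distrib]
            ring
    rwa [key] at h0
  obtain ⟨N, μ, Δ, hΔ, hPN, hQN, hRN⟩ := decomp P Q R hP hQ hR hform
  -- rank one pieces
  set A : Fin m → Matrix (Fin m) (Fin m) ℂ :=
    fun k => Matrix.vecMulVec (fun i => N i k) (star fun j => N j k) with hA
  have hAPSD : ∀ k, (A k).PosSemidef := fun k => rankOnePSD _
  set α : Fin m → ℝ := fun k => ∑ i, Complex.normSq (N i k) with hα
  have hαnn : ∀ k, 0 ≤ α k := fun k => Finset.sum_nonneg fun i _ => Complex.normSq_nonneg _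
  have htrA : ∀ k, (A k).trace = ((α k : ℝ) : ℂ) := by
    intro k
    rw [Matrix.trace, hα]
    push_cast
    refine Finset.sum_congr rfl fun i _ => ?_
    rw [Matrix.diag_apply, hA]
    show N i k * star (N i k) = _
    rw [← Complex.mul_conj]
    rfl
  have hA0 : ∀ k, α k = 0 → A k = 0 := by
    intro k hk
    have hz : ∀ i, N i k = 0 := by
      intro i
      have := (Finset.sum_eq_zero_iff_of_nonneg
        (fun i _ => Complex.normSq_nonneg (N i k))).mp hk i (Finset.mem_univ i)
      exact Complex.normSq_eq_zero.mp this
    ext i j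
    show N i k * star (N j k) = 0
    rw [hz i, zero_mul]
  -- qutrit side vectors
  set vb : Fin m → Fin 3 → ℂ := fun k => ![(1 : ℂ), 1, ((μ k : ℝ) : ℂ)] with hvb
  set B : Fin m → Matrix (Fin 3) (Fin 3) ℂ :=
    fun k => Matrix.vecMulVec (vb k) (star (vb k)) with hB
  have hBPSD : ∀ k, (B k).PosSemidef := fun k => rankOnePSD _
  have htrB : ∀ k, (B k).trace = ((2 + μ k ^ 2 : ℝ) : ℂ) := by
    intro k
    rw [Matrix.trace, Fin.sum_univ_three]
    show vb k 0 * star (vb k 0) + vb k 1 * star (vb k 1) + vb k 2 * star (vb k 2) = _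
    rw [hvb]
    simp [Complex.star_def, Complex.conj_ofReal]
    push_cast
    ring
  have hμpos : ∀ k, (0 : ℝ) < 2 + μ k ^ 2 := fun k => by positivity
  set e3 : Fin 3 → ℂ := ![0, 0, 1] with he3
  set E : Matrix (Fin 3) (Fin 3) ℂ := Matrix.vecMulVec e3 (star e3) with hE
  have hEPSD : E.PosSemidef := rankOnePSD _
  have htrE : E.trace = 1 := by
    rw [Matrix.trace, Fin.sum_univ_three]
    show e3 0 * star (e3 0) + e3 1 * star (e3 1) + e3 2 * star (e3 2) = 1
    rw [he3]
    simp
  obtain ⟨δ, hδnn, hδtr, hδ0⟩ := tracePSD hΔ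
  -- fallback density matrix
  set f0 : Fin m → ℂ := fun i => if i = ⟨0, hm0⟩ then 1 else 0 with hf0
  set F : Matrix (Fin m) (Fin m) ℂ := Matrix.vecMulVec f0 (star f0) with hF
  have hFPSD : F.PosSemidef := rankOnePSD _
  have htrF : F.trace = 1 := by
    rw [Matrix.trace]
    rw [show (Matrix.diag F) = fun i => f0 i * star (f0 i) from rfl]
    rw [hf0]
    rw [Finset.sum_eq_single (⟨0, hm0⟩ : Fin m)] <;> simp +contextual
  -- sum identities
  have hPsum : P = ∑ k, A k := by
    have := sumOuter N (fun _ => (1 : ℂ))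
    rw [Matrix.diagonal_one, Matrix.mul_one] at this
    rw [hPN, this]
    exact Finset.sum_congr rfl fun k _ => (one_smul ℂ _)
  have hQsum : Q = ∑ k, ((μ k : ℝ) : ℂ) • A k := by
    rw [hQN, sumOuter N (fun k => ((μ k : ℝ) : ℂ))]
  have hRsum : R = (∑ k, (((μ k : ℝ) : ℂ)) ^ 2 • A k) + Δ := by
    rw [hRN, sumOuter N (fun k => (((μ k : ℝ) : ℂ)) ^ 2)]
  have hPent : ∀ i j, (∑ k, (A k) i j) = P i j := by
    intro i j
    rw [hPsum, Matrix.sum_apply]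
  have hQent : ∀ i j, (∑ k, ((μ k : ℝ) : ℂ) * (A k) i j) = Q i j := by
    intro i j
    rw [hQsum, Matrix.sum_apply]
    simp [Matrix.smul_apply]
  have hRent : ∀ i j, (∑ k, (((μ k : ℝ) : ℂ)) ^ 2 * (A k) i j) + Δ i j = R i j := by
    intro i j
    rw [hRsum, Matrix.add_apply, Matrix.sum_apply]
    simp [Matrix.smul_apply]
  -- the decomposition data
  set pf : Fin (m + 1) → ℝ := Fin.snoc (fun k => α k * (2 + μ k ^ 2)) δ with hpf
  set Af : Fin (m + 1) → Matrix (Fin m) (Fin m) ℂ :=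
    Fin.snoc (fun k => if α k = 0 then F else (((α k)⁻¹ : ℝ) : ℂ) • A k)
      (if δ = 0 then F else ((δ⁻¹ : ℝ) : ℂ) • Δ) with hAf
  set Bf : Fin (m + 1) → Matrix (Fin 3) (Fin 3) ℂ :=
    Fin.snoc (fun k => (((2 + μ k ^ 2)⁻¹ : ℝ) : ℂ) • B k) E with hBf
  have hpnn : ∀ i, 0 ≤ pf i := by
    intro i
    refine Fin.lastCases ?_ ?_ i
    · rw [hpf, Fin.snoc_last]
      exact hδnn
    · intro k
      rw [hpf, Fin.snoc_castSucc]
      exact mul_nonneg (hαnn k) (le_of_lt (hμpos k))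
  have hAfprop : ∀ i, (Af i).PosSemidef ∧ (Af i).trace = 1 := by
    intro i
    refine Fin.lastCases ?_ ?_ i
    · rw [hAf, Fin.snoc_last]
      by_cases hδz : δ = 0
      · rw [if_pos hδz]
        exact ⟨hFPSD, htrF⟩
      · rw [if_neg hδz]
        refine ⟨smulPSD _ (inv_nonneg.mpr hδnn) hΔ, ?_⟩
        rw [Matrix.trace_smul, hδtr, smul_eq_mul]
        rw [show ((δ⁻¹ : ℝ) : ℂ) * ((δ : ℝ) : ℂ) = (((δ⁻¹ * δ : ℝ)) : ℂ) by push_cast; ring]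
        rw [inv_mul_cancel₀ hδz]
        norm_num
    · intro k
      rw [hAf, Fin.snoc_castSucc]
      by_cases hk : α k = 0
      · rw [if_pos hk]
        exact ⟨hFPSD, htrF⟩
      · rw [if_neg hk]
        refine ⟨smulPSD _ (inv_nonneg.mpr (hαnn k)) (hAPSD k), ?_⟩
        rw [Matrix.trace_smul, htrA, smul_eq_mul]
        rw [show (((α k)⁻¹ : ℝ) : ℂ) * ((α k : ℝ) : ℂ) = ((((α k)⁻¹ * α k : ℝ)) : ℂ) by
          push_cast; ring]
        rw [inv_mul_cancel₀ hk]
        norm_num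
  have hBfprop : ∀ i, (Bf i).PosSemidef ∧ (Bf i).trace = 1 := by
    intro i
    refine Fin.lastCases ?_ ?_ i
    · rw [hBf, Fin.snoc_last]
      exact ⟨hEPSD, htrE⟩
    · intro k
      rw [hBf, Fin.snoc_castSucc]
      have hne : (2 + μ k ^ 2 : ℝ) ≠ 0 := ne_of_gt (hμpos k)
      refine ⟨smulPSD _ (inv_nonneg.mpr (le_of_lt (hμpos k))) (hBPSD k), ?_⟩
      rw [Matrix.trace_smul, htrB, smul_eq_mul]
      rw [show (((2 + μ k ^ 2)⁻¹ : ℝ) : ℂ) * ((2 + μ k ^ 2 : ℝ) : ℂ)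
          = ((((2 + μ k ^ 2)⁻¹ * (2 + μ k ^ 2) : ℝ)) : ℂ) by push_cast; ring]
      rw [inv_mul_cancel₀ hne]
      norm_num
  -- core matrix identity
  have hBv : ∀ (k : Fin m) (x y : Fin 3), B k x y = vb k x * star (vb k y) := fun _ _ _ => rfl
  have hEv : ∀ (x y : Fin 3), E x y = e3 x * star (e3 y) := fun _ _ => rfl
  have hvb0 : ∀ k, vb k 0 = 1 := fun k => rfl
  have hvb1 : ∀ k, vb k 1 = 1 := fun k => rfl
  have hvb2 : ∀ k, vb k 2 = ((μ k : ℝ) : ℂ) := fun k => rfl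
  have he30 : e3 0 = 0 := rfl
  have he31 : e3 1 = 0 := rfl
  have he32 : e3 2 = 1 := rfl
  have hcore : ρ = (∑ k, Matrix.kroneckerMap (· * ·) (A k) (B k))
      + Matrix.kroneckerMap (· * ·) Δ E := by
    ext ⟨i, x⟩ ⟨j, y⟩
    rw [Matrix.add_apply, Matrix.sum_apply]
    simp only [Matrix.kroneckerMap_apply, hBv, hEv]
    have hμsum : ∀ w : Fin m → ℂ, (∑ k, w k * ((μ k : ℝ) : ℂ)) = ∑ k, ((μ k : ℝ) : ℂ) * w k :=
      fun w => Finset.sum_congr rfl fun k _ => mul_comm _ _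
    have hfin0 : ∀ h : (0 : ℕ) < 3, (⟨0, h⟩ : Fin 3) = 0 := fun _ => rfl
    have hfin1 : ∀ h : (1 : ℕ) < 3, (⟨1, h⟩ : Fin 3) = 1 := fun _ => rfl
    have hfin2 : ∀ h : (2 : ℕ) < 3, (⟨2, h⟩ : Fin 3) = 2 := fun _ => rfl
    fin_cases x <;> fin_cases y <;>
      simp only [hfin0, hfin1, hfin2, hvb0, hvb1, hvb2, he30, he31, he32, star_one, star_zero,
        one_mul, mul_one, mul_zero, zero_mul, add_zero, Complex.star_def, Complex.conj_ofReal]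
    · exact (hPent i j).symm
    · rw [(hent i j).2.1, ← hPa i j]
      exact (hPent i j).symm
    · rw [(hent i j).2.2.2.2.1, ← hQb i j, ← hQent i j, hμsum]
    · rw [(hent i j).2.2.1, ← hPa i j]
      exact (hPent i j).symm
    · rw [(hent i j).2.2.2.1, ← hPa i j]
      exact (hPent i j).symm
    · rw [(hent i j).2.2.2.2.2.1, ← hQb i j, ← hQent i j, hμsum]
    · rw [(hent i j).2.2.2.2.2.2.1, ← hQb i j, ← hQent i j, hμsum]
    · rw [(hent i j).2.2.2.2.2.2.2.1, ← hQb i j, ← hQent i j, hμsum]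
    · rw [(hent i j).2.2.2.2.2.2.2.2, ← hRc i j, ← hRent i j]
      congr 1
      refine Finset.sum_congr rfl fun k _ => ?_
      ring
  -- term conversions
  have hterm : ∀ k : Fin m, ((pf k.castSucc : ℝ) : ℂ) •
      Matrix.kroneckerMap (· * ·) (Af k.castSucc) (Bf k.castSucc)
      = Matrix.kroneckerMap (· * ·) (A k) (B k) := by
    intro k
    rw [hpf, hAf, hBf]
    simp only [Fin.snoc_castSucc]
    by_cases hk : α k = 0
    · rw [if_pos hk, hk, hA0 k hk, kronZeroL]
      simp
    · rw [if_neg hk, kronSmul, smul_smul]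
      have hne : (2 + μ k ^ 2 : ℝ) ≠ 0 := ne_of_gt (hμpos k)
      rw [show ((α k * (2 + μ k ^ 2) : ℝ) : ℂ) * ((((α k)⁻¹ : ℝ) : ℂ) *
          (((2 + μ k ^ 2)⁻¹ : ℝ) : ℂ)) = (((α k * (2 + μ k ^ 2)) * ((α k)⁻¹ *
          (2 + μ k ^ 2)⁻¹) : ℝ) : ℂ) by push_cast; ring]
      rw [show (α k * (2 + μ k ^ 2)) * ((α k)⁻¹ * (2 + μ k ^ 2)⁻¹) = (1 : ℝ) by
        field_simp]
      norm_num
  have htermL : ((pf (Fin.last m) : ℝ) : ℂ) •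
      Matrix.kroneckerMap (· * ·) (Af (Fin.last m)) (Bf (Fin.last m))
      = Matrix.kroneckerMap (· * ·) Δ E := by
    rw [hpf, hAf, hBf]
    simp only [Fin.snoc_last]
    by_cases hδz : δ = 0
    · rw [if_pos hδz, hδz, hδ0 hδz, kronZeroL]
      simp
    · rw [if_neg hδz, show ((δ⁻¹ : ℝ) : ℂ) • Δ = ((δ⁻¹ : ℝ) : ℂ) • Δ from rfl]
      rw [show Matrix.kroneckerMap (· * ·) (((δ⁻¹ : ℝ) : ℂ) • Δ) E
          = Matrix.kroneckerMap (· * ·) (((δ⁻¹ : ℝ) : ℂ) • Δ) (((1 : ℝ) : ℂ) • E) by norm_num]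
      rw [kronSmul, smul_smul]
      rw [show ((δ : ℝ) : ℂ) * (((δ⁻¹ : ℝ) : ℂ) * ((1 : ℝ) : ℂ)) = ((δ * δ⁻¹ : ℝ) : ℂ) by
        push_cast; ring]
      rw [mul_inv_cancel₀ hδz]
      norm_num
  have hmain : ρ = ∑ i, ((pf i : ℝ) : ℂ) • Matrix.kroneckerMap (· * ·) (Af i) (Bf i) := by
    rw [Fin.sum_univ_castSucc]
    rw [htermL]
    rw [show (∑ k : Fin m, ((pf k.castSucc : ℝ) : ℂ) •
        Matrix.kroneckerMap (· * ·) (Af k.castSucc) (Bf k.castSucc))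
        = ∑ k : Fin m, Matrix.kroneckerMap (· * ·) (A k) (B k) from
      Finset.sum_congr rfl fun k _ => hterm k]
    exact hcore
  have hsump : ∑ i, pf i = 1 := by
    have h1 := congrArg Matrix.trace hmain
    rw [htr, Matrix.trace_sum] at h1
    have h2 : ∀ i, (((pf i : ℝ) : ℂ) • Matrix.kroneckerMap (· * ·) (Af i) (Bf i)).trace
        = ((pf i : ℝ) : ℂ) := by
      intro i
      rw [Matrix.trace_smul, kronTrace, (hAfprop i).2, (hBfprop i).2, smul_eq_mul]
      ring
    rw [Finset.sum_congr rfl (fun i _ => h2 i)] at h1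
    have : ((∑ i, pf i : ℝ) : ℂ) = 1 := by
      push_cast
      exact h1.symm
    exact_mod_cast this
  exact ⟨m + 1, pf, Af, Bf, hpnn, hsump, hAfprop, hBfprop, hmain⟩
end
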